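/- arXiv:2403.19033 — 13 statements merged into one kernel-verified Lean document; each statement's English description precedes it below -/
import Mathlib

section
/- Let H be a complex Hilbert space, S a positive bounded operator on H (self-adjoint with ⟨S x, x⟩ > 0 for every x ≠ 0), and K a bounded operator on H satisfying S K* = K S. Then there exists a bounded self-adjoint operator C on H such that √S ∘ K* = C ∘ √S; in particular there is a constant M > 0 such that ‖√S (K* x)‖ ≤ M ‖√S x‖ for all x ∈ H. -/
open ContinuousLinearMap Filter Topology Finset

/-- **Carleman–Krein factorization through the square root.**
If `S > 0` (self-adjoint, strictly positive definite) with positive square root `R = √S`,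
and `K` is symmetrizable by `S` (i.e. `S K* = K S`), then there exists a bounded
self-adjoint operator `C` with `√S ∘ K* = C ∘ √S`; in particular
`‖√S (K* x)‖ ≤ M ‖√S x‖` for some `M > 0` and all `x`. -/
theorem stmt0
    {H : Type*} [NormedAddCommGroup H] [InnerProductSpace ℂ H] [CompleteSpace H]
    (S K : H →L[ℂ] H)
    (hS_sa : IsSelfAdjoint S)
    (hS_pos : ∀ x : H, x ≠ 0 → 0 < (inner ℂ (S x) x : ℂ).re)
    (hK : S ∘L adjoint K = K ∘L S)
    -- `R` is the positive square root of `S`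
    (R : H →L[ℂ] H)
    (hR_sa : IsSelfAdjoint R)
    (hR_pos : ∀ x : H, 0 ≤ (inner ℂ (R x) x : ℂ).re)
    (hR_sq : R ∘L R = S) :
    ∃ C : H →L[ℂ] H, IsSelfAdjoint C ∧ R ∘L adjoint K = C ∘L R ∧
      ∃ M : ℝ, 0 < M ∧ ∀ x : H, ‖R (adjoint K x)‖ ≤ M * ‖R x‖ := by
  set A : H →L[ℂ] H := adjoint K with hA
  -- basic facts
  have hRinner : ∀ x y : H, (inner ℂ (R x) y : ℂ) = inner ℂ x (R y) := fun x y => by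
    nth_rewrite 1 [← hR_sa.adjoint_eq]
    exact adjoint_inner_left R y x
  have hKinner : ∀ (m : ℕ) (x y : H), (inner ℂ x ((K ^ m) y) : ℂ) = inner ℂ ((A ^ m) x) y := by
    intro m x y
    have : adjoint (K ^ m) = A ^ m := by
      rw [hA, ← star_eq_adjoint, ← star_eq_adjoint, star_pow]
    rw [← this]
    exact (adjoint_inner_left (K ^ m) y x).symm
  have hRinj : ∀ x : H, R x = 0 → x = 0 := by
    intro x hx
    by_contra hx0
    have hSx : S x = 0 := by
      rw [← hR_sq]; simp [ContinuousLinearMap.comp_apply, hx]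
    have := hS_pos x hx0
    rw [hSx] at this
    simp at this
  -- `S ∘ A^m = K^m ∘ S`
  have hSA : ∀ m : ℕ, S ∘L (A ^ m) = (K ^ m) ∘L S := by
    intro m
    induction m with
    | zero => simp [ContinuousLinearMap.one_def]
    | succ n ih =>
      have : (A : H →L[ℂ] H) ^ (n + 1) = (A ^ n) ∘L A := by
        rw [pow_succ]; rfl
      rw [this, ← ContinuousLinearMap.comp_assoc, ih, ContinuousLinearMap.comp_assoc, hK,
        ← ContinuousLinearMap.comp_assoc]
      congr 1
  -- ‖R (A^m x)‖² = re ⟪R (A^(2m) x), R x⟫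
  have hkey : ∀ (m : ℕ) (x : H), ‖R ((A ^ m) x)‖ ^ 2 ≤ ‖R ((A ^ (2 * m)) x)‖ * ‖R x‖ := by
    intro m x
    have h1 : (‖R ((A ^ m) x)‖ : ℝ) ^ 2 = (inner ℂ (R ((A ^ m) x)) (R ((A ^ m) x)) : ℂ).re := by
      rw [← inner_self_eq_norm_sq (𝕜 := ℂ)]; rfl
    have h2 : (inner ℂ (R ((A ^ m) x)) (R ((A ^ m) x)) : ℂ)
        = inner ℂ (R ((A ^ (2 * m)) x)) (R x) := by
      rw [hRinner]
      have hS1 : R (R ((A ^ m) x)) = S ((A ^ m) x) := by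
        rw [← hR_sq]; rfl
      rw [hS1]
      have hS2 : S ((A ^ m) x) = (K ^ m) (S x) := by
        have := congrArg (fun T : H →L[ℂ] H => T x) (hSA m)
        simpa using this
      rw [hS2, hKinner m ((A ^ m) x) (S x)]
      have hA2 : (A ^ m) ((A ^ m) x) = (A ^ (2 * m)) x := by
        rw [two_mul, pow_add]; rfl
      rw [hA2, ← hR_sq]
      rw [hRinner]
      rfl
    calc (‖R ((A ^ m) x)‖ : ℝ) ^ 2 = (inner ℂ (R ((A ^ (2 * m)) x)) (R x) : ℂ).re := by
          rw [h1, h2]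
      _ ≤ ‖(inner ℂ (R ((A ^ (2 * m)) x)) (R x) : ℂ)‖ := Complex.re_le_norm _
      _ ≤ ‖R ((A ^ (2 * m)) x)‖ * ‖R x‖ := norm_inner_le_norm _ _
  -- iterated inequality
  have hiter : ∀ (n : ℕ) (x : H),
      ‖R (A x)‖ ^ (2 ^ n) ≤ ‖R x‖ ^ (2 ^ n - 1) * ‖R ((A ^ (2 ^ n)) x)‖ := by
    intro n
    induction n with
    | zero => intro x; simp
    | succ n ih =>
      intro x
      have h2n : 1 ≤ 2 ^ n := Nat.one_le_two_pow
      have e1 : ‖R (A x)‖ ^ (2 ^ (n+1)) = (‖R (A x)‖ ^ (2 ^ n)) ^ 2 := by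
        rw [← pow_mul, pow_succ]
      have h1 : (‖R (A x)‖ ^ (2 ^ n)) ^ 2 ≤ (‖R x‖ ^ (2 ^ n - 1) * ‖R ((A ^ (2 ^ n)) x)‖) ^ 2 :=
        pow_le_pow_left₀ (pow_nonneg (norm_nonneg _) _) (ih x) 2
      have h2 : ‖R ((A ^ (2 ^ n)) x)‖ ^ 2 ≤ ‖R ((A ^ (2 ^ (n+1))) x)‖ * ‖R x‖ := by
        have := hkey (2 ^ n) x
        rwa [show 2 * 2 ^ n = 2 ^ (n+1) by ring] at this
      calc ‖R (A x)‖ ^ (2 ^ (n+1))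
          = (‖R (A x)‖ ^ (2 ^ n)) ^ 2 := e1
        _ ≤ (‖R x‖ ^ (2 ^ n - 1)) ^ 2 * ‖R ((A ^ (2 ^ n)) x)‖ ^ 2 := by
            rw [mul_pow] at h1; exact h1
        _ ≤ (‖R x‖ ^ (2 ^ n - 1)) ^ 2 * (‖R ((A ^ (2 ^ (n+1))) x)‖ * ‖R x‖) := by
            apply mul_le_mul_of_nonneg_left h2 (by positivity)
        _ = ‖R x‖ ^ ((2 ^ n - 1) * 2 + 1) * ‖R ((A ^ (2 ^ (n+1))) x)‖ := by
            rw [← pow_mul, pow_succ]; ring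
        _ = ‖R x‖ ^ (2 ^ (n+1) - 1) * ‖R ((A ^ (2 ^ (n+1))) x)‖ := by
            have harith : ∀ N : ℕ, 1 ≤ N → (N - 1) * 2 + 1 = N * 2 - 1 := by
              intro N h; omega
            rw [harith _ h2n, ← pow_succ]
  -- the crucial bound
  set M : ℝ := ‖A‖ + 1 with hM
  have hM1 : (1 : ℝ) ≤ M := by
    have := norm_nonneg A; rw [hM]; linarith
  have hMpos : (0 : ℝ) < M := by linarith
  have hbound : ∀ x : H, ‖R (A x)‖ ≤ M * ‖R x‖ := by
    intro x
    rcases eq_or_ne x 0 with rfl | hx0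
    · simp
    have hRx : 0 < ‖R x‖ := by
      rcases (norm_pos_iff).2 (fun h => hx0 (hRinj x h)) with h
      exact h
    by_contra hcon
    push_neg at hcon
    set t : ℝ := ‖R (A x)‖ / (M * ‖R x‖) with ht
    have hMR : 0 < M * ‖R x‖ := by positivity
    have ht1 : 1 < t := (one_lt_div hMR).2 hcon
    set D : ℝ := ‖R‖ * ‖x‖ / ‖R x‖ with hD
    obtain ⟨n, hn⟩ := pow_unbounded_of_one_lt D ht1
    have hnN : t ^ n ≤ t ^ (2 ^ n) :=
      pow_le_pow_right₀ (le_of_lt ht1) (Nat.le_of_lt (Nat.lt_two_pow_self (n := n)))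
    have hDn : D < t ^ (2 ^ n) := lt_of_lt_of_le hn hnN
    -- but also t ^ (2^n) ≤ D
    have hub : ‖R ((A ^ (2 ^ n)) x)‖ ≤ ‖R‖ * (M ^ (2 ^ n) * ‖x‖) := by
      calc ‖R ((A ^ (2 ^ n)) x)‖ ≤ ‖R‖ * ‖(A ^ (2 ^ n)) x‖ := R.le_opNorm _
        _ ≤ ‖R‖ * (‖A ^ (2 ^ n)‖ * ‖x‖) := by
            apply mul_le_mul_of_nonneg_left ((A ^ (2 ^ n)).le_opNorm x) (norm_nonneg _)
        _ ≤ ‖R‖ * (M ^ (2 ^ n) * ‖x‖) := by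
            apply mul_le_mul_of_nonneg_left _ (norm_nonneg _)
            apply mul_le_mul_of_nonneg_right _ (norm_nonneg _)
            calc ‖(A : H →L[ℂ] H) ^ (2 ^ n)‖ ≤ ‖A‖ ^ (2 ^ n) := norm_pow_le' A (Nat.pos_of_ne_zero (by positivity))
              _ ≤ M ^ (2 ^ n) := pow_le_pow_left₀ (norm_nonneg _) (by simp [hM]) _
    have hmain : ‖R (A x)‖ ^ (2 ^ n) ≤ ‖R x‖ ^ (2 ^ n - 1) * (‖R‖ * (M ^ (2 ^ n) * ‖x‖)) :=
      le_trans (hiter n x) (mul_le_mul_of_nonneg_left hub (by positivity))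
    have htD : t ^ (2 ^ n) ≤ D := by
      rw [ht, hD, div_pow, div_le_div_iff₀ (by positivity) hRx]
      have hpow : ‖R x‖ ^ (2 ^ n - 1) * ‖R x‖ = ‖R x‖ ^ (2 ^ n) := by
        rw [← pow_succ]
        congr 1
        have : 1 ≤ 2 ^ n := Nat.one_le_two_pow
        omega
      calc ‖R (A x)‖ ^ 2 ^ n * ‖R x‖
          ≤ ‖R x‖ ^ (2 ^ n - 1) * (‖R‖ * (M ^ (2 ^ n) * ‖x‖)) * ‖R x‖ := by
            apply mul_le_mul_of_nonneg_right hmain (norm_nonneg _)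
        _ = ‖R‖ * ‖x‖ * (M ^ (2 ^ n) * (‖R x‖ ^ (2 ^ n - 1) * ‖R x‖)) := by ring
        _ = ‖R‖ * ‖x‖ * (M * ‖R x‖) ^ 2 ^ n := by rw [hpow, mul_pow]
    exact absurd htD (not_le.2 hDn)
  -- the range of R is dense
  set V : Submodule ℂ H := LinearMap.range (R : H →ₗ[ℂ] H) with hV
  have hVmem : ∀ x : H, R x ∈ V := fun x => ⟨x, rfl⟩
  have hVorth : Vᗮ = ⊥ := by
    rw [Submodule.eq_bot_iff]
    intro y hy
    apply hRinj
    have h0 : ∀ x : H, (inner ℂ (R x) y : ℂ) = 0 := fun x =>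
      (Submodule.mem_orthogonal V y).1 hy (R x) (hVmem x)
    have h1 := h0 (R y)
    rw [hRinner] at h1
    exact inner_self_eq_zero.1 h1
  have hVdense : Dense (V : Set H) := by
    have h2 := Submodule.topologicalClosure_eq_top_iff.2 hVorth
    rw [dense_iff_closure_eq, ← Submodule.topologicalClosure_coe, h2, Submodule.top_coe]
  have hdr : DenseRange V.subtypeL := by
    simpa [DenseRange, Submodule.range_subtypeL] using hVdense
  have hui : IsUniformInducing V.subtypeL := isometry_subtype_coe.isUniformInducing
  -- the linear equivalence H ≃ range R
  have hRiinj : Function.Injective (R : H →ₗ[ℂ] H) := by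
    intro a b hab
    have : R (a - b) = 0 := by
      simp only [map_sub]
      simpa [sub_eq_zero] using hab
    have := hRinj _ this
    rwa [sub_eq_zero] at this
  set e : H ≃ₗ[ℂ] V := LinearEquiv.ofInjective (R : H →ₗ[ℂ] H) hRiinj with he
  have he_apply : ∀ x : H, ((e x : V) : H) = R x := fun x => rfl
  have he_symm : ∀ v : V, R (e.symm v) = (v : H) := by
    intro v
    have := he_apply (e.symm v)
    rw [e.apply_symm_apply] at this
    exact this.symm
  -- the densely defined operator
  set f0 : V →ₗ[ℂ] H := ((R ∘L A : H →L[ℂ] H) : H →ₗ[ℂ] H) ∘ₗ (e.symm : V →ₗ[ℂ] H) with hf0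
  have hf0_apply : ∀ v : V, f0 v = R (A (e.symm v)) := fun v => rfl
  have hf0_bound : ∀ v : V, ‖f0 v‖ ≤ M * ‖v‖ := by
    intro v
    rw [hf0_apply]
    calc ‖R (A (e.symm v))‖ ≤ M * ‖R (e.symm v)‖ := hbound _
      _ = M * ‖v‖ := by rw [he_symm v]; rfl
  set f : V →L[ℂ] H := f0.mkContinuous M hf0_bound with hf
  have hf_apply : ∀ v : V, f v = R (A (e.symm v)) := fun v => hf0_apply v
  -- extend
  set C : H →L[ℂ] H := f.extend V.subtypeL with hC
  have hC_eq : ∀ x : H, C (R x) = R (A x) := by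
    intro x
    have h1 : C (V.subtypeL (e x)) = f (e x) := ContinuousLinearMap.extend_eq f (e := V.subtypeL) hdr hui (e x)
    have h2 : V.subtypeL (e x) = R x := he_apply x
    rw [h2] at h1
    rw [h1, hf_apply, e.symm_apply_apply]
  -- symmetry of C on the dense range
  have hsym0 : ∀ a b : H, (inner ℂ (C (R a)) (R b) : ℂ) = inner ℂ (R a) (C (R b)) := by
    intro a b
    rw [hC_eq, hC_eq]
    have lhs : (inner ℂ (R (A a)) (R b) : ℂ) = inner ℂ (A a) (S b) := by
      rw [hRinner]
      congr 1
      rw [← hR_sq]; rfl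
    have rhs : (inner ℂ (R a) (R (A b)) : ℂ) = inner ℂ a (S (A b)) := by
      rw [hRinner]
      congr 1
      rw [← hR_sq]; rfl
    rw [lhs, rhs]
    have hSAb : S (A b) = K (S b) := by
      have := congrArg (fun T : H →L[ℂ] H => T b) hK
      simpa using this
    rw [hSAb]
    have := hKinner 1 a (S b)
    simpa using this.symm
  -- symmetry everywhere by density
  have hsym : ∀ x y : H, (inner ℂ (C x) y : ℂ) = inner ℂ x (C y) := by
    have step1 : ∀ (b : H) (x : H), (inner ℂ (C x) (R b) : ℂ) = inner ℂ x (C (R b)) := by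
      intro b
      have hfun : (fun x : H => (inner ℂ (C x) (R b) : ℂ)) = fun x : H => inner ℂ x (C (R b)) := by
        apply Continuous.ext_on hVdense
        · exact (continuous_inner.comp (C.continuous.prodMk continuous_const))
        · exact (continuous_inner.comp (continuous_id.prodMk continuous_const))
        · rintro _ ⟨a, rfl⟩
          exact hsym0 a b
      exact fun x => congrFun hfun x
    intro x y
    have hfun : (fun y : H => (inner ℂ (C x) y : ℂ)) = fun y : H => inner ℂ x (C y) := by
      apply Continuous.ext_on hVdense
      · exact (continuous_inner.comp (continuous_const.prodMk continuous_id))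
      · exact (continuous_inner.comp (continuous_const.prodMk C.continuous))
      · rintro _ ⟨b, rfl⟩
        exact step1 b x
    exact congrFun hfun y
  have hCsa : IsSelfAdjoint C := by
    rw [ContinuousLinearMap.isSelfAdjoint_iff']
    exact ContinuousLinearMap.ext fun x =>
      ext_inner_right ℂ fun y => by rw [adjoint_inner_left]; exact (hsym x y).symm
  refine ⟨C, hCsa, ?_, M, hMpos, hbound⟩
  ext x
  simp only [ContinuousLinearMap.comp_apply]
  exact (hC_eq x).symm
end

section
/- Let K be a nonzero compact operator on a complex Hilbert space H that is symmetrizable by a positive operator S (i.e. S K* = K S with S > 0). Then the spectrum of K is contained in the real line. -/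
open ContinuousLinearMap Filter Topology Finset

section Aux

variable {H : Type*} [NormedAddCommGroup H] [InnerProductSpace ℂ H] [CompleteSpace H]

/-- Key inequality: `‖K† w‖² ≤ ‖w‖ * ‖K (K† w)‖`. -/
private lemma aux_key (K : H →L[ℂ] H) (w : H) :
    ‖adjoint K w‖ ^ 2 ≤ ‖w‖ * ‖K (adjoint K w)‖ := by
  have h1 : (inner ℂ (adjoint K w) (adjoint K w) : ℂ) = inner ℂ w (K (adjoint K w)) :=
    adjoint_inner_left K (adjoint K w) w
  have h2 : (inner ℂ (adjoint K w) (adjoint K w) : ℂ) = ((‖adjoint K w‖ : ℝ) ^ 2 : ℝ) := by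
    rw [inner_self_eq_norm_sq_to_K]
    norm_num
  have h3 : ((‖adjoint K w‖ ^ 2 : ℝ) : ℂ).re = ‖adjoint K w‖ ^ 2 := Complex.ofReal_re _
  have h4 : (inner ℂ w (K (adjoint K w)) : ℂ).re ≤ ‖(inner ℂ w (K (adjoint K w)) : ℂ)‖ :=
    Complex.re_le_norm _
  have h5 : ‖(inner ℂ w (K (adjoint K w)) : ℂ)‖ ≤ ‖w‖ * ‖K (adjoint K w)‖ :=
    norm_inner_le_norm _ _
  calc ‖adjoint K w‖ ^ 2 = ((‖adjoint K w‖ ^ 2 : ℝ) : ℂ).re := h3.symm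
    _ = (inner ℂ w (K (adjoint K w)) : ℂ).re := by rw [← h2, h1]
    _ ≤ ‖w‖ * ‖K (adjoint K w)‖ := h4.trans h5

/-- Schauder's theorem in Hilbert space: the adjoint of a compact operator is compact. -/
private lemma aux_adjoint_compact (K : H →L[ℂ] H) (hK : IsCompactOperator ⇑K) :
    IsCompactOperator ⇑(adjoint K) := by
  classical
  set T := adjoint K with hT
  rw [isCompactOperator_iff_exists_mem_nhds_isCompact_closure_image]
  refine ⟨Metric.ball 0 1, Metric.ball_mem_nhds 0 one_pos, ?_⟩
  refine TotallyBounded.isCompact_of_isClosed (TotallyBounded.closure ?_) isClosed_closure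
  -- images under K ∘L T of the unit ball are totally bounded
  have hKT : IsCompactOperator ⇑(K ∘L T) := by
    have := hK.comp_clm T
    rwa [← ContinuousLinearMap.coe_comp'] at this
  obtain ⟨C, hCc, hCsub⟩ :=
    IsCompactOperator.image_subset_compact_of_bounded
      (f := ((K ∘L T : H →L[ℂ] H) : H →ₗ[ℂ] H)) hKT
      (Metric.isBounded_ball (x := (0 : H)) (r := 1))
  have hCtb : TotallyBounded (⇑(K ∘L T) '' Metric.ball (0 : H) 1) :=
    (hCc.totallyBounded).subset hCsub
  rw [Metric.totallyBounded_iff]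
  intro ε hε
  set δ : ℝ := ε ^ 2 / 8 with hδdef
  have hδpos : 0 < δ := by positivity
  obtain ⟨t, htf, htsub⟩ := Metric.totallyBounded_iff.mp hCtb δ hδpos
  set pick : H → H := fun y =>
    if h : ∃ x : H, ‖x‖ < 1 ∧ dist ((K ∘L T) x) y < δ then h.choose else 0 with hpickdef
  refine ⟨(fun y => T (pick y)) '' t, htf.image _, ?_⟩
  rintro _ ⟨u, hu, rfl⟩
  have hu1 : ‖u‖ < 1 := by simpa [Metric.mem_ball] using hu
  have hmem : (K ∘L T) u ∈ ⋃ y ∈ t, Metric.ball y δ := htsub ⟨u, hu, rfl⟩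
  rw [Set.mem_iUnion₂] at hmem
  obtain ⟨y, hyt, hyd⟩ := hmem
  rw [Metric.mem_ball] at hyd
  have hex : ∃ x : H, ‖x‖ < 1 ∧ dist ((K ∘L T) x) y < δ := ⟨u, hu1, hyd⟩
  have hpick : pick y = hex.choose := by rw [hpickdef]; simp only [dif_pos hex]
  obtain ⟨hx₀1, hx₀2⟩ := hex.choose_spec
  set x₀ := hex.choose
  rw [Set.mem_iUnion₂]
  refine ⟨T (pick y), Set.mem_image_of_mem _ hyt, ?_⟩
  rw [Metric.mem_ball, hpick, dist_eq_norm]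
  -- estimate
  have hKdist : ‖(K ∘L T) u - (K ∘L T) x₀‖ < 2 * δ := by
    have h1 := dist_triangle ((K ∘L T) u) y ((K ∘L T) x₀)
    have h2 : dist y ((K ∘L T) x₀) = dist ((K ∘L T) x₀) y := dist_comm _ _
    rw [← dist_eq_norm]
    linarith
  have h2 : ‖T u - T x₀‖ ^ 2 ≤ ‖u - x₀‖ * ‖(K ∘L T) u - (K ∘L T) x₀‖ := by
    have := aux_key K (u - x₀)
    simpa [map_sub] using this
  have hnorm : ‖u - x₀‖ ≤ 2 := by
    have := norm_sub_le u x₀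
    linarith
  have hKnn : (0 : ℝ) ≤ ‖(K ∘L T) u - (K ∘L T) x₀‖ := norm_nonneg _
  have hTnn : (0 : ℝ) ≤ ‖T u - T x₀‖ := norm_nonneg _
  have hsq : ‖T u - T x₀‖ ^ 2 < ε ^ 2 := by
    have hun : (0:ℝ) ≤ ‖u - x₀‖ := norm_nonneg _
    nlinarith
  nlinarith [hsq, hTnn, hε]

/-- A frontier point of the spectrum is an approximate eigenvalue. -/
private lemma aux_frontier (T : H →L[ℂ] H) {μ : ℂ}
    (hμ : μ ∈ frontier (spectrum ℂ T)) {ε : ℝ} (hε : 0 < ε) :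
    ∃ x : H, ‖x‖ = 1 ∧ ‖T x - μ • x‖ < ε := by
  have hμσ : μ ∈ spectrum ℂ T := by
    have := frontier_subset_closure (s := spectrum ℂ T) hμ
    rwa [(spectrum.isClosed (𝕜 := ℂ) (a := T)).closure_eq] at this
  have hmem : μ ∈ closure (spectrum ℂ T)ᶜ := by
    rw [frontier_eq_closure_inter_closure] at hμ
    exact hμ.2
  set δ : ℝ := ε / 3 with hδdef
  have hδpos : 0 < δ := by positivity
  obtain ⟨ν, hν, hνd⟩ := Metric.mem_closure_iff.mp hmem δ hδpos
  have hνσ : ν ∉ spectrum ℂ T := hν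
  obtain ⟨U, hU⟩ := spectrum.notMem_iff.mp hνσ
  set R : H →L[ℂ] H := ((U⁻¹ : (H →L[ℂ] H)ˣ) : H →L[ℂ] H) with hRdef
  have hνμ : ν ≠ μ := by rintro rfl; exact hνσ hμσ
  have hdpos : 0 < ‖ν - μ‖ := by
    rw [norm_pos_iff, sub_ne_zero]; exact hνμ
  have hdlt : ‖ν - μ‖ < δ := by
    have : dist μ ν < δ := hνd
    rwa [dist_eq_norm, ← norm_neg, neg_sub] at this
  -- resolvent blow-up
  have hR : 1 ≤ ‖R‖ * ‖ν - μ‖ := by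
    by_contra hcon
    push_neg at hcon
    have hsmall : ‖(ν - μ) • R‖ < 1 := by
      rw [norm_smul]
      calc ‖ν - μ‖ * ‖R‖ = ‖R‖ * ‖ν - μ‖ := mul_comm _ _
        _ < 1 := hcon
    have hfac : algebraMap ℂ (H →L[ℂ] H) μ - T =
        (U : H →L[ℂ] H) * (1 - (ν - μ) • R) := by
      have hUR : (U : H →L[ℂ] H) * R = 1 := U.mul_inv
      rw [mul_sub, mul_one, mul_smul_comm, hUR, hU,
        Algebra.algebraMap_eq_smul_one, Algebra.algebraMap_eq_smul_one, sub_smul]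
      abel
    have hunit : IsUnit (algebraMap ℂ (H →L[ℂ] H) μ - T) := by
      rw [hfac]
      exact U.isUnit.mul (Units.oneSub _ hsmall).isUnit
    exact (spectrum.mem_iff.mp hμσ) hunit
  have hRpos : 0 < ‖R‖ := by nlinarith
  have hRδ : 1 / δ < ‖R‖ := by
    rw [div_lt_iff₀ hδpos]
    nlinarith
  obtain ⟨y, hy1, hy2⟩ := R.exists_lt_apply_of_lt_opNorm hRδ
  set x := R y with hxdef
  have hxnorm : 1 / δ < ‖x‖ := hy2
  have hxpos : 0 < ‖x‖ := lt_trans (by positivity) hxnorm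
  have hx0 : x ≠ 0 := by
    intro h; rw [h, norm_zero] at hxpos; exact lt_irrefl _ hxpos
  -- (ν • 1 - T) x = y
  have hA : ν • x - T x = y := by
    have h1 : (algebraMap ℂ (H →L[ℂ] H) ν - T) x = ((U : H →L[ℂ] H) * R) y := by
      rw [hU]; rfl
    rw [U.mul_inv] at h1
    have h2 : (algebraMap ℂ (H →L[ℂ] H) ν - T) x = ν • x - T x := by
      rw [Algebra.algebraMap_eq_smul_one]
      simp [ContinuousLinearMap.sub_apply, ContinuousLinearMap.smul_apply]
    rw [h2] at h1
    simpa using h1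
  have hest : ‖T x - μ • x‖ < ε * ‖x‖ := by
    have heq : T x - μ • x = -y + (ν - μ) • x := by
      rw [← hA, sub_smul]
      abel
    have h1 : ‖T x - μ • x‖ ≤ ‖y‖ + ‖ν - μ‖ * ‖x‖ := by
      rw [heq]
      calc ‖-y + (ν - μ) • x‖ ≤ ‖-y‖ + ‖(ν - μ) • x‖ := norm_add_le _ _
        _ = ‖y‖ + ‖ν - μ‖ * ‖x‖ := by rw [norm_neg, norm_smul]
    have h2 : ‖y‖ < 1 := hy1
    have h3 : 1 < δ * ‖x‖ := by
      rw [← div_lt_iff₀' hδpos]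
      exact hxnorm
    have h4 : ‖ν - μ‖ * ‖x‖ ≤ δ * ‖x‖ := by nlinarith
    have : δ * ‖x‖ + δ * ‖x‖ < ε * ‖x‖ := by
      rw [hδdef]; nlinarith
    linarith
  refine ⟨(‖x‖⁻¹ : ℂ) • x, norm_smul_inv_norm hx0, ?_⟩
  have heq : T ((‖x‖⁻¹ : ℂ) • x) - μ • ((‖x‖⁻¹ : ℂ) • x)
      = (‖x‖⁻¹ : ℂ) • (T x - μ • x) := by
    rw [map_smul, smul_sub, smul_comm]
  have hnc : ‖(‖x‖⁻¹ : ℂ)‖ = ‖x‖⁻¹ := by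
    simp [abs_of_pos hxpos]
  rw [heq, norm_smul, hnc]
  calc ‖x‖⁻¹ * ‖T x - μ • x‖ < ‖x‖⁻¹ * (ε * ‖x‖) := by
        apply mul_lt_mul_of_pos_left hest (by positivity)
    _ = ε := by field_simp

/-- A nonzero approximate eigenvalue of a compact operator is a genuine eigenvalue. -/
private lemma aux_eigen {T : H →L[ℂ] H} (hTc : IsCompactOperator ⇑T) {μ : ℂ} (hμ0 : μ ≠ 0)
    (happ : ∀ ε : ℝ, 0 < ε → ∃ x : H, ‖x‖ = 1 ∧ ‖T x - μ • x‖ < ε) :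
    ∃ x : H, x ≠ 0 ∧ T x = μ • x := by
  classical
  choose x hx1 hx2 using fun n : ℕ => happ (1 / (n + 1)) (by positivity)
  obtain ⟨C, hCc, hCsub⟩ :=
    IsCompactOperator.image_subset_compact_of_bounded
      (f := ((T : H →L[ℂ] H) : H →ₗ[ℂ] H)) hTc
      (Metric.isBounded_closedBall (x := (0 : H)) (r := 1))
  have hmem : ∀ n, T (x n) ∈ C := fun n =>
    hCsub ⟨x n, by simp [Metric.mem_closedBall, dist_eq_norm, hx1 n], rfl⟩
  obtain ⟨y, hyC, φ, hφ, hTy⟩ := hCc.tendsto_subseq hmem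
  have hsub : Tendsto (fun n => T (x (φ n)) - μ • x (φ n)) atTop (𝓝 0) := by
    rw [tendsto_zero_iff_norm_tendsto_zero]
    apply squeeze_zero (fun n => norm_nonneg _) (fun n => (hx2 (φ n)).le)
    have hb : ∀ n : ℕ, (1 : ℝ) / (φ n + 1) ≤ 1 / (n + 1) := by
      intro n
      have hn : (n : ℝ) ≤ (φ n : ℝ) := by exact_mod_cast hφ.le_apply
      apply one_div_le_one_div_of_le (by positivity)
      linarith
    apply squeeze_zero (fun n => by positivity) hb
    exact tendsto_one_div_add_atTop_nhds_zero_nat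
  have hμx : Tendsto (fun n => μ • x (φ n)) atTop (𝓝 y) := by
    have h := hTy.sub hsub
    simpa using h
  have hxlim : Tendsto (fun n => x (φ n)) atTop (𝓝 (μ⁻¹ • y)) := by
    have h := hμx.const_smul μ⁻¹
    simpa [smul_smul, inv_mul_cancel₀ hμ0] using h
  have hny : ‖μ⁻¹ • y‖ = 1 := by
    have h1 : Tendsto (fun n => ‖x (φ n)‖) atTop (𝓝 ‖μ⁻¹ • y‖) := hxlim.norm
    have h2 : Tendsto (fun n : ℕ => (1 : ℝ)) atTop (𝓝 ‖μ⁻¹ • y‖) := by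
      simpa [hx1] using h1
    exact tendsto_nhds_unique h2 tendsto_const_nhds
  refine ⟨μ⁻¹ • y, ?_, ?_⟩
  · intro h0
    rw [h0, norm_zero] at hny
    norm_num at hny
  · have hT2 : Tendsto (fun n => T (x (φ n))) atTop (𝓝 (T (μ⁻¹ • y))) :=
      (T.continuous.tendsto _).comp hxlim
    have hTe : T (μ⁻¹ • y) = y := tendsto_nhds_unique hT2 hTy
    rw [hTe, smul_smul, mul_inv_cancel₀ hμ0, one_smul]

/-- Eigenvalues of `K†` are real when `S K† = K S` with `S` positive. -/
private lemma aux_real (S K : H →L[ℂ] H)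
    (hS_pos : ∀ x : H, x ≠ 0 → 0 < (inner ℂ (S x) x : ℂ).re)
    (hK : S ∘L adjoint K = K ∘L S) {x : H} (hx : x ≠ 0) {μ : ℂ}
    (hμ : adjoint K x = μ • x) : μ.im = 0 := by
  have hc : (inner ℂ (S x) x : ℂ) ≠ 0 := by
    intro h
    have := hS_pos x hx
    rw [h] at this
    simp at this
  have h1 : (inner ℂ (S (adjoint K x)) x : ℂ) = (starRingEnd ℂ) μ * inner ℂ (S x) x := by
    rw [hμ, map_smul, inner_smul_left]
  have h2 : (inner ℂ (S (adjoint K x)) x : ℂ) = μ * inner ℂ (S x) x := by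
    have hSK : S (adjoint K x) = K (S x) := by
      have := congrArg (fun f : H →L[ℂ] H => f x) hK
      simpa using this
    rw [hSK]
    calc (inner ℂ (K (S x)) x : ℂ) = inner ℂ (S x) (adjoint K x) :=
          (adjoint_inner_right K (S x) x).symm
      _ = inner ℂ (S x) (μ • x) := by rw [hμ]
      _ = μ * inner ℂ (S x) x := inner_smul_right _ _ _
  have hconj : (starRingEnd ℂ) μ = μ := mul_right_cancel₀ hc (h1.symm.trans h2)
  exact Complex.conj_eq_iff_im.mp hconj

end Aux

/-- A nonzero compact operator `K` on a complex Hilbert space that is symmetrizable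
by a positive operator `S` (i.e. `S K* = K S` with `S > 0`) has real spectrum. -/
theorem stmt1
    {H : Type*} [NormedAddCommGroup H] [InnerProductSpace ℂ H] [CompleteSpace H]
    (S K : H →L[ℂ] H)
    (hS_sa : IsSelfAdjoint S)
    (hS_pos : ∀ x : H, x ≠ 0 → 0 < (inner ℂ (S x) x : ℂ).re)
    (hK : S ∘L adjoint K = K ∘L S)
    (hK_compact : IsCompactOperator (⇑K))
    (hK_ne : K ≠ 0) :
    ∀ z ∈ spectrum ℂ K, z.im = 0 := by
  intro z hz
  set T := adjoint K with hTdef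
  -- conj z belongs to the spectrum of the adjoint
  have hz' : (starRingEnd ℂ) z ∈ spectrum ℂ T := by
    rw [hTdef, ← star_eq_adjoint, spectrum.map_star, Set.mem_star]
    simpa using hz
  -- pick a point of maximal |Im| in the spectrum of T
  obtain ⟨μ, hμσ, hμmax⟩ :=
    (spectrum.isCompact (𝕜 := ℂ) T).exists_isMaxOn ⟨_, hz'⟩
      ((Complex.continuous_im.abs).continuousOn (s := spectrum ℂ T))
  rw [isMaxOn_iff] at hμmax
  have key : μ.im = 0 := by
    by_contra him
    have hμ0 : μ ≠ 0 := by
      intro h; rw [h] at him; simp at him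
    -- μ is a frontier point of the spectrum of T
    have hfr : μ ∈ frontier (spectrum ℂ T) := by
      rw [(spectrum.isClosed (𝕜 := ℂ) (a := T)).frontier_eq]
      refine ⟨hμσ, fun hint => ?_⟩
      obtain ⟨r, hr, hball⟩ := Metric.isOpen_iff.mp isOpen_interior μ hint
      set s : ℝ := if 0 ≤ μ.im then r / 2 else -(r / 2) with hsdef
      have hsabs : |s| = r / 2 := by
        rw [hsdef]; split_ifs <;> simp [abs_of_pos, abs_of_neg, hr, le_of_lt, half_pos hr,
          abs_of_nonneg (le_of_lt (half_pos hr))]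
      have hw : μ + (s : ℂ) * Complex.I ∈ spectrum ℂ T := by
        apply interior_subset
        apply hball
        rw [Metric.mem_ball, dist_eq_norm]
        have : μ + (s : ℂ) * Complex.I - μ = (s : ℂ) * Complex.I := by ring
        rw [this]
        rw [norm_mul, Complex.norm_real, Complex.norm_I, mul_one, Real.norm_eq_abs, hsabs]
        linarith
      have hle := hμmax _ hw
      have him_eq : (μ + (s : ℂ) * Complex.I).im = μ.im + s := by
        simp
      rw [him_eq] at hle
      rw [hsdef] at hle
      split_ifs at hle with hcase
      · rw [abs_of_nonneg hcase, abs_of_nonneg (by linarith [half_pos hr])] at hle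
        linarith [half_pos hr]
      · push_neg at hcase
        rw [abs_of_neg hcase, abs_of_neg (by linarith [half_pos hr])] at hle
        linarith [half_pos hr]
    -- μ is an approximate eigenvalue, hence an eigenvalue of the compact operator T
    have happ : ∀ ε : ℝ, 0 < ε → ∃ x : H, ‖x‖ = 1 ∧ ‖T x - μ • x‖ < ε :=
      fun ε hε => aux_frontier T hfr hε
    obtain ⟨x, hx0, hxe⟩ := aux_eigen (aux_adjoint_compact K hK_compact) hμ0 happ
    exact him (aux_real S K hS_pos hK hx0 hxe)
  -- conclude
  have hle := hμmax _ hz'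
  rw [key] at hle
  simpa using hle
end

section
/- Let K be a compact operator on a complex Hilbert space H that is symmetrizable by a positive operator S. Then for every nonzero real number λ: (i) ker((K* − λ·I)²) = ker(K* − λ·I), i.e. K* has no generalized eigenvectors at λ; and (ii) the operator S maps the eigenspace ker(K* − λ·I) bijectively onto the eigenspace ker(K − λ·I). -/
set_option linter.unusedSectionVars false
set_option linter.unusedVariables false
set_option maxHeartbeats 1000000
open ContinuousLinearMap Filter Topology Finset Metric Pointwise

section Aux

variable {H : Type*} [NormedAddCommGroup H] [InnerProductSpace ℂ H] [CompleteSpace H]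

lemma aux_compact_seq (C : H →L[ℂ] H) (hC : IsCompactOperator (⇑C)) (x : ℕ → H)
    (hx : ∀ n, ‖x n‖ ≤ 1) :
    ∃ (φ : ℕ → ℕ) (z : H), StrictMono φ ∧ Tendsto (fun n => C (x (φ n))) atTop (𝓝 z) := by
  obtain ⟨M, hM, hMmem⟩ := hC
  obtain ⟨ε, hε, hball⟩ := Metric.mem_nhds_iff.mp hMmem
  set c : ℂ := ((ε / 2 : ℝ) : ℂ) with hcdef
  have hc0 : c ≠ 0 := by
    rw [hcdef, Complex.ofReal_ne_zero]; positivity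
  have hmem : ∀ n, C (c • x n) ∈ M := by
    intro n
    apply hball
    have : ‖c • x n‖ < ε := by
      rw [norm_smul]
      have h1 : ‖c‖ = ε / 2 := by
        rw [hcdef, Complex.norm_real, Real.norm_eq_abs, abs_of_pos (by positivity)]
      calc ‖c‖ * ‖x n‖ ≤ (ε / 2) * 1 := by
            rw [h1]; exact mul_le_mul le_rfl (hx n) (norm_nonneg _) (by positivity)
        _ < ε := by linarith
    simpa [mem_ball, dist_zero_right] using this
  obtain ⟨z, -, φ, hφ, hz⟩ := hM.tendsto_subseq (x := fun n => C (c • x n)) hmem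
  refine ⟨φ, c⁻¹ • z, hφ, ?_⟩
  have heq : (fun n => C (x (φ n))) = fun n => c⁻¹ • C (c • x (φ n)) := by
    ext n
    rw [map_smul, smul_smul, inv_mul_cancel₀ hc0, one_smul]
  rw [heq]
  exact hz.const_smul _

lemma aux_ker_findim (C : H →L[ℂ] H) (hC : IsCompactOperator (⇑C)) {c : ℂ} (hc : c ≠ 0) :
    FiniteDimensional ℂ (LinearMap.ker ((C - c • (1 : H →L[ℂ] H) : H →L[ℂ] H) : H →ₗ[ℂ] H)) := by
  set D := C - c • (1 : H →L[ℂ] H) with hD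
  set E := LinearMap.ker (D : H →ₗ[ℂ] H) with hE
  have hEeig : ∀ x ∈ E, C x = c • x := by
    intro x hx
    have h0 : D x = 0 := LinearMap.mem_ker.mp hx
    have h1 : C x - c • x = 0 := by
      simpa [hD, sub_apply, smul_apply, one_apply] using h0
    rwa [sub_eq_zero] at h1
  obtain ⟨M, hM, hMsub⟩ :=
    hC.image_closedBall_subset_compact (𝕜₁ := ℂ) (σ₁₂ := RingHom.id ℂ) (f := (C : H →ₗ[ℂ] H)) 1
  have hZsub : ((E : Set H) ∩ Metric.closedBall 0 1) ⊆ c⁻¹ • M := by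
    rintro x ⟨hxE, hxb⟩
    refine Set.mem_smul_set.mpr ⟨C x, hMsub ⟨x, by simpa using hxb, rfl⟩, ?_⟩
    rw [hEeig x hxE, smul_smul, inv_mul_cancel₀ hc, one_smul]
  have hZclosed : IsClosed ((E : Set H) ∩ Metric.closedBall 0 1) :=
    (ContinuousLinearMap.isClosed_ker D).inter Metric.isClosed_closedBall
  have hZcomp : IsCompact ((E : Set H) ∩ Metric.closedBall 0 1) :=
    (hM.smul c⁻¹).of_isClosed_subset hZclosed hZsub
  have hball : IsCompact (Metric.closedBall (0 : ↥E) 1) := by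
    rw [Topology.IsEmbedding.subtypeVal.isCompact_iff]
    convert hZcomp using 1
    ext x
    simp only [Set.mem_image, Metric.mem_closedBall, dist_zero_right, Set.mem_inter_iff,
      SetLike.mem_coe]
    constructor
    · rintro ⟨y, hy, rfl⟩
      exact ⟨y.2, by simpa using hy⟩
    · rintro ⟨hxE, hxb⟩
      exact ⟨⟨x, hxE⟩, by simpa using hxb, rfl⟩
  exact FiniteDimensional.of_isCompact_closedBall₀ ℂ one_pos hball

lemma aux_closed_range (C : H →L[ℂ] H) (hC : IsCompactOperator (⇑C)) {c : ℂ} (hc : c ≠ 0) :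
    IsClosed ((LinearMap.range ((C - c • (1 : H →L[ℂ] H) : H →L[ℂ] H) : H →ₗ[ℂ] H) : Submodule ℂ H) : Set H) := by
  set D := C - c • (1 : H →L[ℂ] H) with hD
  set E := LinearMap.ker (D : H →ₗ[ℂ] H) with hE
  have hDx : ∀ x, D x = C x - c • x := by
    intro x; simp [hD, sub_apply, smul_apply, one_apply]
  have hEclosed : IsClosed (E : Set H) := ContinuousLinearMap.isClosed_ker D
  haveI : CompleteSpace E := hEclosed.completeSpace_coe
  -- Step 1 : D is bounded below on Eᗮ
  obtain ⟨k, hk0, hk⟩ : ∃ k : ℝ, 0 < k ∧ ∀ v ∈ Eᗮ, ‖v‖ ≤ k * ‖D v‖ := by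
    by_contra hcon
    push_neg at hcon
    have hex : ∀ n : ℕ, ∃ v ∈ Eᗮ, ‖v‖ = 1 ∧ ‖D v‖ < 1 / (n + 1) := by
      intro n
      obtain ⟨v, hvE, hv⟩ := hcon (n + 1) (by positivity)
      have hv0 : v ≠ 0 := by
        rintro rfl; simp at hv
      have hvn : (0:ℝ) < ‖v‖ := norm_pos_iff.mpr hv0
      have hna : ‖((‖v‖ : ℝ) : ℂ)⁻¹‖ = ‖v‖⁻¹ := by
        rw [norm_inv, Complex.norm_real, norm_norm]
      refine ⟨((‖v‖ : ℝ) : ℂ)⁻¹ • v, Submodule.smul_mem _ _ hvE, ?_, ?_⟩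
      · rw [norm_smul, hna, inv_mul_cancel₀ (norm_ne_zero_iff.mpr hv0)]
      · rw [map_smul, norm_smul, hna]
        rw [div_eq_mul_inv, one_mul]
        have h1 : ((n:ℝ) + 1) * ‖D v‖ < ‖v‖ := hv
        have h2 : 0 < ‖v‖ := norm_pos_iff.mpr hv0
        have h3 : ‖D v‖ < ‖v‖ / ((n:ℝ) + 1) := by
          rw [lt_div_iff₀ (by positivity)]; linarith [h1]
        calc ‖v‖⁻¹ * ‖D v‖ < ‖v‖⁻¹ * (‖v‖ / ((n:ℝ)+1)) := by
              apply mul_lt_mul_of_pos_left h3 (by positivity)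
          _ = ((n:ℝ)+1)⁻¹ := by field_simp
    choose u huE hunorm huD using hex
    have huD0 : Tendsto (fun n => D (u n)) atTop (𝓝 0) := by
      rw [tendsto_zero_iff_norm_tendsto_zero]
      apply squeeze_zero (fun n => norm_nonneg _) (fun n => le_of_lt (huD n))
      exact tendsto_one_div_add_atTop_nhds_zero_nat
    obtain ⟨φ, z, hφ, hz⟩ := aux_compact_seq C hC u (fun n => le_of_eq (hunorm n))
    have huDφ : Tendsto (fun n => D (u (φ n))) atTop (𝓝 0) :=
      huD0.comp hφ.tendsto_atTop
    have hcu : Tendsto (fun n => c • u (φ n)) atTop (𝓝 z) := by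
      have : (fun n => c • u (φ n)) = fun n => C (u (φ n)) - D (u (φ n)) := by
        ext n; rw [hDx]; abel
      rw [this]
      simpa using hz.sub huDφ
    have huφ : Tendsto (fun n => u (φ n)) atTop (𝓝 (c⁻¹ • z)) := by
      have := hcu.const_smul c⁻¹
      simpa [smul_smul, inv_mul_cancel₀ hc] using this
    set w := c⁻¹ • z with hw
    have hwnorm : ‖w‖ = 1 := by
      have h1 : Tendsto (fun n => ‖u (φ n)‖) atTop (𝓝 ‖w‖) := huφ.norm
      have h2 : (fun n => ‖u (φ n)‖) = fun _ => (1:ℝ) := by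
        ext n; exact hunorm _
      rw [h2] at h1
      exact (tendsto_const_nhds_iff.mp h1).symm
    have hwE' : w ∈ Eᗮ := by
      have : IsClosed (Eᗮ : Set H) := Submodule.isClosed_orthogonal E
      exact this.mem_of_tendsto huφ (Eventually.of_forall fun n => huE _)
    have hwE : w ∈ E := by
      have hDw : Tendsto (fun n => D (u (φ n))) atTop (𝓝 (D w)) :=
        (D.continuous.tendsto _).comp huφ
      have : D w = 0 := tendsto_nhds_unique hDw huDφ
      exact LinearMap.mem_ker.mpr this
    have : w = 0 := by
      have h0 : (inner ℂ w w : ℂ) = 0 := hwE' w hwE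
      simpa [inner_self_eq_zero] using h0
    rw [this] at hwnorm
    simp at hwnorm
  -- Step 2 : range D = D '' Eᗮ
  have hrange : (LinearMap.range (D : H →ₗ[ℂ] H) : Set H) = ⇑D '' (Eᗮ : Set H) := by
    ext y
    constructor
    · rintro ⟨x, rfl⟩
      refine ⟨x - (Submodule.orthogonalProjectionOnto E x : H),
        Submodule.sub_starProjection_mem_orthogonal x, ?_⟩
      have hp : D ((Submodule.orthogonalProjectionOnto E x : H)) = 0 :=
        LinearMap.mem_ker.mp (Submodule.orthogonalProjectionOnto E x).2
      rw [map_sub, hp, sub_zero]; rfl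
    · rintro ⟨x, -, rfl⟩
      exact ⟨x, rfl⟩
  rw [hrange]
  -- Step 3 : D '' Eᗮ is closed
  apply IsSeqClosed.isClosed
  intro g y hg hgy
  choose x hxE hxD using fun n => hg n
  have hgc : CauchySeq g := hgy.cauchySeq
  have hxc : CauchySeq x := by
    rw [Metric.cauchySeq_iff]
    intro ε hε
    obtain ⟨N, hN⟩ := Metric.cauchySeq_iff.mp hgc (ε / k) (by positivity)
    refine ⟨N, fun m hm n hn => ?_⟩
    have h1 : ‖x m - x n‖ ≤ k * ‖D (x m - x n)‖ :=
      hk _ (Submodule.sub_mem _ (hxE m) (hxE n))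
    have h2 : D (x m - x n) = g m - g n := by rw [map_sub, hxD, hxD]
    rw [dist_eq_norm]
    calc ‖x m - x n‖ ≤ k * ‖D (x m - x n)‖ := h1
      _ = k * dist (g m) (g n) := by rw [h2, dist_eq_norm]
      _ < k * (ε / k) := by
          exact mul_lt_mul_of_pos_left (hN m hm n hn) hk0
      _ = ε := by field_simp
  obtain ⟨p, hp⟩ := cauchySeq_tendsto_of_complete hxc
  refine ⟨p, ?_, ?_⟩
  · exact (Submodule.isClosed_orthogonal E).mem_of_tendsto hp
      (Eventually.of_forall fun n => hxE n)
  · have h1 : Tendsto (fun n => D (x n)) atTop (𝓝 (D p)) := (D.continuous.tendsto _).comp hp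
    have h2 : (fun n => D (x n)) = g := by ext n; exact hxD n
    rw [h2] at h1
    exact tendsto_nhds_unique h1 hgy

lemma aux_surj_inj (C : H →L[ℂ] H) (hC : IsCompactOperator (⇑C)) {c : ℂ} (hc : c ≠ 0)
    (hsurj : ∀ y, ∃ x, (C - c • (1 : H →L[ℂ] H)) x = y) {x₀ : H}
    (hx₀ : (C - c • (1 : H →L[ℂ] H)) x₀ = 0) (hx₀0 : x₀ ≠ 0) : False := by
  set D := C - c • (1 : H →L[ℂ] H) with hD
  have hDx : ∀ v, D v = C v - c • v := by
    intro v; simp [hD, sub_apply, smul_apply, one_apply]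
  have hCx : ∀ v, C v = c • v + D v := by
    intro v; rw [hDx]; abel
  choose g hg using hsurj
  set x : ℕ → H := fun n => Nat.rec x₀ (fun _ ih => g ih) n with hxdef
  have hx0 : x 0 = x₀ := rfl
  have hxs : ∀ n, D (x (n + 1)) = x n := fun n => hg (x n)
  set N : ℕ → Submodule ℂ H := fun n => LinearMap.ker (((D : H →L[ℂ] H) ^ n : H →L[ℂ] H) : H →ₗ[ℂ] H) with hN
  have hpow_succ : ∀ (n : ℕ) (v : H), (D ^ (n + 1)) v = (D ^ n) (D v) := by
    intro n v; rw [pow_succ, mul_apply_eq_comp]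
  have hpow_succ' : ∀ (n : ℕ) (v : H), (D ^ (n + 1)) v = D ((D ^ n) v) := by
    intro n v; rw [pow_succ', mul_apply_eq_comp]
  have hchain1 : ∀ n, (D ^ n) (x n) = x₀ := by
    intro n
    induction n with
    | zero => simp [hx0]
    | succ n ih => rw [hpow_succ, hxs, ih]
  have hchain2 : ∀ n, (D ^ (n + 1)) (x n) = 0 := by
    intro n; rw [hpow_succ', hchain1, hx₀]
  have hstep : ∀ n, N n ≤ N (n + 1) := by
    intro n v hv
    have : (D ^ n) v = 0 := hv
    have h2 : (D ^ (n+1)) v = 0 := by rw [hpow_succ', this, map_zero]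
    exact h2
  have hmono : ∀ m n, m ≤ n → N m ≤ N n := by
    intro m n hmn
    induction n, hmn using Nat.le_induction with
    | base => exact le_rfl
    | succ n hmn ih => exact ih.trans (hstep n)
  have hxnot : ∀ n, x n ∉ N n := by
    intro n hmem
    exact hx₀0 (by rw [← hchain1 n]; exact hmem)
  have hxin : ∀ n, x n ∈ N (n + 1) := fun n => hchain2 n
  -- choose orthogonal unit vectors
  have hy : ∀ n, ∃ y : H, y ∈ N (n + 1) ∧ y ∈ (N n)ᗮ ∧ ‖y‖ = 1 := by
    intro n
    haveI : CompleteSpace (N n) :=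
      (ContinuousLinearMap.isClosed_ker ((D : H →L[ℂ] H) ^ n)).completeSpace_coe
    set q := x n - (Submodule.orthogonalProjectionOnto (N n) (x n) : H) with hq
    have hq1 : q ∈ (N n)ᗮ := Submodule.sub_starProjection_mem_orthogonal (x n)
    have hq2 : q ∈ N (n + 1) :=
      Submodule.sub_mem _ (hxin n) (hstep n (Submodule.orthogonalProjectionOnto (N n) (x n)).2)
    have hq0 : q ≠ 0 := by
      intro h
      apply hxnot n
      have : x n = (Submodule.orthogonalProjectionOnto (N n) (x n) : H) := by
        rw [← sub_eq_zero]; exact h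
      rw [this]
      exact (Submodule.orthogonalProjectionOnto (N n) (x n)).2
    have hqn : (0:ℝ) < ‖q‖ := norm_pos_iff.mpr hq0
    have hna : ‖((‖q‖ : ℝ) : ℂ)⁻¹‖ = ‖q‖⁻¹ := by
      rw [norm_inv, Complex.norm_real, norm_norm]
    exact ⟨((‖q‖ : ℝ) : ℂ)⁻¹ • q, Submodule.smul_mem _ _ hq2, Submodule.smul_mem _ _ hq1,
      by rw [norm_smul, hna, inv_mul_cancel₀ (norm_ne_zero_iff.mpr hq0)]⟩
  choose y hy1 hy2 hy3 using hy
  -- separation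
  have hsep : ∀ m n, m < n → ‖c‖ ≤ ‖C (y n) - C (y m)‖ := by
    intro m n hmn
    set w := D (y n) - c • y m - D (y m) with hw
    have hwN : w ∈ N n := by
      have h1 : D (y n) ∈ N n := by
        have : (D ^ n) (D (y n)) = 0 := by rw [← hpow_succ]; exact hy1 n
        exact this
      have h2 : y m ∈ N n := hmono (m+1) n hmn (hy1 m)
      have h3 : D (y m) ∈ N n := by
        apply hmono m n (le_of_lt hmn)
        have : (D ^ m) (D (y m)) = 0 := by rw [← hpow_succ]; exact hy1 m
        exact this
      exact Submodule.sub_mem _ (Submodule.sub_mem _ h1 (Submodule.smul_mem _ _ h2)) h3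
    have heq : C (y n) - C (y m) = c • y n + w := by
      rw [hCx, hCx, hw]; abel
    have hinner : (inner ℂ (c • y n) w : ℂ) = 0 := by
      have h0 : (inner ℂ w (y n) : ℂ) = 0 := hy2 n w hwN
      have h1 : (inner ℂ (y n) w : ℂ) = 0 := by
        rw [← inner_conj_symm, h0, map_zero]
      rw [inner_smul_left, h1, mul_zero]
    have hsq : ‖c • y n + w‖ * ‖c • y n + w‖ = ‖c • y n‖ * ‖c • y n‖ + ‖w‖ * ‖w‖ :=
      norm_add_sq_eq_norm_sq_add_norm_sq_of_inner_eq_zero _ _ hinner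
    have hcy : ‖c • y n‖ = ‖c‖ := by rw [norm_smul, hy3, mul_one]
    rw [heq]
    nlinarith [norm_nonneg w, norm_nonneg (c • y n + w), norm_nonneg c, sq_nonneg (‖w‖)]
  -- compactness contradiction
  obtain ⟨φ, z, hφ, hz⟩ := aux_compact_seq C hC y (fun n => le_of_eq (hy3 n))
  have hcs : CauchySeq (fun n => C (y (φ n))) := hz.cauchySeq
  have hc0 : (0:ℝ) < ‖c‖ := norm_pos_iff.mpr hc
  obtain ⟨M, hM⟩ := Metric.cauchySeq_iff.mp hcs ‖c‖ hc0
  have hlt := hM (M + 1) (by omega) M (by omega)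
  have hge := hsep (φ M) (φ (M + 1)) (hφ (by omega))
  rw [dist_eq_norm] at hlt
  linarith

lemma aux_finrank_compact (Φ : H →L[ℂ] H) (F : Submodule ℂ H) [FiniteDimensional ℂ F]
    (hran : ∀ x, Φ x ∈ F) : IsCompactOperator (⇑Φ) := by
  haveI : ProperSpace ↥F := FiniteDimensional.proper ℂ ↥F
  refine ⟨Subtype.val '' (Metric.closedBall (0 : ↥F) (‖Φ‖ + 1)), ?_, ?_⟩
  · exact (isCompact_closedBall _ _).image continuous_subtype_val
  · apply Filter.mem_of_superset (Metric.ball_mem_nhds (0:H) one_pos)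
    intro x hx
    refine ⟨⟨Φ x, hran x⟩, ?_, rfl⟩
    simp only [Metric.mem_closedBall, dist_zero_right]
    have h1 : ‖(⟨Φ x, hran x⟩ : ↥F)‖ = ‖Φ x‖ := rfl
    rw [h1]
    have h2 : ‖Φ x‖ ≤ ‖Φ‖ * ‖x‖ := Φ.le_opNorm x
    have h3 : ‖x‖ < 1 := by simpa [dist_zero_right] using hx
    nlinarith [norm_nonneg Φ, norm_nonneg x, norm_nonneg (Φ x)]

end Aux

/-- For a compact operator `K` symmetrizable by a positive operator `S`, at every nonzero
real `λ`: (i) `K*` has no generalized eigenvectors, i.e. `ker((K* - λ)²) = ker(K* - λ)`;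
(ii) `S` maps `ker(K* - λ)` bijectively onto `ker(K - λ)`. -/
theorem stmt2
    {H : Type*} [NormedAddCommGroup H] [InnerProductSpace ℂ H] [CompleteSpace H]
    (S K : H →L[ℂ] H)
    (hS_sa : IsSelfAdjoint S)
    (hS_pos : ∀ x : H, x ≠ 0 → 0 < (inner ℂ (S x) x : ℂ).re)
    (hK : S ∘L adjoint K = K ∘L S)
    (hK_compact : IsCompactOperator (⇑K))
    (lam : ℝ) (hlam : lam ≠ 0) :
    LinearMap.ker (((adjoint K - (lam : ℂ) • (1 : H →L[ℂ] H)) ^ 2 : H →L[ℂ] H) : H →ₗ[ℂ] H)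
      = LinearMap.ker ((adjoint K - (lam : ℂ) • (1 : H →L[ℂ] H) : H →L[ℂ] H) : H →ₗ[ℂ] H) ∧
    Set.BijOn (⇑S)
      (LinearMap.ker ((adjoint K - (lam : ℂ) • (1 : H →L[ℂ] H) : H →L[ℂ] H) : H →ₗ[ℂ] H) : Set H)
      (LinearMap.ker ((K - (lam : ℂ) • (1 : H →L[ℂ] H) : H →L[ℂ] H) : H →ₗ[ℂ] H) : Set H) := by
  have hlamC : (lam : ℂ) ≠ 0 := Complex.ofReal_ne_zero.mpr hlam
  set T : H →L[ℂ] H := adjoint K - (lam : ℂ) • 1 with hTdef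
  set T' : H →L[ℂ] H := K - (lam : ℂ) • 1 with hT'def
  have hadjT' : adjoint T' = T := by
    rw [hT'def, hTdef]
    rw [← star_eq_adjoint, star_sub, star_smul, star_one, star_eq_adjoint,
      Complex.star_def, Complex.conj_ofReal]
  have hadjT : adjoint T = T' := by rw [← hadjT', adjoint_adjoint]
  have hSinj : Function.Injective (⇑S) := by
    intro a b hab
    by_contra hne
    have h0 : a - b ≠ 0 := sub_ne_zero.mpr hne
    have hpos := hS_pos (a - b) h0
    have hz : S (a - b) = 0 := by rw [map_sub, hab, sub_self]
    rw [hz, inner_zero_left] at hpos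
    simp at hpos
  have hST : ∀ x, S (T x) = T' (S x) := by
    intro x
    have h1 : S (adjoint K x) = K (S x) := by
      have h := congrArg (fun (B : H →L[ℂ] H) => B x) hK
      simpa [comp_apply] using h
    simp only [hTdef, hT'def, sub_apply, smul_apply, one_apply_eq_self, map_sub, map_smul, h1]
  -- part (i)
  have hker2 : LinearMap.ker ((T ^ 2 : H →L[ℂ] H) : H →ₗ[ℂ] H) = LinearMap.ker (T : H →ₗ[ℂ] H) := by
    apply le_antisymm
    · intro x hx
      have hx2 : T (T x) = 0 := by
        have h0 : (T ^ 2) x = 0 := hx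
        rwa [pow_two, mul_apply_eq_comp] at h0
      have hTx0 : T x = 0 := by
        by_contra hTx
        have hpos := hS_pos (T x) hTx
        have hzero : (inner ℂ (S (T x)) (T x) : ℂ) = 0 := by
          have step1 : (inner ℂ (S (T x)) (T x) : ℂ)
              = inner ℂ ((adjoint T) (S x)) (T x) := by rw [hST x, hadjT]
          rw [step1, adjoint_inner_left, hx2, inner_zero_right]
        rw [hzero] at hpos
        simp at hpos
      exact LinearMap.mem_ker.mpr hTx0
    · intro x hx
      have h0 : T x = 0 := hx
      have : (T ^ 2) x = 0 := by rw [pow_two, mul_apply_eq_comp, h0, map_zero]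
      exact LinearMap.mem_ker.mpr this
  have hmapsto : ∀ x, x ∈ LinearMap.ker (T : H →ₗ[ℂ] H) → S x ∈ LinearMap.ker (T' : H →ₗ[ℂ] H) := by
    intro x hx
    have h0 : T x = 0 := hx
    have : T' (S x) = 0 := by rw [← hST, h0, map_zero]
    exact LinearMap.mem_ker.mpr this
  refine ⟨hker2, ?_, hSinj.injOn, ?_⟩
  · intro x hx
    exact hmapsto x hx
  -- surjectivity
  set F := LinearMap.ker (T : H →ₗ[ℂ] H) with hFdef
  set E := LinearMap.ker (T' : H →ₗ[ℂ] H) with hEdef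
  haveI hEfin : FiniteDimensional ℂ E := aux_ker_findim K hK_compact hlamC
  set Slin : H →ₗ[ℂ] H := (S : H →ₗ[ℂ] H) with hSlin
  set W : Submodule ℂ H := F.map Slin with hWdef
  have hWE : W ≤ E := by
    rintro _ ⟨x, hxF, rfl⟩
    exact hmapsto x hxF
  haveI hWfin : FiniteDimensional ℂ W := Submodule.finiteDimensional_of_le hWE
  have hrestr : ∀ x ∈ F, Slin x ∈ W := fun x hx => Submodule.mem_map_of_mem hx
  set fFW : ↥F →ₗ[ℂ] ↥W := Slin.restrict hrestr with hfFW
  have hfFWbij : Function.Bijective fFW := by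
    constructor
    · intro a b hab
      have : S (a : H) = S (b : H) := congrArg Subtype.val hab
      exact Subtype.ext (hSinj this)
    · rintro ⟨w, hw⟩
      obtain ⟨x, hxF, hxw⟩ := hw
      exact ⟨⟨x, hxF⟩, Subtype.ext hxw⟩
  haveI hFfin : FiniteDimensional ℂ ↥F := FiniteDimensional.of_injective fFW hfFWbij.1
  set G : ↥F ≃ₗ[ℂ] ↥W := LinearEquiv.ofBijective fFW hfFWbij with hGdef
  haveI : CompleteSpace ↥W := FiniteDimensional.complete ℂ ↥W
  set PW : H →L[ℂ] ↥W := Submodule.orthogonalProjectionOnto W with hPW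
  set Φlin : H →ₗ[ℂ] H :=
    F.subtype ∘ₗ (G.symm : ↥W →ₗ[ℂ] ↥F) ∘ₗ (PW : H →ₗ[ℂ] ↥W) with hΦlin
  have hΦcont : Continuous Φlin := by
    have h1 : ⇑Φlin = (Subtype.val : ↥F → H) ∘ (⇑(G.symm : ↥W →ₗ[ℂ] ↥F)) ∘ ⇑PW := by
      rw [hΦlin]; rfl
    rw [h1]
    exact continuous_subtype_val.comp
      ((LinearMap.continuous_of_finiteDimensional (G.symm : ↥W →ₗ[ℂ] ↥F)).comp PW.continuous)
  set Φ : H →L[ℂ] H := ⟨Φlin, hΦcont⟩ with hΦdef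
  have hΦapp : ∀ x, Φ x = ((G.symm (PW x) : ↥F) : H) := fun _ => rfl
  have hΦF : ∀ x, Φ x ∈ F := fun x => (G.symm (PW x)).2
  have hΦS : ∀ f (hf : f ∈ F), Φ (S f) = f := by
    intro f hf
    have hmem : S f ∈ W := hrestr f hf
    have h1 : PW (S f) = fFW ⟨f, hf⟩ := by
      apply Subtype.ext
      have h2 : ((Submodule.orthogonalProjectionOnto W (S f)) : H) = S f :=
        Submodule.starProjection_eq_self_iff.mpr hmem
      have h4 : ((fFW ⟨f, hf⟩ : ↥W) : H) = S f := rfl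
      rw [h4]
      simpa [hPW] using h2
    rw [hΦapp, h1]
    have h3 : fFW ⟨f, hf⟩ = G ⟨f, hf⟩ := rfl
    rw [h3, LinearEquiv.symm_apply_apply]
  -- the perturbed operator
  set C' : H →L[ℂ] H := K - Φ with hC'def
  have hC'comp : IsCompactOperator (⇑C') := by
    have hΦcomp : IsCompactOperator (⇑Φ) := aux_finrank_compact Φ F hΦF
    have h5 := hK_compact.sub hΦcomp
    have h6 : ⇑(K - Φ) = ⇑K - ⇑Φ := by ext v; simp [sub_apply]
    rw [hC'def]
    rw [h6]
    exact h5
  have hD'eq : ∀ v, (C' - (lam : ℂ) • (1 : H →L[ℂ] H)) v = T' v - Φ v := by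
    intro v
    simp only [hC'def, hT'def, sub_apply, smul_apply, one_apply]
    try abel
  -- surjectivity of the perturbed operator
  haveI : CompleteSpace ↥F := (ContinuousLinearMap.isClosed_ker T).completeSpace_coe
  have hRclosed : IsClosed ((LinearMap.range (T' : H →ₗ[ℂ] H) : Submodule ℂ H) : Set H) :=
    aux_closed_range K hK_compact hlamC
  haveI : CompleteSpace ↥(LinearMap.range (T' : H →ₗ[ℂ] H)) := hRclosed.completeSpace_coe
  set R : Submodule ℂ H := LinearMap.range (T' : H →ₗ[ℂ] H) with hRdef
  have hFperp_sub : ∀ z₁ : H, z₁ ∈ Fᗮ → z₁ ∈ R := by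
    intro z₁ hz₁
    set r : H := (Submodule.orthogonalProjectionOnto R z₁ : H) with hr
    set u : H := z₁ - r with hu
    have huR : u ∈ Rᗮ := Submodule.sub_starProjection_mem_orthogonal z₁
    have huF : u ∈ F := by
      have h0 : T u = 0 := by
        rw [← hadjT']
        have h1 : (inner ℂ (adjoint T' u) (adjoint T' u) : ℂ) = 0 := by
          rw [adjoint_inner_left]
          have h2 : T' (adjoint T' u) ∈ R := ⟨adjoint T' u, rfl⟩
          have h3 : (inner ℂ (T' (adjoint T' u)) u : ℂ) = 0 := huR _ h2
          rw [← inner_conj_symm, h3, map_zero]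
        exact inner_self_eq_zero.mp h1
      exact LinearMap.mem_ker.mpr h0
    have hu0 : u = 0 := by
      have h1 : (inner ℂ u u : ℂ) = 0 := by
        have h2 : (inner ℂ u z₁ : ℂ) = 0 := hz₁ u huF
        have h3 : (inner ℂ u r : ℂ) = 0 := by
          have hrR : r ∈ R := (Submodule.orthogonalProjectionOnto R z₁).2
          rw [← inner_conj_symm, huR r hrR, map_zero]
        have h4 : (inner ℂ u (z₁ - r) : ℂ) = 0 := by
          rw [inner_sub_right, h2, h3, sub_zero]
        rwa [← hu] at h4
      exact inner_self_eq_zero.mp h1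
    have : z₁ = r := by rw [← sub_eq_zero]; exact hu0
    rw [this]
    exact (Submodule.orthogonalProjectionOnto R z₁).2
  have hsurj : ∀ z, ∃ v, (C' - (lam : ℂ) • (1 : H →L[ℂ] H)) v = z := by
    intro z
    set zF : H := (Submodule.orthogonalProjectionOnto F z : H) with hzF
    have hzFF : zF ∈ F := (Submodule.orthogonalProjectionOnto F z).2
    set z₁ : H := z - zF with hz₁
    have hz₁F : z₁ ∈ Fᗮ := Submodule.sub_starProjection_mem_orthogonal z
    obtain ⟨w, hw⟩ := hFperp_sub z₁ hz₁F
    set f' : H := Φ w + zF with hf'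
    have hf'F : f' ∈ F := Submodule.add_mem _ (hΦF w) hzFF
    refine ⟨w - S f', ?_⟩
    have hSf'E : T' (S f') = 0 := by
      have h0 : T f' = 0 := hf'F
      rw [← hST, h0, map_zero]
    rw [map_sub, hD'eq, hD'eq, (show T' w = z₁ from hw), hSf'E, hΦS f' hf'F, hf', hz₁]
    abel
  -- the kernel element
  intro y hyE
  by_contra hyW
  have hyW' : y ∉ W := by
    intro hmem
    apply hyW
    obtain ⟨x, hxF, hxy⟩ := hmem
    exact ⟨x, hxF, hxy⟩
  set q : H := y - (Submodule.orthogonalProjectionOnto W y : H) with hq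
  have hqW : q ∈ Wᗮ := Submodule.sub_starProjection_mem_orthogonal y
  have hqE : q ∈ E := Submodule.sub_mem _ hyE (hWE (Submodule.orthogonalProjectionOnto W y).2)
  have hq0 : q ≠ 0 := by
    intro h
    apply hyW'
    have : y = (Submodule.orthogonalProjectionOnto W y : H) := by rw [← sub_eq_zero]; exact h
    rw [this]
    exact (Submodule.orthogonalProjectionOnto W y).2
  have hD'q : (C' - (lam : ℂ) • (1 : H →L[ℂ] H)) q = 0 := by
    rw [hD'eq]
    have h1 : T' q = 0 := hqE
    have h2 : Φ q = 0 := by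
      rw [hΦapp]
      have h3 : PW q = 0 := by
        have := Submodule.orthogonalProjectionOnto_apply_of_mem_orthogonal hqW
        simpa [hPW] using this
      rw [h3, map_zero, Submodule.coe_zero]
    rw [h1, h2, sub_zero]
  exact aux_surj_inj C' hC'comp hlamC hsurj hD'q hq0
end

section
/- There exist a compact positive operator S on the Hilbert space ℓ²(ℕ, ℂ) (self-adjoint with ⟨S x, x⟩ > 0 for every x ≠ 0, hence injective) and a bounded self-adjoint operator A on ℓ²(ℕ, ℂ) such that the composition S ∘ A has a nontrivial kernel while the composition A ∘ S is injective. Consequently, K := S ∘ A is a compact operator symmetrizable by S whose kernel is nontrivial, whose adjoint K* = A ∘ S is injective, and in particular the range of K* is not dense in ℓ²(ℕ, ℂ). -/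
open ContinuousLinearMap Filter Topology Finset

open scoped ENNReal
noncomputable section
abbrev Hs := lp (fun _ : ℕ => ℂ) 2

lemma sq_summable (x : Hs) : Summable fun n => ‖x n‖ ^ (2:ℝ) := by
  have hx := (lp.memℓp x).summable (p := 2) (by norm_num)
  simpa using hx

lemma mul_norm_le {c : ℕ → ℂ} {M : ℝ} (hc : ∀ n, ‖c n‖ ≤ M) (x : Hs) (n : ℕ) :
    ‖c n * x n‖ ≤ M * ‖x n‖ := by
  rw [norm_mul]; gcongr; exact hc n

lemma memℓp_mul {c : ℕ → ℂ} (hc : ∀ n, ‖c n‖ ≤ 1) (x : Hs) :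
    Memℓp (fun n => c n * x n) 2 := by
  apply memℓp_gen
  have hx := sq_summable x
  rw [show ((2:ℝ≥0∞).toReal) = (2:ℝ) from by norm_num]
  refine hx.of_nonneg_of_le (fun n => by positivity) (fun n => ?_)
  refine Real.rpow_le_rpow (norm_nonneg _) ?_ (by norm_num)
  simpa using mul_norm_le hc x n

/-- the underlying linear diagonal map -/
def diagLin (c : ℕ → ℂ) (hc : ∀ n, ‖c n‖ ≤ 1) : Hs →ₗ[ℂ] Hs where
  toFun x := ⟨fun n => c n * x n, memℓp_mul hc x⟩
  map_add' x y := by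
    ext n
    simp [lp.coeFn_add, mul_add]
    rfl
  map_smul' a x := by
    ext n
    simp [lp.coeFn_smul, Pi.smul_apply, smul_eq_mul]
    ring

lemma diagLin_apply (c : ℕ → ℂ) (hc : ∀ n, ‖c n‖ ≤ 1) (x : Hs) (n : ℕ) :
    (diagLin c hc x : ∀ _ : ℕ, ℂ) n = c n * x n := rfl

lemma diagLin_norm_le (c : ℕ → ℂ) (hc : ∀ n, ‖c n‖ ≤ 1) {M : ℝ} (hM : 0 ≤ M)
    (hcM : ∀ n, ‖c n‖ ≤ M) (x : Hs) : ‖diagLin c hc x‖ ≤ M * ‖x‖ := by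
  refine lp.norm_le_of_forall_sum_le (by norm_num) (by positivity) (fun s => ?_)
  have h1 : ∀ n ∈ s, ‖(diagLin c hc x : ∀ _ : ℕ, ℂ) n‖ ^ (2:ℝ≥0∞).toReal
      ≤ M ^ (2:ℝ) * ‖x n‖ ^ (2:ℝ) := by
    intro n _
    rw [show ((2:ℝ≥0∞).toReal) = (2:ℝ) from by norm_num, diagLin_apply]
    calc ‖c n * x n‖ ^ (2:ℝ) ≤ (M * ‖x n‖) ^ (2:ℝ) :=
          Real.rpow_le_rpow (norm_nonneg _) (mul_norm_le hcM x n) (by norm_num)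
      _ = M ^ (2:ℝ) * ‖x n‖ ^ (2:ℝ) := Real.mul_rpow hM (norm_nonneg _)
  calc ∑ n ∈ s, ‖(diagLin c hc x : ∀ _ : ℕ, ℂ) n‖ ^ (2:ℝ≥0∞).toReal
      ≤ ∑ n ∈ s, M ^ (2:ℝ) * ‖x n‖ ^ (2:ℝ) := Finset.sum_le_sum h1
    _ = M ^ (2:ℝ) * ∑ n ∈ s, ‖x n‖ ^ (2:ℝ) := by rw [Finset.mul_sum]
    _ ≤ M ^ (2:ℝ) * ‖x‖ ^ (2:ℝ) := by
        refine mul_le_mul_of_nonneg_left ?_ (Real.rpow_nonneg hM _)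
        simpa using lp.sum_rpow_le_norm_rpow (p := 2) (by norm_num) x s
    _ = (M * ‖x‖) ^ (2:ℝ≥0∞).toReal := by
        rw [show ((2:ℝ≥0∞).toReal) = (2:ℝ) from by norm_num,
          Real.mul_rpow hM (norm_nonneg _)]

/-- diagonal operator with coefficients bounded by 1 -/
def diag (c : ℕ → ℂ) (hc : ∀ n, ‖c n‖ ≤ 1) : Hs →L[ℂ] Hs :=
  LinearMap.mkContinuous (diagLin c hc) 1 (fun x => by
    simpa using diagLin_norm_le c hc zero_le_one hc x)

lemma diag_apply (c : ℕ → ℂ) (hc : ∀ n, ‖c n‖ ≤ 1) (x : Hs) (n : ℕ) :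
    (diag c hc x : ∀ _ : ℕ, ℂ) n = c n * x n := rfl

lemma diag_opNorm_le (c : ℕ → ℂ) (hc : ∀ n, ‖c n‖ ≤ 1) {M : ℝ} (hM : 0 ≤ M)
    (hcM : ∀ n, ‖c n‖ ≤ M) : ‖diag c hc‖ ≤ M :=
  ContinuousLinearMap.opNorm_le_bound _ hM (diagLin_norm_le c hc hM hcM)

/-- coordinate evaluation as a CLM -/
def coordCLM (n : ℕ) : Hs →L[ℂ] ℂ :=
  LinearMap.mkContinuous
    { toFun := fun x => x n
      map_add' := fun x y => by simp [lp.coeFn_add]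
      map_smul' := fun a x => by simp [lp.coeFn_smul] }
    1 (fun x => by rw [one_mul]; exact lp.norm_apply_le_norm (by norm_num) x n)

lemma isCompact_smul_fixed (v : Hs) : IsCompactOperator (fun z : ℂ => z • v) := by
  refine ⟨(fun z : ℂ => z • v) '' Metric.closedBall 0 1,
    (isCompact_closedBall 0 1).image (by continuity), ?_⟩
  exact Filter.mem_of_superset (Metric.closedBall_mem_nhds 0 one_pos)
    (Set.subset_preimage_image _ _)

lemma isCompact_rankOne (n : ℕ) (v : Hs) :
    IsCompactOperator (⇑((coordCLM n).smulRight v)) := by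
  have := (isCompact_smul_fixed v).comp_clm (coordCLM n)
  exact this

def dC : ℕ → ℂ := fun n => ((((n:ℝ)+1)⁻¹ : ℝ) : ℂ)

lemma dC_norm (n : ℕ) : ‖dC n‖ = ((n:ℝ)+1)⁻¹ := by
  rw [dC, Complex.norm_real, Real.norm_eq_abs, abs_of_pos (by positivity)]

lemma dC_le_one : ∀ n, ‖dC n‖ ≤ 1 := by
  intro n
  rw [dC_norm]
  rw [inv_le_one_iff₀]
  right; linarith [Nat.cast_nonneg (α := ℝ) n]

def truncC (N : ℕ) : ℕ → ℂ := fun n => if n < N then dC n else 0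

lemma truncC_le_one (N : ℕ) : ∀ n, ‖truncC N n‖ ≤ 1 := by
  intro n
  by_cases h : n < N
  · simpa [truncC, h] using dC_le_one n
  · simp [truncC, h]

def subC (N : ℕ) : ℕ → ℂ := fun n => dC n - truncC N n

lemma subC_le (N : ℕ) : ∀ n, ‖subC N n‖ ≤ ((N:ℝ)+1)⁻¹ := by
  intro n
  by_cases h : n < N
  · simp only [subC, truncC, if_pos h, sub_self, norm_zero]
    positivity
  · simp only [subC, truncC, if_neg h, sub_zero, dC_norm]
    apply inv_anti₀ (by positivity)
    have : N ≤ n := le_of_not_gt h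
    have := Nat.cast_le (α := ℝ).mpr this
    linarith

lemma subC_le_one (N : ℕ) : ∀ n, ‖subC N n‖ ≤ 1 :=
  fun n => (subC_le N n).trans (by
    rw [inv_le_one_iff₀]; right; linarith [Nat.cast_nonneg (α := ℝ) N])

def SOp : Hs →L[ℂ] Hs := diag dC dC_le_one
def SN (N : ℕ) : Hs →L[ℂ] Hs := diag (truncC N) (truncC_le_one N)

lemma SN_eq (N : ℕ) :
    SN N = ∑ n ∈ Finset.range N, (coordCLM n).smulRight (dC n • lp.single 2 n (1:ℂ)) := by
  ext x m
  have h1 : ((∑ n ∈ Finset.range N, (coordCLM n).smulRight (dC n • lp.single 2 n (1:ℂ))) x : ∀ _ : ℕ, ℂ) m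
      = ∑ n ∈ Finset.range N, (x n • (dC n • lp.single 2 n (1:ℂ)) : Hs) m := by
    rw [ContinuousLinearMap.sum_apply]
    rw [lp.coeFn_sum]
    simp [coordCLM, smulRight_apply, LinearMap.mkContinuous_apply]
    rfl
  rw [h1]
  have h2 : ∀ n, (x n • (dC n • lp.single 2 n (1:ℂ)) : Hs) m
      = x n * dC n * (if m = n then 1 else 0) := by
    intro n
    rw [lp.coeFn_smul, Pi.smul_apply, lp.coeFn_smul, Pi.smul_apply]
    by_cases h : m = n
    · subst h; rw [lp.single_apply_self]; simp [smul_eq_mul]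
    · rw [lp.single_apply_ne 2 n _ h]; simp [h]
  simp_rw [h2]
  rw [Finset.sum_mul_boole]
  show truncC N m * x m = _
  by_cases h : m < N <;> simp [truncC, h, mul_comm]

lemma SN_compact (N : ℕ) : IsCompactOperator (⇑(SN N)) := by
  rw [SN_eq]
  refine Finset.sum_induction _ (fun T : Hs →L[ℂ] Hs => IsCompactOperator ⇑T)
    (fun a b ha hb => ?_) ?_ (fun n _ => isCompact_rankOne n _)
  · have := ha.add hb
    simpa [ContinuousLinearMap.coe_add'] using this
  · simpa using isCompactOperator_zero

lemma SOp_sub_SN (N : ℕ) : SOp - SN N = diag (subC N) (subC_le_one N) := by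
  ext x m
  show (SOp x : ∀ _ : ℕ, ℂ) m - (SN N x : ∀ _ : ℕ, ℂ) m = _
  show dC m * x m - truncC N m * x m = (dC m - truncC N m) * x m
  ring

lemma SOp_norm_sub (N : ℕ) : ‖SOp - SN N‖ ≤ ((N:ℝ)+1)⁻¹ := by
  rw [SOp_sub_SN]
  exact diag_opNorm_le _ _ (by positivity) (subC_le N)

lemma SN_tendsto : Tendsto SN atTop (𝓝 SOp) := by
  rw [tendsto_iff_norm_sub_tendsto_zero]
  refine squeeze_zero (g := fun N : ℕ => ((N:ℝ)+1)⁻¹) (fun N => norm_nonneg _) (fun N => ?_) ?_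
  · rw [norm_sub_rev]; exact SOp_norm_sub N
  · simpa [one_div] using tendsto_one_div_add_atTop_nhds_zero_nat (𝕜 := ℝ)

lemma SOp_compact : IsCompactOperator (⇑SOp) :=
  isCompactOperator_of_tendsto SN_tendsto (Filter.Eventually.of_forall SN_compact)

lemma SOp_apply (x : Hs) (n : ℕ) : (SOp x : ∀ _ : ℕ, ℂ) n = dC n * x n := rfl

lemma conj_dC (n : ℕ) : (starRingEnd ℂ) (dC n) = dC n := by
  simp [dC]

lemma SOp_symm : (SOp : Hs →ₗ[ℂ] Hs).IsSymmetric := by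
  intro x y
  rw [lp.inner_eq_tsum, lp.inner_eq_tsum]
  refine tsum_congr fun n => ?_
  simp only [RCLike.inner_apply, ContinuousLinearMap.coe_coe, SOp_apply, map_mul, conj_dC]
  ring

lemma SOp_selfAdjoint : IsSelfAdjoint SOp :=
  ContinuousLinearMap.isSelfAdjoint_iff_isSymmetric.mpr SOp_symm

lemma SOp_pos (x : Hs) (hx : x ≠ 0) : 0 < (inner ℂ (SOp x) x : ℂ).re := by
  have hsum : Summable fun n => (inner ℂ ((SOp x : ∀ _ : ℕ, ℂ) n) (x n) : ℂ) :=
    lp.summable_inner (SOp x) x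
  have h1 : (inner ℂ (SOp x) x : ℂ) = ∑' n, (inner ℂ ((SOp x : ∀ _ : ℕ, ℂ) n) (x n) : ℂ) :=
    lp.inner_eq_tsum _ _
  have hterm : ∀ n, (inner ℂ ((SOp x : ∀ _ : ℕ, ℂ) n) (x n) : ℂ)
      = (((((n:ℝ)+1)⁻¹ * ‖x n‖^2 : ℝ)) : ℂ) := by
    intro n
    simp only [RCLike.inner_apply, SOp_apply, map_mul, conj_dC]
    rw [mul_left_comm, RCLike.mul_conj]
    simp only [dC]
    push_cast
    ring_nf
    norm_cast
  rw [h1, Complex.re_tsum hsum]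
  have hre : ∀ n, (inner ℂ ((SOp x : ∀ _ : ℕ, ℂ) n) (x n) : ℂ).re
      = ((n:ℝ)+1)⁻¹ * ‖x n‖^2 := fun n => by rw [hterm n]; exact Complex.ofReal_re _
  have hsumre : Summable fun n => (inner ℂ ((SOp x : ∀ _ : ℕ, ℂ) n) (x n) : ℂ).re :=
    (Complex.hasSum_iff _ _).mp hsum.hasSum |>.1.summable
  obtain ⟨n0, hn0⟩ : ∃ n, x n ≠ 0 := by
    by_contra h
    push_neg at h
    exact hx (by ext n; simpa using h n)
  refine Summable.tsum_pos hsumre (fun n => ?_) n0 ?_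
  · rw [hre]; positivity
  · rw [hre]
    have : 0 < ‖x n0‖ := norm_pos_iff.mpr hn0
    positivity

lemma memℓp_dC : Memℓp dC 2 := by
  apply memℓp_gen
  rw [show ((2:ℝ≥0∞).toReal) = (2:ℝ) from by norm_num]
  have h0 : Summable (fun n : ℕ => ((n:ℝ) ^ (2:ℝ))⁻¹) :=
    Real.summable_nat_rpow_inv.mpr one_lt_two
  have h1 := (summable_nat_add_iff 1).mpr h0
  refine h1.congr fun n => ?_
  rw [dC_norm, ← Real.inv_rpow (by positivity)]
  push_cast
  ring_nf

def vv : Hs := ⟨dC, memℓp_dC⟩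

lemma vv_ne : vv ≠ 0 := by
  intro h
  have : (vv : ∀ _ : ℕ, ℂ) 0 = 0 := by rw [h]; rfl
  simp [vv, dC] at this

def POp : Hs →L[ℂ] Hs := (innerSL ℂ vv).smulRight vv

lemma POp_apply (x : Hs) : POp x = (inner ℂ vv x : ℂ) • vv := rfl

lemma POp_symm : (POp : Hs →ₗ[ℂ] Hs).IsSymmetric := by
  intro x y
  simp only [ContinuousLinearMap.coe_coe, POp_apply, inner_smul_left, inner_smul_right,
    inner_conj_symm]
  ring

def tC : ℂ := ((‖vv‖^2)⁻¹ : ℝ)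

def AOp : Hs →L[ℂ] Hs := 1 - tC • POp

lemma AOp_symm : (AOp : Hs →ₗ[ℂ] Hs).IsSymmetric := by
  intro x y
  simp only [AOp, ContinuousLinearMap.coe_coe, ContinuousLinearMap.sub_apply,
    ContinuousLinearMap.smul_apply, ContinuousLinearMap.one_apply, inner_sub_left,
    inner_sub_right, inner_smul_left, inner_smul_right]
  have h := POp_symm x y
  simp only [ContinuousLinearMap.coe_coe] at h
  rw [show (starRingEnd ℂ) tC = tC from by simp [tC], h]

lemma AOp_selfAdjoint : IsSelfAdjoint AOp :=
  ContinuousLinearMap.isSelfAdjoint_iff_isSymmetric.mpr AOp_symm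

lemma AOp_vv : AOp vv = 0 := by
  have hnorm : (inner ℂ vv vv : ℂ) = (‖vv‖:ℂ)^2 := inner_self_eq_norm_sq_to_K vv
  have hv : ‖vv‖ ≠ 0 := norm_ne_zero_iff.mpr vv_ne
  simp only [AOp, ContinuousLinearMap.sub_apply, ContinuousLinearMap.smul_apply,
    ContinuousLinearMap.one_apply, POp_apply, hnorm]
  rw [smul_smul]
  have : tC * (‖vv‖:ℂ)^2 = 1 := by
    simp only [tC]
    push_cast
    rw [inv_mul_cancel₀]
    exact_mod_cast pow_ne_zero 2 hv
  rw [this, one_smul, sub_self]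

lemma dC_ne (n : ℕ) : dC n ≠ 0 := by
  simp only [dC, ne_eq, Complex.ofReal_eq_zero]
  positivity

lemma ker_SA : LinearMap.ker ((SOp ∘L AOp : Hs →L[ℂ] Hs) : Hs →ₗ[ℂ] Hs) ≠ ⊥ := by
  intro h
  have hv : vv ∈ LinearMap.ker ((SOp ∘L AOp : Hs →L[ℂ] Hs) : Hs →ₗ[ℂ] Hs) := by
    rw [LinearMap.mem_ker]
    show SOp (AOp vv) = 0
    rw [AOp_vv, map_zero]
  rw [h, Submodule.mem_bot] at hv
  exact vv_ne hv

lemma ker_AS : LinearMap.ker ((AOp ∘L SOp : Hs →L[ℂ] Hs) : Hs →ₗ[ℂ] Hs) = ⊥ := by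
  rw [eq_bot_iff]
  intro x hx
  rw [LinearMap.mem_ker] at hx
  have hx' : AOp (SOp x) = 0 := hx
  have hS : SOp x = (tC * (inner ℂ vv (SOp x) : ℂ)) • vv := by
    have : SOp x - tC • (inner ℂ vv (SOp x) : ℂ) • vv = 0 := by
      simpa [AOp, POp_apply] using hx'
    rw [sub_eq_zero] at this
    rw [smul_smul] at this
    exact this
  set c : ℂ := tC * (inner ℂ vv (SOp x) : ℂ) with hc
  have hcomp : ∀ n, (x : ∀ _ : ℕ, ℂ) n = c := by
    intro n
    have := congrArg (fun y : Hs => (y : ∀ _ : ℕ, ℂ) n) hS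
    simp only [SOp_apply, lp.coeFn_smul, Pi.smul_apply, smul_eq_mul] at this
    have hvn : (vv : ∀ _ : ℕ, ℂ) n = dC n := rfl
    rw [hvn] at this
    rw [mul_comm (dC n) ((x : ∀ _ : ℕ, ℂ) n), mul_comm c (dC n), mul_comm (dC n) c] at this
    exact mul_right_cancel₀ (dC_ne n) this
  have hsum : Summable (fun _ : ℕ => ‖c‖ ^ (2:ℝ)) := by
    refine (sq_summable x).congr fun n => ?_
    rw [hcomp n]
  have hc0 : c = 0 := by
    rw [summable_const_iff] at hsum
    have h0 : ‖c‖ = 0 := (Real.rpow_eq_zero (norm_nonneg c) (by norm_num)).mp hsum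
    exact norm_eq_zero.mp h0
  have : x = 0 := by
    ext n
    rw [hcomp n, hc0]
    rfl
  rw [Submodule.mem_bot]
  exact this

end

/-- On `ℓ²(ℕ, ℂ)` there exist a compact positive operator `S` and a bounded self-adjoint
operator `A` such that `K = S ∘ A` has nontrivial kernel while `K* = A ∘ S` is injective;
hence `K` is a compact operator symmetrizable by `S` whose adjoint has non-dense range. -/
theorem stmt4 :
    ∃ S A : lp (fun _ : ℕ => ℂ) 2 →L[ℂ] lp (fun _ : ℕ => ℂ) 2,
      IsCompactOperator (⇑S) ∧
      IsSelfAdjoint S ∧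
      (∀ x : lp (fun _ : ℕ => ℂ) 2, x ≠ 0 → 0 < (inner ℂ (S x) x : ℂ).re) ∧
      IsSelfAdjoint A ∧
      LinearMap.ker ((S ∘L A : lp (fun _ : ℕ => ℂ) 2 →L[ℂ] lp (fun _ : ℕ => ℂ) 2) :
        lp (fun _ : ℕ => ℂ) 2 →ₗ[ℂ] lp (fun _ : ℕ => ℂ) 2) ≠ ⊥ ∧
      LinearMap.ker ((A ∘L S : lp (fun _ : ℕ => ℂ) 2 →L[ℂ] lp (fun _ : ℕ => ℂ) 2) :
        lp (fun _ : ℕ => ℂ) 2 →ₗ[ℂ] lp (fun _ : ℕ => ℂ) 2) = ⊥ ∧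
      IsCompactOperator (⇑(S ∘L A)) ∧
      adjoint (S ∘L A) = A ∘L S ∧
      S ∘L adjoint (S ∘L A) = (S ∘L A) ∘L S ∧
      ¬ Dense ((LinearMap.range ((A ∘L S : lp (fun _ : ℕ => ℂ) 2 →L[ℂ] lp (fun _ : ℕ => ℂ) 2) :
            lp (fun _ : ℕ => ℂ) 2 →ₗ[ℂ] lp (fun _ : ℕ => ℂ) 2) : Submodule ℂ (lp (fun _ : ℕ => ℂ) 2)) :
          Set (lp (fun _ : ℕ => ℂ) 2)) := by
  have hadj : adjoint (SOp ∘L AOp) = AOp ∘L SOp := by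
    rw [ContinuousLinearMap.adjoint_comp, SOp_selfAdjoint.adjoint_eq, AOp_selfAdjoint.adjoint_eq]
  refine ⟨SOp, AOp, SOp_compact, SOp_selfAdjoint, SOp_pos, AOp_selfAdjoint, ker_SA, ker_AS,
    ?_, hadj, ?_, ?_⟩
  · have := SOp_compact.comp_clm AOp
    exact this
  · rw [hadj, ContinuousLinearMap.comp_assoc]
  · intro hdense
    have hv : vv ∈ (LinearMap.range ((AOp ∘L SOp : Hs →L[ℂ] Hs) : Hs →ₗ[ℂ] Hs) : Submodule ℂ Hs)ᗮ := by
      rw [Submodule.mem_orthogonal]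
      rintro u ⟨x, rfl⟩
      show (inner ℂ ((AOp ∘L SOp) x) vv : ℂ) = 0
      have h := AOp_symm (SOp x) vv
      simp only [ContinuousLinearMap.coe_coe] at h
      calc (inner ℂ ((AOp ∘L SOp) x) vv : ℂ) = inner ℂ (SOp x) (AOp vv) := h
        _ = 0 := by rw [AOp_vv, inner_zero_right]
    have htop := Submodule.dense_iff_topologicalClosure_eq_top.mp hdense
    rw [Submodule.topologicalClosure_eq_top_iff] at htop
    rw [htop, Submodule.mem_bot] at hv
    exact vv_ne hv
end

section
/- Let K be a nonzero compact operator on a complex Hilbert space H, symmetrizable by a positive operator S, with eigen-data (λ_n, f_n, g_n) satisfying the completeness hypothesis. Assume in addition that the range of K is contained in the range of √S. Then for every x ∈ H the series Σ_n λ_n ⟨x, g_n⟩ f_n converges in H to K* x, and the series Σ_n λ_n ⟨x, f_n⟩ g_n converges in H to K x. -/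
open ContinuousLinearMap Filter Topology Finset

/-- Strong convergence of the spectral resolution of a compact symmetrizable operator `K`
(with eigen-data `λ_n, f_n, g_n = S f_n`, `(√S f_n)` orthonormal, completeness hypothesis),
under the range condition `range K ⊆ range √S`:
`K* x = Σ λ_n ⟨x, g_n⟩ f_n` and `K x = Σ λ_n ⟨x, f_n⟩ g_n` for every `x`. -/
theorem stmt5
    {H : Type*} [NormedAddCommGroup H] [InnerProductSpace ℂ H] [CompleteSpace H]
    (S K : H →L[ℂ] H)
    (hS_sa : IsSelfAdjoint S)
    (hS_pos : ∀ x : H, x ≠ 0 → 0 < (inner ℂ (S x) x : ℂ).re)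
    (hK : S ∘L adjoint K = K ∘L S)
    (hK_compact : IsCompactOperator (⇑K))
    (hK_ne : K ≠ 0)
    -- `R` is the positive square root of `S`
    (R : H →L[ℂ] H)
    (hR_sa : IsSelfAdjoint R)
    (hR_pos : ∀ x : H, 0 ≤ (inner ℂ (R x) x : ℂ).re)
    (hR_sq : R ∘L R = S)
    -- eigen-data
    (lam : ℕ → ℝ) (hlam : ∀ n, lam n ≠ 0)
    (f : ℕ → H) (hf : ∀ n, adjoint K (f n) = (lam n : ℂ) • f n)
    (g : ℕ → H) (hg : ∀ n, g n = S (f n))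
    (horth : Orthonormal ℂ (fun n => R (f n)))
    -- completeness hypothesis
    (hcomplete : ∀ x : H, R (adjoint K x) ∈
      (Submodule.span ℂ (Set.range fun n => R (f n))).topologicalClosure)
    -- range condition
    (hrange : LinearMap.range (K : H →ₗ[ℂ] H) ≤ LinearMap.range (R : H →ₗ[ℂ] H)) :
    ∀ x : H,
      Tendsto (fun N => ∑ n ∈ Finset.range N, ((lam n : ℂ) * inner ℂ (g n) x) • f n)
        atTop (𝓝 (adjoint K x)) ∧
      Tendsto (fun N => ∑ n ∈ Finset.range N, ((lam n : ℂ) * inner ℂ (f n) x) • g n)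
        atTop (𝓝 (K x)) := by
  classical
  have hRadj : adjoint R = R := hR_sa
  -- R is injective
  have hRinj : Function.Injective R := by
    intro a b hab
    by_contra hne
    have hy0 : a - b ≠ 0 := sub_ne_zero.mpr hne
    have hy : R (a - b) = 0 := by rw [map_sub, hab, sub_self]
    have h1 : (inner ℂ (S (a - b)) (a - b) : ℂ) = inner ℂ (R (a - b)) (R (a - b)) := by
      rw [← hR_sq]
      show (inner ℂ (R (R (a - b))) (a - b) : ℂ) = _
      nth_rewrite 1 [← hRadj]
      rw [ContinuousLinearMap.adjoint_inner_left]
    have hp := hS_pos (a - b) hy0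
    rw [h1, hy] at hp
    simp at hp
  -- construct B with R ∘ B = K
  have hKmem : ∀ y : H, ∃ z, R z = K y := by
    intro y
    obtain ⟨z, hz⟩ := hrange (LinearMap.mem_range.2 ⟨y, rfl⟩)
    exact ⟨z, hz⟩
  choose Bf hBf using hKmem
  have hadd : ∀ a b, Bf (a + b) = Bf a + Bf b := by
    intro a b
    apply hRinj
    rw [hBf, map_add, map_add, hBf, hBf]
  have hsmul : ∀ (c : ℂ) a, Bf (c • a) = c • Bf a := by
    intro c a
    apply hRinj
    rw [hBf, map_smul, map_smul, hBf]
  let Bl : H →ₗ[ℂ] H :=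
    { toFun := Bf, map_add' := hadd, map_smul' := hsmul }
  have hBcont : Continuous Bl := by
    apply Bl.continuous_of_seq_closed_graph
    intro u x y hu hBu
    apply hRinj
    have h1 : Tendsto (fun n => K (u n)) atTop (𝓝 (K x)) := (K.continuous.tendsto x).comp hu
    have h2 : Tendsto (fun n => R (Bl (u n))) atTop (𝓝 (R y)) :=
      (R.continuous.tendsto y).comp hBu
    have heq : (fun n => R (Bl (u n))) = fun n => K (u n) := funext fun n => hBf (u n)
    rw [heq] at h2
    have h3 : R y = K x := tendsto_nhds_unique h2 h1
    rw [h3]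
    exact (hBf x).symm
  let B : H →L[ℂ] H := ⟨Bl, hBcont⟩
  have hBapp : ∀ y : H, R (B y) = K y := fun y => hBf y
  have hRB : R ∘L B = K := ContinuousLinearMap.ext fun y => hBapp y
  have hKadj : adjoint K = adjoint B ∘L R := by
    rw [← hRB, ContinuousLinearMap.adjoint_comp, hRadj]
  -- eigen-relations for B
  have hBadj_e : ∀ n, adjoint B (R (f n)) = (lam n : ℂ) • f n := by
    intro n
    have h := congrArg (fun T : H →L[ℂ] H => T (f n)) hKadj
    simp only [ContinuousLinearMap.comp_apply] at h
    rw [← h]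
    exact hf n
  have hgR : ∀ n, g n = R (R (f n)) := by
    intro n
    rw [hg n, ← hR_sq]
    rfl
  -- the closed subspace M
  set M : Submodule ℂ H :=
    (Submodule.span ℂ (Set.range fun n => R (f n))).topologicalClosure with hM
  have hMclosed : IsClosed (M : Set H) := Submodule.isClosed_topologicalClosure _
  haveI : CompleteSpace M := hMclosed.completeSpace_coe
  -- B maps everything into M
  have hBS : ∀ y : H, B (S y) ∈ M := by
    intro y
    have h1 : R (B (S y)) = R (R (adjoint K y)) := by
      rw [hBapp]
      have h := congrArg (fun T : H →L[ℂ] H => T y) hK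
      simp only [ContinuousLinearMap.comp_apply] at h
      rw [← h, ← hR_sq]
      rfl
    have h2 : B (S y) = R (adjoint K y) := hRinj h1
    rw [h2]
    exact hcomplete y
  have hSdense : Dense (Set.range S : Set H) := by
    have hbot : (LinearMap.range (S : H →ₗ[ℂ] H))ᗮ = ⊥ := by
      rw [Submodule.eq_bot_iff]
      intro u hu
      by_contra hu0
      have hz : (inner ℂ (S u) u : ℂ) = 0 :=
        Submodule.inner_right_of_mem_orthogonal
          (K := LinearMap.range (S : H →ₗ[ℂ] H)) ⟨u, rfl⟩ hu
      have hp := hS_pos u hu0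
      rw [hz] at hp
      simp at hp
    have htop : (LinearMap.range (S : H →ₗ[ℂ] H)).topologicalClosure = ⊤ :=
      Submodule.topologicalClosure_eq_top_iff.mpr hbot
    have hcl : closure ((LinearMap.range (S : H →ₗ[ℂ] H) : Submodule ℂ H) : Set H) = Set.univ := by
      rw [← Submodule.topologicalClosure_coe, htop]
      rfl
    rw [dense_iff_closure_eq]
    have hrg : (Set.range S : Set H) = ((LinearMap.range (S : H →ₗ[ℂ] H) : Submodule ℂ H) : Set H) := by
      ext z; simp [LinearMap.mem_range]
    rw [hrg, hcl]
  have hBmem : ∀ y : H, B y ∈ M := by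
    intro y
    have hy : y ∈ closure (Set.range S : Set H) := by
      rw [hSdense.closure_eq]; trivial
    have hmem : B y ∈ closure (B '' Set.range S) :=
      image_closure_subset_closure_image B.continuous (Set.mem_image_of_mem B hy)
    apply hMclosed.closure_subset_iff.mpr ?_ hmem
    rintro z ⟨w, ⟨v, rfl⟩, rfl⟩
    exact hBS v
  -- Hilbert basis of M
  have hmemM : ∀ n, R (f n) ∈ M := fun n =>
    Submodule.le_topologicalClosure _ (Submodule.subset_span ⟨n, rfl⟩)
  let e : ℕ → M := fun n => ⟨R (f n), hmemM n⟩
  have he_orth : Orthonormal ℂ e := by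
    rw [orthonormal_iff_ite]
    rw [orthonormal_iff_ite] at horth
    intro i j
    exact horth i j
  have hdense : ⊤ ≤ (Submodule.span ℂ (Set.range e)).topologicalClosure := by
    intro m _
    have himg : (Subtype.val '' ((Submodule.span ℂ (Set.range e) : Submodule ℂ M) : Set M))
        = ((Submodule.span ℂ (Set.range fun n => R (f n)) : Submodule ℂ H) : Set H) := by
      have h0 : Subtype.val '' ((Submodule.span ℂ (Set.range e) : Submodule ℂ M) : Set M)
          = (((Submodule.span ℂ (Set.range e)).map M.subtype : Submodule ℂ H) : Set H) := by
        rw [Submodule.map_coe]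
        rfl
      rw [h0, Submodule.map_span]
      congr 1
      rw [← Set.range_comp]
      rfl
    have hm : (m : H) ∈ closure ((Submodule.span ℂ (Set.range fun n => R (f n)) :
        Submodule ℂ H) : Set H) := by
      exact m.2
    have hgoal : m ∈ closure ((Submodule.span ℂ (Set.range e) : Submodule ℂ M) : Set M) := by
      rw [closure_subtype, himg]
      exact hm
    exact hgoal
  let b : HilbertBasis ℕ ℂ M := HilbertBasis.mk he_orth hdense
  have hb : ∀ n, (b n : H) = R (f n) := fun n => by
    rw [HilbertBasis.coe_mk]
  -- adjoint B annihilates Mᗮ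
  have hBadj_orth : ∀ u : H, u ∈ Mᗮ → adjoint B u = 0 := by
    intro u hu
    apply ext_inner_right ℂ
    intro y
    rw [ContinuousLinearMap.adjoint_inner_left, inner_zero_left]
    exact Submodule.inner_left_of_mem_orthogonal (hBmem y) hu
  intro x
  -- expansion of orthogonal projections
  have hsum0 : ∀ z : H, HasSum (fun n => (inner ℂ (R (f n)) z : ℂ) • R (f n))
      ((M.orthogonalProjectionOnto z : M) : H) := by
    intro z
    have h := (b.hasSum_orthogonalProjection z).mapL M.subtypeL
    have heq : (fun n => M.subtypeL ((inner ℂ ((b n : M) : H) z : ℂ) • b n))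
        = fun n => (inner ℂ (R (f n)) z : ℂ) • R (f n) := by
      funext n
      rw [map_smul]
      simp only [Submodule.subtypeL_apply, hb n]
    rw [heq] at h
    exact h
  constructor
  · -- K* x
    have h1 := (hsum0 (R x)).mapL (adjoint B)
    have heq : (fun n => adjoint B ((inner ℂ (R (f n)) (R x) : ℂ) • R (f n)))
        = fun n => ((lam n : ℂ) * inner ℂ (g n) x) • f n := by
      funext n
      rw [map_smul, hBadj_e n, smul_smul, mul_comm]
      congr 2
      rw [hgR n, ← ContinuousLinearMap.adjoint_inner_left, hRadj]
    rw [heq] at h1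
    have h3 : adjoint B ((M.orthogonalProjectionOnto (R x) : M) : H) = adjoint K x := by
      have hperp : R x - ((M.orthogonalProjectionOnto (R x) : M) : H) ∈ Mᗮ :=
        Submodule.sub_starProjection_mem_orthogonal (K := M) (R x)
      have h0 := hBadj_orth _ hperp
      rw [map_sub, sub_eq_zero] at h0
      rw [← h0, hKadj]
      rfl
    rw [h3] at h1
    exact h1.tendsto_sum_nat
  · -- K x
    have hproj : ((M.orthogonalProjectionOnto (B x) : M) : H) = B x :=
      Submodule.starProjection_eq_self_iff.mpr (hBmem x)
    have h1 := hsum0 (B x)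
    rw [hproj] at h1
    have h2 := h1.mapL R
    rw [hBapp x] at h2
    have heq : (fun n => R ((inner ℂ (R (f n)) (B x) : ℂ) • R (f n)))
        = fun n => ((lam n : ℂ) * inner ℂ (f n) x) • g n := by
      funext n
      rw [map_smul, ← hgR n]
      congr 1
      rw [← ContinuousLinearMap.adjoint_inner_left, hBadj_e n, inner_smul_left]
      simp [Complex.conj_ofReal]
    rw [heq] at h2
    exact h2.tendsto_sum_nat
end

section
/- Let S be a compact positive operator and A a bounded self-adjoint operator on a complex Hilbert space H, and set K := S ∘ A (so K* = A ∘ S). Given eigen-data (λ_n, f_n, g_n) satisfying the completeness hypothesis, the finite-rank operators Σ_{n<N} λ_n ⟨·, f_n⟩ g_n converge to K in operator norm as N → ∞, and the finite-rank operators Σ_{n<N} λ_n ⟨·, g_n⟩ f_n converge to K* in operator norm as N → ∞. -/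
/-!
Write `R = √S`, `e n = R (f n)` and let `M` be the closed span of the `e n`. The completeness
hypothesis says that the range of `R A S` lies in `M`, so the adjoint `S A R` vanishes on `Mᗮ`; as
`S` is injective, `A R` vanishes on `Mᗮ` and `K* = A R Q R` with `Q` the orthogonal projection
onto `M`. The `N`-th partial sum for `K*` is `A R P_N R` with `P_N` the projection onto the span
of `e 0, …, e (N-1)`. Since `W = Q - P_N` is an orthogonal projection, the C⋆-identity gives
`‖R W R‖ ≤ ‖W S‖`, and `‖W S‖ → 0` because `W → 0` strongly and `S` is compact. The statement
for `K` follows by taking adjoints.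
-/

open ContinuousLinearMap Filter Topology InnerProductSpace

section CompactOperator

variable {𝕜 E F G : Type*} [NontriviallyNormedField 𝕜] [NormedAlgebra ℝ 𝕜]
  [NormedAddCommGroup E] [NormedSpace 𝕜 E] [NormedAddCommGroup F] [NormedSpace 𝕜 F]
  [NormedAddCommGroup G] [NormedSpace 𝕜 G]

theorem IsCompactOperator.tendsto_comp_of_tendsto_apply {ι : Type*} {l : Filter ι}
    {S : E →L[𝕜] F} (hS : IsCompactOperator S) {W : ι → F →L[𝕜] G} {C : ℝ}
    (hWC : ∀ i, ‖W i‖ ≤ C) (hW : ∀ y, Tendsto (fun i => W i y) l (𝓝 0)) :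
    Tendsto (fun i => W i ∘L S) l (𝓝 0) := by
  rw [Metric.tendsto_nhds]
  intro ε hε
  set δ := ε / (4 * (|C| + 1))
  have hCδ : |C| * δ ≤ ε / 4 := by
    rw [mul_div, div_le_div_iff₀ (by positivity) (by positivity)]
    nlinarith [abs_nonneg C]
  obtain ⟨t, ht, hnet⟩ := Metric.totallyBounded_iff.mp
    ((hS.isCompact_closure_image_closedBall 1).totallyBounded.subset subset_closure) δ
    (by positivity)
  have hsmall : ∀ᶠ i in l, ∀ y ∈ t, ‖W i y‖ < ε / 4 :=
    (eventually_all_finite ht).2 fun y _ => by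
      simpa using (hW y).eventually (Metric.ball_mem_nhds 0 (by positivity : 0 < ε / 4))
  filter_upwards [hsmall] with i hi
  rw [dist_zero_right]
  refine lt_of_le_of_lt (opNorm_le_of_unit_norm (by positivity) fun x hx => ?_) (half_lt_self hε)
  obtain ⟨y, hyt, hxy⟩ := Set.mem_iUnion₂.mp (hnet ⟨x, mem_closedBall_zero_iff.2 hx.le, rfl⟩)
  have hnear : ‖W i (S x - y)‖ ≤ |C| * δ := by
    rw [Metric.mem_ball, dist_eq_norm] at hxy
    calc ‖W i (S x - y)‖ ≤ ‖W i‖ * ‖S x - y‖ := (W i).le_opNorm _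
      _ ≤ |C| * δ :=
        mul_le_mul ((hWC i).trans (le_abs_self C)) hxy.le (norm_nonneg _) (abs_nonneg C)
  calc ‖(W i ∘L S) x‖ = ‖W i (S x - y) + W i y‖ := by simp
    _ ≤ ε / 2 := by linarith [norm_add_le (W i (S x - y)) (W i y), hi y hyt]

end CompactOperator

theorem IsStarProjection.norm_mul_mul_le {R : Type*} [NormedRing R] [StarRing R] [CStarRing R]
    {p r : R} (hp : IsStarProjection p) (hr : IsSelfAdjoint r) :
    ‖r * p * r‖ ≤ ‖p * (r * r)‖ := by
  have hstar : star (p * r) = r * p := by rw [star_mul, hr.star_eq, hp.isSelfAdjoint.star_eq]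
  calc ‖r * p * r‖ = ‖star (p * r) * (p * r)‖ := by
        rw [hstar, ← mul_assoc, mul_assoc r p p, hp.isIdempotentElem.eq]
    _ = ‖p * (r * r) * p‖ := by
        rw [CStarRing.norm_star_mul_self, ← CStarRing.norm_self_mul_star, hstar]
        simp only [mul_assoc]
    _ ≤ ‖p * (r * r)‖ * ‖p‖ := norm_mul_le _ _
    _ ≤ ‖p * (r * r)‖ := mul_le_of_le_one_right (norm_nonneg _) (hp.norm_le p)

section

variable {𝕜 E : Type*} [RCLike 𝕜] [NormedAddCommGroup E] [InnerProductSpace 𝕜 E]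

theorem Orthonormal.starProjection_span_eq_sum_rankOne [DecidableEq E] {ι : Type*} {v : ι → E}
    (hv : Orthonormal 𝕜 v) (s : Finset ι) :
    (Submodule.span 𝕜 (s.image v : Set E)).starProjection = ∑ i ∈ s, rankOne 𝕜 (v i) (v i) := by
  rw [(OrthonormalBasis.span hv s).starProjection_eq_sum_rankOne]
  simp only [OrthonormalBasis.span_apply]
  exact Finset.sum_coe_sort s (fun i => rankOne 𝕜 (v i) (v i))

theorem Submodule.iSup_span_image_range [DecidableEq E] (v : ℕ → E) :
    ⨆ N, Submodule.span 𝕜 ((Finset.range N).image v : Set E) = Submodule.span 𝕜 (Set.range v) := by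
  rw [← Submodule.span_iUnion]
  congr 1
  ext x
  simp only [Set.mem_iUnion, Finset.coe_image, Set.mem_image, Finset.coe_range, Set.mem_Iio,
    Set.mem_range]
  exact ⟨fun ⟨_, n, _, hn⟩ => ⟨n, hn⟩, fun ⟨n, hn⟩ => ⟨n + 1, n, n.lt_succ_self, hn⟩⟩

theorem ContinuousLinearMap.comp_starProjection_eq_self {F : Type*} [NormedAddCommGroup F]
    [InnerProductSpace 𝕜 F] {T : E →L[𝕜] F} {K : Submodule 𝕜 E} [K.HasOrthogonalProjection]
    (h : Kᗮ ≤ T.ker) : T ∘L K.starProjection = T := by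
  ext x
  have := h (K.sub_starProjection_mem_orthogonal x)
  rw [LinearMap.mem_ker, map_sub, sub_eq_zero] at this
  exact this.symm

theorem injective_of_forall_re_inner_pos {T : E →L[𝕜] E}
    (hT : ∀ x, x ≠ 0 → 0 < RCLike.re (inner 𝕜 (T x) x)) : Function.Injective T := by
  refine (injective_iff_map_eq_zero T).2 fun x hx => ?_
  by_contra hx0
  simpa [hx] using hT x hx0

variable [CompleteSpace E]

theorem mul_sum_rankOne_mul_eq {ι : Type*} {A R : E →L[𝕜] E} (hR : IsSelfAdjoint R) {c : ι → 𝕜}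
    {f : ι → E} (hf : ∀ i, A (R (R (f i))) = c i • f i) (s : Finset ι) :
    A * R * (∑ i ∈ s, rankOne 𝕜 (R (f i)) (R (f i))) * R =
      ∑ i ∈ s, c i • rankOne 𝕜 (f i) (R (R (f i))) := by
  rw [Finset.mul_sum, Finset.sum_mul]
  refine Finset.sum_congr rfl fun i _ => ?_
  rw [mul_def, mul_def, mul_def, comp_rankOne, rankOne_comp, hR.adjoint_eq, comp_apply, hf,
    map_smul, smul_apply]

theorem Orthonormal.tendsto_sum_rankOne_apply {v : ℕ → E} (hv : Orthonormal 𝕜 v) (x : E) :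
    Tendsto (fun N => (∑ n ∈ Finset.range N, rankOne 𝕜 (v n) (v n)) x) atTop
      (𝓝 ((Submodule.span 𝕜 (Set.range v)).topologicalClosure.starProjection x)) := by
  classical
  have hmono : Monotone fun N => Submodule.span 𝕜 ((Finset.range N).image v : Set E) :=
    fun _ _ h => Submodule.span_mono (by gcongr)
  have := Submodule.starProjection_tendsto_closure_iSup _ hmono x
  simp only [Submodule.iSup_span_image_range, hv.starProjection_span_eq_sum_rankOne] at this
  simpa using this

theorem Orthonormal.isStarProjection_starProjection_sub_sum_rankOne {ι : Type*} {v : ι → E}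
    (hv : Orthonormal 𝕜 v) (s : Finset ι) :
    IsStarProjection ((Submodule.span 𝕜 (Set.range v)).topologicalClosure.starProjection -
      ∑ i ∈ s, rankOne 𝕜 (v i) (v i)) := by
  classical
  rw [← hv.starProjection_span_eq_sum_rankOne]
  refine isStarProjection_starProjection.sub_of_mul_eq_left isStarProjection_starProjection
    (Submodule.starProjection_comp_starProjection_of_le ?_)
  exact (Submodule.span_mono (by simp)).trans (Submodule.le_topologicalClosure _)

theorem orthogonal_le_ker_mul_of_range_mul_le {S A R : E →L[𝕜] E} (hS : IsSelfAdjoint S)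
    (hA : IsSelfAdjoint A) (hR : IsSelfAdjoint R) (hS_inj : Function.Injective S)
    {M : Submodule 𝕜 E} (hM : (R * A * S).range ≤ M) : Mᗮ ≤ (A * R).ker := by
  have hadj : adjoint (R * A * S) = S * A * R := by
    rw [← star_eq_adjoint, star_mul, star_mul, hR.star_eq, hA.star_eq, hS.star_eq, mul_assoc]
  intro y hy
  have hSARy : S (A (R y)) = 0 := by
    have := (Submodule.orthogonal_le hM).trans (orthogonal_range _).le hy
    rwa [hadj] at this
  exact (map_eq_zero_iff S hS_inj).1 hSARy

theorem tendsto_mul_mul_of_isCompactOperator {ι : Type*} {l : Filter ι}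
    {a r q : E →L[𝕜] E} {p : ι → E →L[𝕜] E} (hr : IsSelfAdjoint r)
    (hrr : IsCompactOperator (r * r))
    (hpq : ∀ i, IsStarProjection (q - p i)) (hp : ∀ x, Tendsto (fun i => p i x) l (𝓝 (q x))) :
    Tendsto (fun i => a * r * p i * r) l (𝓝 (a * r * q * r)) := by
  have hcomp : Tendsto (fun i => (q - p i) ∘L (r * r)) l (𝓝 0) :=
    IsCompactOperator.tendsto_comp_of_tendsto_apply hrr (fun i => (hpq i).norm_le _) fun x => by
      simpa using (hp x).const_sub (q x)
  rw [tendsto_iff_norm_sub_tendsto_zero]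
  refine squeeze_zero (fun _ => norm_nonneg _) (fun i => ?_)
    (by simpa using hcomp.norm.const_mul ‖a‖)
  calc ‖a * r * p i * r - a * r * q * r‖ = ‖a * (r * (q - p i) * r)‖ := by
        rw [← norm_neg]; congr 1; noncomm_ring
    _ ≤ ‖a‖ * ‖r * (q - p i) * r‖ := norm_mul_le _ _
    _ ≤ ‖a‖ * ‖(q - p i) ∘L (r * r)‖ := by gcongr; exact (hpq i).norm_mul_mul_le hr

end

theorem stmt6_general
    {H : Type*} [NormedAddCommGroup H] [InnerProductSpace ℂ H] [CompleteSpace H]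
    (S A : H →L[ℂ] H)
    (hS_sa : IsSelfAdjoint S)
    (hS_pos : ∀ x : H, x ≠ 0 → 0 < (inner ℂ (S x) x : ℂ).re)
    (hS_compact : IsCompactOperator (⇑S))
    (hA_sa : IsSelfAdjoint A)
    -- `R` is the positive square root of `S`
    (R : H →L[ℂ] H)
    (hR_sa : IsSelfAdjoint R)
    (hR_sq : R ∘L R = S)
    -- eigen-data for `K = S ∘L A`
    (lam : ℕ → ℝ)
    (f : ℕ → H) (hf : ∀ n, adjoint (S ∘L A) (f n) = (lam n : ℂ) • f n)
    (g : ℕ → H) (hg : ∀ n, g n = S (f n))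
    (horth : Orthonormal ℂ (fun n => R (f n)))
    -- completeness hypothesis
    (hcomplete : ∀ x : H, R (adjoint (S ∘L A) x) ∈
      (Submodule.span ℂ (Set.range fun n => R (f n))).topologicalClosure) :
    Tendsto (fun N => ∑ n ∈ Finset.range N,
        (lam n : ℂ) • (innerSL ℂ (f n)).smulRight (g n)) atTop (𝓝 (S ∘L A)) ∧
    Tendsto (fun N => ∑ n ∈ Finset.range N,
        (lam n : ℂ) • (innerSL ℂ (g n)).smulRight (f n)) atTop (𝓝 (adjoint (S ∘L A))) := by
  set e : ℕ → H := fun n => R (f n)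
  set M := (Submodule.span ℂ (Set.range e)).topologicalClosure
  have hS : S = R * R := hR_sq.symm
  have hK : adjoint (S ∘L A) = A * S := by
    rw [adjoint_comp, hA_sa.adjoint_eq, hS_sa.adjoint_eq, mul_def]
  have hker : Mᗮ ≤ (A * R).ker := by
    refine orthogonal_le_ker_mul_of_range_mul_le hS_sa hA_sa hR_sa
      (injective_of_forall_re_inner_pos hS_pos) ?_
    rintro _ ⟨x, rfl⟩
    simpa [hK] using hcomplete x
  have hKQ : adjoint (S ∘L A) = A * R * M.starProjection * R := by
    rw [hK, hS, ← mul_assoc, mul_def (A * R) M.starProjection, comp_starProjection_eq_self hker]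
  have hsum : ∀ N, ∑ n ∈ Finset.range N, (lam n : ℂ) • (innerSL ℂ (g n)).smulRight (f n) =
      A * R * (∑ n ∈ Finset.range N, rankOne ℂ (e n) (e n)) * R := fun N => by
    simp only [hg, hS]
    exact (mul_sum_rankOne_mul_eq hR_sa (fun n => by rw [← hf, hK, hS]; rfl) _).symm
  have hK_adj : Tendsto (fun N => ∑ n ∈ Finset.range N,
      (lam n : ℂ) • (innerSL ℂ (g n)).smulRight (f n)) atTop (𝓝 (adjoint (S ∘L A))) := by
    simp_rw [hsum, hKQ]
    exact tendsto_mul_mul_of_isCompactOperator hR_sa (hS ▸ hS_compact)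
      (fun N => horth.isStarProjection_starProjection_sub_sum_rankOne _)
      horth.tendsto_sum_rankOne_apply
  refine ⟨?_, hK_adj⟩
  simpa only [Function.comp_def, map_sum, ← rankOne_def, map_smulₛₗ, adjoint_rankOne,
    Complex.conj_ofReal, adjoint_adjoint] using
    ((adjoint : (H →L[ℂ] H) ≃ₗᵢ⋆[ℂ] (H →L[ℂ] H)).continuous.tendsto _).comp hK_adj

/-- Operator-norm convergence of the spectral resolution for a symmetrizable operator
`K = S ∘ A` with `S` compact positive and `A` bounded self-adjoint:
`K = Σ λ_n ⟨·, f_n⟩ g_n` and `K* = Σ λ_n ⟨·, g_n⟩ f_n` in operator norm. -/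
theorem stmt6
    {H : Type*} [NormedAddCommGroup H] [InnerProductSpace ℂ H] [CompleteSpace H]
    (S A : H →L[ℂ] H)
    (hS_sa : IsSelfAdjoint S)
    (hS_pos : ∀ x : H, x ≠ 0 → 0 < (inner ℂ (S x) x : ℂ).re)
    (hS_compact : IsCompactOperator (⇑S))
    (hA_sa : IsSelfAdjoint A)
    -- `R` is the positive square root of `S`
    (R : H →L[ℂ] H)
    (hR_sa : IsSelfAdjoint R)
    (hR_pos : ∀ x : H, 0 ≤ (inner ℂ (R x) x : ℂ).re)
    (hR_sq : R ∘L R = S)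
    -- eigen-data for `K = S ∘L A`
    (lam : ℕ → ℝ) (hlam : ∀ n, lam n ≠ 0)
    (f : ℕ → H) (hf : ∀ n, adjoint (S ∘L A) (f n) = (lam n : ℂ) • f n)
    (g : ℕ → H) (hg : ∀ n, g n = S (f n))
    (horth : Orthonormal ℂ (fun n => R (f n)))
    -- completeness hypothesis
    (hcomplete : ∀ x : H, R (adjoint (S ∘L A) x) ∈
      (Submodule.span ℂ (Set.range fun n => R (f n))).topologicalClosure) :
    Tendsto (fun N => ∑ n ∈ Finset.range N,
        (lam n : ℂ) • (innerSL ℂ (f n)).smulRight (g n)) atTop (𝓝 (S ∘L A)) ∧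
    Tendsto (fun N => ∑ n ∈ Finset.range N,
        (lam n : ℂ) • (innerSL ℂ (g n)).smulRight (f n)) atTop (𝓝 (adjoint (S ∘L A))) :=
  stmt6_general S A hS_sa hS_pos hS_compact hA_sa R hR_sa hR_sq lam f hf g hg horth hcomplete
end

section
/- Let K be a bounded operator on a complex Hilbert space H that is symmetrizable by a positive operator S (S K* = K S with S > 0). Then for every x ∈ H, the real part of ⟨S (K* x), x⟩ satisfies Re⟨S (K* x), x⟩ ≤ ‖K*‖ · Re⟨S x, x⟩ (note that both ⟨S(K* x), x⟩ and ⟨S x, x⟩ are in fact real, since S K* and S are self-adjoint). -/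
open ContinuousLinearMap Filter Topology Finset

/-- Cauchy–Schwarz for the semi-inner product `⟨S·,·⟩` attached to a positive operator. -/
lemma krein_cs
    {H : Type*} [NormedAddCommGroup H] [InnerProductSpace ℂ H] [CompleteSpace H]
    (S : H →L[ℂ] H)
    (hS_sa : IsSelfAdjoint S)
    (hS_pos : ∀ x : H, x ≠ 0 → 0 < (inner ℂ (S x) x : ℂ).re)
    (u x : H) :
    ‖(inner ℂ (S u) x : ℂ)‖ ^ 2 ≤ (inner ℂ (S u) u : ℂ).re * (inner ℂ (S x) x : ℂ).re := by
  have hnn : ∀ y : H, 0 ≤ (inner ℂ (S y) y : ℂ).re := by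
    intro y
    rcases eq_or_ne y 0 with rfl | hy
    · simp
    · exact (hS_pos y hy).le
  rcases eq_or_ne x 0 with rfl | hx
  · simp
  have hq : 0 < (inner ℂ (S x) x : ℂ).re := hS_pos x hx
  set q : ℝ := (inner ℂ (S x) x : ℂ).re with hqd
  set p : ℂ := inner ℂ (S u) x with hp
  have hxu : (inner ℂ (S x) u : ℂ) = (starRingEnd ℂ) p := by
    rw [hp, ← inner_conj_symm, ← adjoint_inner_left, hS_sa.adjoint_eq]
  set w : H := (q : ℂ) • u - (starRingEnd ℂ) p • x with hw
  have hww : (inner ℂ (S w) w : ℂ) =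
      ((q ^ 2 : ℝ) : ℂ) * inner ℂ (S u) u - ((2 * q * ‖p‖ ^ 2 : ℝ) : ℂ)
        + ((‖p‖ ^ 2 : ℝ) : ℂ) * inner ℂ (S x) x := by
    simp only [hw, map_sub, map_smul, inner_sub_left, inner_sub_right,
      inner_smul_left, inner_smul_right, hxu, Complex.conj_conj, Complex.conj_ofReal,
      map_mul]
    push_cast
    linear_combination ((inner ℂ (S x) x : ℂ) - 2 * (q : ℂ)) * Complex.mul_conj' p
  have h0 : 0 ≤ (inner ℂ (S w) w : ℂ).re := hnn w
  rw [hww] at h0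
  simp only [Complex.add_re, Complex.sub_re, Complex.re_ofReal_mul, Complex.ofReal_re] at h0
  have hA : 0 ≤ (inner ℂ (S u) u : ℂ).re := hnn u
  nlinarith [h0, hq, hA, norm_nonneg p]

/-- **Krein's inequality.** If `K` is symmetrizable by a positive operator `S`
(`S K* = K S`, `S > 0`), then `Re⟨S (K* x), x⟩ ≤ ‖K*‖ · Re⟨S x, x⟩` for every `x`. -/
theorem stmt8
    {H : Type*} [NormedAddCommGroup H] [InnerProductSpace ℂ H] [CompleteSpace H]
    (S K : H →L[ℂ] H)
    (hS_sa : IsSelfAdjoint S)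
    (hS_pos : ∀ x : H, x ≠ 0 → 0 < (inner ℂ (S x) x : ℂ).re)
    (hK : S ∘L adjoint K = K ∘L S) :
    ∀ x : H, (inner ℂ (S (adjoint K x)) x : ℂ).re ≤ ‖adjoint K‖ * (inner ℂ (S x) x : ℂ).re := by
  intro x
  set T : H →L[ℂ] H := adjoint K with hT
  rcases eq_or_ne x 0 with rfl | hx
  · simp
  have ha : 0 < (inner ℂ (S x) x : ℂ).re := hS_pos x hx
  set a : ℝ := (inner ℂ (S x) x : ℂ).re with haa
  -- powers intertwine
  have hpow : ∀ n : ℕ, S ∘L (T ^ n) = (K ^ n) ∘L S := by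
    intro n
    induction n with
    | zero => simp [ContinuousLinearMap.one_def]
    | succ n ih =>
      rw [pow_succ', pow_succ']
      calc S ∘L (T ∘L (T ^ n)) = (S ∘L T) ∘L (T ^ n) := by rw [comp_assoc]
        _ = K ∘L (S ∘L (T ^ n)) := by rw [hK, comp_assoc]
        _ = K ∘L ((K ^ n) ∘L S) := by rw [ih]
        _ = (K ∘L (K ^ n)) ∘L S := by rw [comp_assoc]
  have hadj : ∀ m : ℕ, adjoint (K ^ m) = T ^ m := by
    intro m
    rw [hT, ← star_eq_adjoint, ← star_eq_adjoint, star_pow]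
  have key : ∀ (m : ℕ) (y : H), (inner ℂ (S ((T ^ m) y)) x : ℂ) = inner ℂ (S y) ((T ^ m) x) := by
    intro m y
    have h1 : S ((T ^ m) y) = (K ^ m) (S y) := by
      have := congrArg (fun A : H →L[ℂ] H => A y) (hpow m)
      simpa using this
    rw [h1, ← hadj m, adjoint_inner_right]
  -- the normalized sequence
  set c : ℕ → ℝ := fun m => (inner ℂ (S ((T ^ m) x)) x : ℂ).re / a with hc
  have hsq : ∀ m : ℕ, c m ^ 2 ≤ c (2 * m) := by
    intro m
    have hcs := krein_cs S hS_sa hS_pos ((T ^ m) x) x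
    have hTm : (T ^ (2 * m)) x = (T ^ m) ((T ^ m) x) := by
      rw [two_mul, pow_add]; rfl
    have hb : (inner ℂ (S ((T ^ m) x)) x : ℂ).re ^ 2
        ≤ (inner ℂ (S ((T ^ (2 * m)) x)) x : ℂ).re * a := by
      rw [hTm, key m ((T ^ m) x)]
      calc (inner ℂ (S ((T ^ m) x)) x : ℂ).re ^ 2
          ≤ ‖(inner ℂ (S ((T ^ m) x)) x : ℂ)‖ ^ 2 := by
            rw [← sq_abs]
            exact pow_le_pow_left₀ (abs_nonneg _) (Complex.abs_re_le_norm _) 2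
        _ ≤ _ := hcs
    simp only [hc]
    rw [div_pow, div_le_div_iff₀ (by positivity) ha]
    nlinarith [hb, ha]
  -- goal reduces to `c 1 ≤ ‖T‖`
  have hgoal : (inner ℂ (S (T x)) x : ℂ).re = c 1 * a := by
    simp only [hc, pow_one]
    rw [div_mul_cancel₀ _ ha.ne']
  rcases le_or_gt (c 1) 0 with h1 | h1
  · rw [show (adjoint K x) = T x from rfl, hgoal]
    have h2 : c 1 * a ≤ 0 := mul_nonpos_of_nonpos_of_nonneg h1 ha.le
    exact h2.trans (by positivity)
  -- iterate
  have hiter : ∀ n : ℕ, c 1 ^ (2 ^ n) ≤ c (2 ^ n) := by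
    intro n
    induction n with
    | zero => simp
    | succ n ih =>
      calc c 1 ^ 2 ^ (n + 1) = (c 1 ^ 2 ^ n) ^ 2 := by
            rw [← pow_mul]; ring_nf
        _ ≤ (c (2 ^ n)) ^ 2 := pow_le_pow_left₀ (pow_nonneg h1.le _) ih 2
        _ ≤ c (2 * 2 ^ n) := hsq (2 ^ n)
        _ = c (2 ^ (n + 1)) := by ring_nf
  -- operator norm bound for powers
  have hTn : ∀ m : ℕ, ‖T ^ m‖ ≤ ‖T‖ ^ m := by
    intro m
    induction m with
    | zero => rw [pow_zero, pow_zero]; exact norm_id_le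
    | succ n ih =>
      calc ‖T ^ (n + 1)‖ = ‖T ^ n * T‖ := by rw [pow_succ]
        _ ≤ ‖T ^ n‖ * ‖T‖ := norm_mul_le _ _
        _ ≤ ‖T‖ ^ n * ‖T‖ := by gcongr
        _ = ‖T‖ ^ (n + 1) := by rw [pow_succ]
  -- upper bound on c
  set M : ℝ := ‖S‖ * ‖x‖ ^ 2 / a with hM
  have hbound : ∀ m : ℕ, c m ≤ M * ‖T‖ ^ m := by
    intro m
    have h1' : (inner ℂ (S ((T ^ m) x)) x : ℂ).re ≤ ‖S‖ * ‖T‖ ^ m * ‖x‖ ^ 2 := by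
      calc (inner ℂ (S ((T ^ m) x)) x : ℂ).re ≤ ‖(inner ℂ (S ((T ^ m) x)) x : ℂ)‖ :=
            Complex.re_le_norm _
        _ ≤ ‖S ((T ^ m) x)‖ * ‖x‖ := norm_inner_le_norm _ _
        _ ≤ (‖S‖ * ‖(T ^ m) x‖) * ‖x‖ := by gcongr; exact le_opNorm S _
        _ ≤ (‖S‖ * (‖T ^ m‖ * ‖x‖)) * ‖x‖ := by gcongr; exact le_opNorm _ _
        _ ≤ (‖S‖ * (‖T‖ ^ m * ‖x‖)) * ‖x‖ := by gcongr ?_ * ‖x‖; gcongr; exact hTn m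
        _ = ‖S‖ * ‖T‖ ^ m * ‖x‖ ^ 2 := by ring
    simp only [hc, hM]
    rw [div_mul_eq_mul_div, div_le_div_iff₀ ha ha]
    nlinarith [h1', ha]
  have hfinal : c 1 ≤ ‖T‖ := by
    by_contra hcon
    push_neg at hcon
    rcases eq_or_lt_of_le (norm_nonneg T) with hT0 | hT0
    · have h2 := hsq 1
      have h3 := hbound 2
      rw [← hT0] at h3
      norm_num at h3
      nlinarith [h1, h2, h3]
    · set r : ℝ := c 1 / ‖T‖ with hr
      have hr1 : 1 < r := (one_lt_div hT0).mpr hcon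
      obtain ⟨n, hn⟩ := pow_unbounded_of_one_lt M hr1
      have hle : r ^ n ≤ r ^ (2 ^ n) :=
        pow_le_pow_right₀ hr1.le (Nat.le_of_lt (Nat.lt_two_pow_self (n := n)))
      have h3 : c 1 ^ (2 ^ n) ≤ M * ‖T‖ ^ (2 ^ n) := (hiter n).trans (hbound (2 ^ n))
      have h4 : r ^ (2 ^ n) ≤ M := by
        rw [hr, div_pow, div_le_iff₀ (by positivity)]
        exact h3
      linarith [hn.trans_le hle]
  rw [show (adjoint K x) = T x from rfl, hgoal]
  exact mul_le_mul_of_nonneg_right hfinal ha.le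
end

section
/- Let S be a compact positive operator and A a bounded self-adjoint operator on a complex Hilbert space H, and set K := S ∘ A (so K* = A ∘ S). Let [a, b] be a closed real interval with a ≤ 0 ≤ b containing the spectrum of K*. Then for every polynomial p with real coefficients, ‖p(K*)‖ ≤ |p(0)| + ‖A‖ · ‖S‖ · sup_{t ∈ [a,b]} |p'(t)|, where p(K*) denotes the operator obtained by substituting K* into p. -/
open ContinuousLinearMap Filter Topology Finset

set_option maxHeartbeats 1000000 in
/-- Norm bound for the polynomial functional calculus of `K* = A ∘ S`
(`S` compact positive, `A` bounded self-adjoint): if `[a,b] ∋ 0` contains the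
spectrum of `K*`, then for every real polynomial `p`:
`‖p(K*)‖ ≤ |p(0)| + ‖A‖ ‖S‖ sup_{t ∈ [a,b]} |p'(t)|`. -/
theorem stmt9
    {H : Type*} [NormedAddCommGroup H] [InnerProductSpace ℂ H] [CompleteSpace H]
    (S A : H →L[ℂ] H)
    (hS_sa : IsSelfAdjoint S)
    (hS_pos : ∀ x : H, x ≠ 0 → 0 < (inner ℂ (S x) x : ℂ).re)
    (hS_compact : IsCompactOperator (⇑S))
    (hA_sa : IsSelfAdjoint A)
    (a b : ℝ) (ha : a ≤ 0) (hb : 0 ≤ b)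
    (hspec : ∀ z ∈ spectrum ℂ (adjoint (S ∘L A)), ∃ t : ℝ, t ∈ Set.Icc a b ∧ z = (t : ℂ))
    (p : Polynomial ℝ) :
    ‖Polynomial.aeval (adjoint (S ∘L A)) (Polynomial.map (algebraMap ℝ ℂ) p)‖ ≤
      |Polynomial.eval 0 p| +
        ‖A‖ * ‖S‖ * sSup ((fun t => |Polynomial.eval t (Polynomial.derivative p)|) ''
          Set.Icc a b) := by
  -- Notation
  set M : ℝ := sSup ((fun t => |Polynomial.eval t (Polynomial.derivative p)|) '' Set.Icc a b)
    with hM_def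
  have h0ab : (0 : ℝ) ∈ Set.Icc a b := ⟨ha, hb⟩
  have hbdd : BddAbove ((fun t => |Polynomial.eval t (Polynomial.derivative p)|) '' Set.Icc a b) :=
    (isCompact_Icc.image (continuous_abs.comp (Polynomial.continuous _))).bddAbove
  have hM : ∀ t ∈ Set.Icc a b, |Polynomial.eval t (Polynomial.derivative p)| ≤ M :=
    fun t ht => le_csSup hbdd ⟨t, ht, rfl⟩
  have hM0 : 0 ≤ M := le_trans (abs_nonneg _) (hM 0 h0ab)
  -- S is positive
  have hSpos : (0 : H →L[ℂ] H) ≤ S := by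
    rw [ContinuousLinearMap.nonneg_iff_isPositive]
    refine ⟨hS_sa.isSymmetric, fun x => ?_⟩
    rcases eq_or_ne x 0 with rfl | hx
    · simp [ContinuousLinearMap.reApplyInnerSelf]
    · exact le_of_lt (by simpa [ContinuousLinearMap.reApplyInnerSelf] using hS_pos x hx)
  -- square root
  set R : H →L[ℂ] H := CFC.sqrt S with hR_def
  have hRR : R * R = S := CFC.sqrt_mul_sqrt_self S hSpos
  have hR_nonneg : (0 : H →L[ℂ] H) ≤ R := CFC.sqrt_nonneg S
  have hR_sa : IsSelfAdjoint R := hR_nonneg.isSelfAdjoint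
  -- K' = A * S
  have hK' : adjoint (S ∘L A) = A * S := by
    rw [ContinuousLinearMap.adjoint_comp, hA_sa.adjoint_eq, hS_sa.adjoint_eq]
    rfl
  set K' : H →L[ℂ] H := A * S with hK'_def
  set T : H →L[ℂ] H := R * A * R with hT_def
  have hT_sa : IsSelfAdjoint T := by
    simp only [hT_def, IsSelfAdjoint, star_mul]
    rw [hR_sa.star_eq, hA_sa.star_eq, mul_assoc]
  -- intertwining: R * K' = T * R
  have hRK : R * K' = T * R := by
    rw [hK'_def, hT_def, ← hRR]; noncomm_ring
  have hRKn : ∀ n : ℕ, R * K' ^ n = T ^ n * R := by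
    intro n
    induction n with
    | zero => simp
    | succ n ih =>
      rw [pow_succ', pow_succ', ← mul_assoc, hRK, mul_assoc, ih, ← mul_assoc]
  have hRq : ∀ q : Polynomial ℝ, R * Polynomial.aeval K' q = Polynomial.aeval T q * R := by
    intro q
    rw [Polynomial.aeval_eq_sum_range (R := ℝ) (p := q) K',
      Polynomial.aeval_eq_sum_range (R := ℝ) (p := q) T, Finset.mul_sum, Finset.sum_mul]
    refine Finset.sum_congr rfl fun i _ => ?_
    rw [mul_smul_comm, smul_mul_assoc, hRKn]
  -- decompose p
  set q : Polynomial ℝ := p.divX with hq_def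
  have hpq : Polynomial.X * q + Polynomial.C (p.coeff 0) = p := Polynomial.X_mul_divX_add p
  -- spectrum of T is contained in [a, b]
  have hspecT : ∀ x ∈ spectrum ℝ T, x ∈ Set.Icc a b := by
    intro x hx
    rcases eq_or_ne x 0 with rfl | hx0
    · exact h0ab
    · have hxC : (x : ℂ) ∈ spectrum ℂ T := by
        rw [show ((x : ℂ)) = algebraMap ℝ ℂ x from rfl, spectrum.algebraMap_mem_iff]
        exact hx
      have hmem : (x : ℂ) ∈ spectrum ℂ (R * (A * R)) \ {0} := by
        refine ⟨by rwa [← mul_assoc], by simpa using hx0⟩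
      rw [spectrum.nonzero_mul_comm] at hmem
      have hKmem : (x : ℂ) ∈ spectrum ℂ K' := by
        have h' := hmem.1
        have : A * R * R = K' := by rw [hK'_def, mul_assoc, hRR]
        rwa [this] at h'
      obtain ⟨t, htab, hxt⟩ := hspec (x : ℂ) (by rwa [hK'])
      have : x = t := by exact_mod_cast hxt
      rwa [this]
  -- bound |q x| on the spectrum of T
  have hqb : ∀ x ∈ spectrum ℝ T, |Polynomial.eval x q| ≤ M := by
    intro x hx
    have hxab := hspecT x hx
    rcases eq_or_ne x 0 with rfl | hx0
    · have e1 : Polynomial.eval 0 q = p.coeff 1 := by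
        rw [hq_def, ← Polynomial.coeff_zero_eq_eval_zero, Polynomial.coeff_divX]
      have e2 : Polynomial.eval 0 (Polynomial.derivative p) = p.coeff 1 := by
        rw [← Polynomial.coeff_zero_eq_eval_zero, Polynomial.coeff_derivative]
        simp
      rw [e1, ← e2]
      exact hM 0 h0ab
    · -- mean value theorem
      have hmvt : ‖Polynomial.eval x p - Polynomial.eval 0 p‖ ≤ M * ‖x - 0‖ := by
        refine (convex_Icc a b).norm_image_sub_le_of_norm_hasDerivWithin_le
          (f := fun t => Polynomial.eval t p)
          (f' := fun t => Polynomial.eval t (Polynomial.derivative p)) ?_ ?_ h0ab hxab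
        · exact fun y _ => (Polynomial.hasDerivAt p y).hasDerivWithinAt
        · intro y hy
          simpa using hM y hy
      have hpx : Polynomial.eval x p - Polynomial.eval 0 p = x * Polynomial.eval x q := by
        conv_lhs => rw [← hpq]
        simp [Polynomial.coeff_zero_eq_eval_zero]
      rw [hpx] at hmvt
      rw [Real.norm_eq_abs, Real.norm_eq_abs, abs_mul, sub_zero] at hmvt
      have hxpos : 0 < |x| := abs_pos.mpr hx0
      rw [mul_comm M |x|] at hmvt
      exact le_of_mul_le_mul_left hmvt hxpos
  -- norm of aeval T q
  have hqT : ‖Polynomial.aeval T q‖ ≤ M := by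
    rw [← cfc_polynomial (R := ℝ) q T hT_sa]
    exact norm_cfc_le hM0 (fun x hx => by simpa using hqb x hx)
  -- ‖R‖ * ‖R‖ = ‖S‖
  have hRnorm : ‖R‖ * ‖R‖ = ‖S‖ := by
    have := CStarRing.norm_star_mul_self (x := R)
    rw [hR_sa.star_eq, hRR] at this
    rw [this]
  -- main decomposition
  have hmain : Polynomial.aeval K' p
      = A * (R * (Polynomial.aeval T q * R)) + algebraMap ℝ (H →L[ℂ] H) (p.coeff 0) := by
    conv_lhs => rw [← hpq]
    rw [map_add, Polynomial.aeval_C, Polynomial.aeval_mul, Polynomial.aeval_X]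
    congr 1
    rw [← hRq, ← mul_assoc, ← mul_assoc, hK'_def, ← hRR, mul_assoc A R R]
  -- finish
  have h1 : ‖algebraMap ℝ (H →L[ℂ] H) (p.coeff 0)‖ ≤ |Polynomial.eval 0 p| := by
    calc ‖algebraMap ℝ (H →L[ℂ] H) (p.coeff 0)‖
        = ‖(p.coeff 0) • (1 : H →L[ℂ] H)‖ := by rw [Algebra.algebraMap_eq_smul_one]
      _ ≤ |p.coeff 0| * ‖(1 : H →L[ℂ] H)‖ := by rw [norm_smul, Real.norm_eq_abs]
      _ ≤ |p.coeff 0| * 1 :=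
          mul_le_mul_of_nonneg_left ContinuousLinearMap.norm_id_le (abs_nonneg _)
      _ = |Polynomial.eval 0 p| := by rw [mul_one, Polynomial.coeff_zero_eq_eval_zero]
  have h2 : ‖A * (R * (Polynomial.aeval T q * R))‖ ≤ ‖A‖ * ‖S‖ * M := by
    have e1 : ‖Polynomial.aeval T q * R‖ ≤ M * ‖R‖ :=
      le_trans (norm_mul_le _ _) (mul_le_mul_of_nonneg_right hqT (norm_nonneg _))
    have e2 : ‖R * (Polynomial.aeval T q * R)‖ ≤ ‖R‖ * (M * ‖R‖) :=
      le_trans (norm_mul_le _ _) (mul_le_mul_of_nonneg_left e1 (norm_nonneg _))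
    calc ‖A * (R * (Polynomial.aeval T q * R))‖
        ≤ ‖A‖ * (‖R‖ * (M * ‖R‖)) :=
          le_trans (norm_mul_le _ _) (mul_le_mul_of_nonneg_left e2 (norm_nonneg _))
      _ = ‖A‖ * (‖R‖ * ‖R‖) * M := by ring
      _ = ‖A‖ * ‖S‖ * M := by rw [hRnorm]
  rw [hK', Polynomial.aeval_map_algebraMap, hmain]
  refine le_trans (norm_add_le _ _) ?_
  rw [add_comm]
  exact add_le_add h1 h2
end

section
/- Let K be a nonzero compact operator on a complex Hilbert space H, symmetrizable by a positive operator S, with eigen-data (λ_n, f_n, g_n) satisfying the completeness hypothesis. Let X be a complex Banach space together with an injective continuous linear map ι : X → H with dense range such that ‖ι u‖_H ≤ ‖u‖_X for all u ∈ X, and suppose there exist a linear map T : X → X and a constant γ > 0 such that ι(T u) = K*(ι u) and ‖T u‖_X ≤ γ ‖√S (ι u)‖_H for all u ∈ X. Then every eigenfunction f_n lies in the range of ι, say f_n = ι(φ_n) with φ_n ∈ X, and for every u ∈ X the partial sums Σ_{n<N} λ_n ⟨ι u, g_n⟩ φ_n converge in the norm of X to T u as N → ∞. -/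
open ContinuousLinearMap Filter Topology Finset

local notation "⟪" x ", " y "⟫" => @inner ℂ _ _ x y

/-- Norm of a finite linear combination of an orthonormal family. -/
lemma krein_orthonormal_norm_sum {E : Type*} [NormedAddCommGroup E] [InnerProductSpace ℂ E]
    {v : ℕ → E} (hv : Orthonormal ℂ v) (c : ℕ → ℂ) (s : Finset ℕ) :
    ‖∑ i ∈ s, c i • v i‖ ^ 2 = ∑ i ∈ s, ‖c i‖ ^ 2 := by
  rw [← inner_self_eq_norm_sq (𝕜 := ℂ), hv.inner_sum c c s, RCLike.re_to_complex,
    Complex.re_sum]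
  refine Finset.sum_congr rfl fun i _ => ?_
  rw [mul_comm, Complex.mul_conj]
  rw [Complex.ofReal_re, Complex.normSq_eq_norm_sq]

/-- **Krein's improved spectral resolution.** Let `K` be a nonzero compact operator
symmetrizable by `S > 0` with eigen-data `(λ_n, f_n, g_n)` satisfying the completeness
hypothesis. If `X` is a Banach space continuously and densely embedded into `H` via `ι`,
and `T : X → X` lifts `K*` with `‖T u‖_X ≤ γ ‖√S (ι u)‖`, then each `f_n = ι φ_n` for some
`φ_n ∈ X`, and `Σ_{n<N} λ_n ⟨ι u, g_n⟩ φ_n → T u` in the norm of `X`. -/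
theorem stmt10
    {H : Type*} [NormedAddCommGroup H] [InnerProductSpace ℂ H] [CompleteSpace H]
    {X : Type*} [NormedAddCommGroup X] [NormedSpace ℂ X] [CompleteSpace X]
    (S K : H →L[ℂ] H)
    (hS_sa : IsSelfAdjoint S)
    (hS_pos : ∀ x : H, x ≠ 0 → 0 < (inner ℂ (S x) x : ℂ).re)
    (hK : S ∘L adjoint K = K ∘L S)
    (hK_compact : IsCompactOperator (⇑K))
    (hK_ne : K ≠ 0)
    -- `R` is the positive square root of `S`
    (R : H →L[ℂ] H)
    (hR_sa : IsSelfAdjoint R)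
    (hR_pos : ∀ x : H, 0 ≤ (inner ℂ (R x) x : ℂ).re)
    (hR_sq : R ∘L R = S)
    -- eigen-data
    (lam : ℕ → ℝ) (hlam : ∀ n, lam n ≠ 0)
    (f : ℕ → H) (hf : ∀ n, adjoint K (f n) = (lam n : ℂ) • f n)
    (g : ℕ → H) (hg : ∀ n, g n = S (f n))
    (horth : Orthonormal ℂ (fun n => R (f n)))
    (hcomplete : ∀ x : H, R (adjoint K x) ∈
      (Submodule.span ℂ (Set.range fun n => R (f n))).topologicalClosure)
    -- the embedding `ι : X → H`
    (ι : X →L[ℂ] H)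
    (hι_inj : Function.Injective ι)
    (hι_dense : DenseRange ι)
    (hι_norm : ∀ u : X, ‖ι u‖ ≤ ‖u‖)
    -- the lift `T` of `K*` and the strong continuity condition
    (T : X →ₗ[ℂ] X) (γ : ℝ) (hγ : 0 < γ)
    (hT : ∀ u : X, ι (T u) = adjoint K (ι u))
    (hTbound : ∀ u : X, ‖T u‖ ≤ γ * ‖R (ι u)‖) :
    (∀ n, ∃ φ : X, ι φ = f n) ∧
    ∀ φ : ℕ → X, (∀ n, ι (φ n) = f n) →
      ∀ u : X,
        Tendsto (fun N => ∑ n ∈ Finset.range N, ((lam n : ℂ) * inner ℂ (g n) (ι u)) • φ n)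
          atTop (𝓝 (T u)) := by
  -- Basic facts about `R` and `S`.
  have hR_adj : ∀ x y : H, ⟪R x, y⟫ = ⟪x, R y⟫ := fun x y => by
    conv_lhs => rw [← hR_sa.adjoint_eq]
    exact adjoint_inner_left R y x
  have hSx : ∀ x : H, S x = R (R x) := fun x => by
    rw [← hR_sq]; rfl
  have hR_inj : ∀ x : H, R x = 0 → x = 0 := by
    intro x hx
    by_contra hne
    have h1 := hS_pos x hne
    have h2 : (inner ℂ (S x) x : ℂ).re = ‖R x‖ ^ 2 := by
      rw [hSx, hR_adj, ← RCLike.re_to_complex]; exact inner_self_eq_norm_sq _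
    rw [hx] at h2
    simp only [norm_zero] at h2
    rw [h2] at h1
    norm_num at h1
  -- inner products against `g`
  have hcg : ∀ n (x : H), ⟪g n, x⟫ = ⟪R (f n), R x⟫ := fun n x => by
    rw [hg, hSx, hR_adj]
  have hgf : ∀ m n, ⟪g m, f n⟫ = if m = n then (1 : ℂ) else 0 := fun m n => by
    rw [hcg]; exact orthonormal_iff_ite.mp horth m n
  -- `K g_m = λ_m g_m`
  have hKg : ∀ m, K (g m) = (lam m : ℂ) • g m := by
    intro m
    have h := congrArg (fun A : H →L[ℂ] H => A (f m)) hK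
    simp only [ContinuousLinearMap.comp_apply] at h
    rw [hf, map_smul] at h
    rw [hg, ← h]
  -- the key Cauchy-transfer lemma for `T`
  have T_cauchy : ∀ a : ℕ → X, CauchySeq (fun k => R (ι (a k))) →
      CauchySeq (fun k => T (a k)) := by
    intro a ha
    rw [Metric.cauchySeq_iff] at ha ⊢
    intro ε hε
    obtain ⟨N, hN⟩ := ha (ε / γ) (div_pos hε hγ)
    refine ⟨N, fun m hm k hk => ?_⟩
    calc dist (T (a m)) (T (a k)) = ‖T (a m - a k)‖ := by rw [dist_eq_norm, map_sub]
      _ ≤ γ * ‖R (ι (a m - a k))‖ := hTbound _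
      _ = γ * dist (R (ι (a m))) (R (ι (a k))) := by
          rw [map_sub, map_sub, dist_eq_norm]
      _ < γ * (ε / γ) := by
          exact mul_lt_mul_of_pos_left (hN m hm k hk) hγ
      _ = ε := mul_div_cancel₀ ε (ne_of_gt hγ)
  -- Part 1: each `f n` is in the range of `ι`.
  have part1 : ∀ n, ∃ φ : X, ι φ = f n := by
    intro n
    have hmem : f n ∈ closure (Set.range ι) := hι_dense _
    obtain ⟨y, hy_mem, hy_tend⟩ := mem_closure_iff_seq_limit.mp hmem
    choose u hu using hy_mem
    have hRcauchy : CauchySeq (fun k => R (ι (u k))) := by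
      have : (fun k => R (ι (u k))) = fun k => R (y k) := by
        funext k; rw [hu]
      rw [this]
      exact ((R.continuous.tendsto _).comp hy_tend).cauchySeq
    obtain ⟨ψ, hψ⟩ := cauchySeq_tendsto_of_complete (T_cauchy u hRcauchy)
    have h1 : Tendsto (fun k => ι (T (u k))) atTop (𝓝 (ι ψ)) :=
      (ι.continuous.tendsto _).comp hψ
    have h2 : Tendsto (fun k => adjoint K (ι (u k))) atTop (𝓝 (adjoint K (f n))) := by
      have : (fun k => adjoint K (ι (u k))) = fun k => adjoint K (y k) := by
        funext k; rw [hu]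
      rw [this]
      exact (((adjoint K).continuous.tendsto _)).comp hy_tend
    have hιψ : ι ψ = adjoint K (f n) := by
      have h1' : Tendsto (fun k => adjoint K (ι (u k))) atTop (𝓝 (ι ψ)) := by
        have : (fun k => ι (T (u k))) = fun k => adjoint K (ι (u k)) := by
          funext k; rw [hT]
        rwa [this] at h1
      exact tendsto_nhds_unique h1' h2
    refine ⟨((lam n : ℂ))⁻¹ • ψ, ?_⟩
    rw [map_smul, hιψ, hf, smul_smul, inv_mul_cancel₀ (by exact_mod_cast hlam n), one_smul]
  refine ⟨part1, ?_⟩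
  -- Part 2: the expansion converges to `T u`.
  intro φ hφ u
  set v : ℕ → H := fun n => R (f n) with hv_def
  set c : ℕ → ℂ := fun n => ⟪g n, ι u⟫ with hc_def
  have hcv : ∀ n, c n = ⟪v n, R (ι u)⟫ := fun n => hcg n (ι u)
  set s_ : ℕ → X := fun N => ∑ n ∈ Finset.range N, c n • φ n with hs_def
  -- `T φ_n = λ_n φ_n`
  have hTφ : ∀ n, T (φ n) = (lam n : ℂ) • φ n := by
    intro n
    apply hι_inj
    rw [hT, hφ, hf, map_smul, hφ]
  -- the partial sums in the goal are exactly `T (s_ N)`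
  have hPs : ∀ N, (∑ n ∈ Finset.range N, ((lam n : ℂ) * c n) • φ n) = T (s_ N) := by
    intro N
    rw [hs_def, map_sum]
    refine Finset.sum_congr rfl fun n _ => ?_
    rw [map_smul, hTφ, smul_smul, mul_comm]
  -- `R ι s_N` is the orthogonal partial sum
  have hιs : ∀ N, ι (s_ N) = ∑ n ∈ Finset.range N, c n • f n := by
    intro N
    rw [hs_def, map_sum]
    exact Finset.sum_congr rfl fun n _ => by rw [map_smul, hφ]
  have hRιs : ∀ N, R (ι (s_ N)) = ∑ n ∈ Finset.range N, c n • v n := by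
    intro N
    rw [hιs, map_sum]
    exact Finset.sum_congr rfl fun n _ => by rw [map_smul]
  -- Bessel: the coefficients are square-summable, so partial sums are Cauchy
  have hb : Summable fun n => ‖(⟪v n, R (ι u)⟫ : ℂ)‖ ^ 2 :=
    horth.inner_products_summable (R (ι u))
  have hb' : Summable fun n => ‖c n‖ ^ 2 := by
    have : (fun n => ‖c n‖ ^ 2) = fun n => ‖(⟪v n, R (ι u)⟫ : ℂ)‖ ^ 2 := by
      funext n; rw [hcv]
    rw [this]; exact hb
  set B : ℕ → ℝ := fun N => ∑ n ∈ Finset.range N, ‖c n‖ ^ 2 with hB_def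
  have hq_cauchy : CauchySeq fun N => ∑ n ∈ Finset.range N, c n • v n := by
    rw [Metric.cauchySeq_iff]
    intro ε hε
    have hBc : CauchySeq B := hb'.hasSum.tendsto_sum_nat.cauchySeq
    rw [Metric.cauchySeq_iff] at hBc
    obtain ⟨N0, hN0⟩ := hBc (ε ^ 2) (by positivity)
    have key : ∀ k m, k ≤ m → m ≥ N0 → k ≥ N0 →
        dist (∑ n ∈ Finset.range m, c n • v n) (∑ n ∈ Finset.range k, c n • v n) < ε := by
      intro k m hkm hm hk
      have hsub : (∑ n ∈ Finset.range m, c n • v n) - (∑ n ∈ Finset.range k, c n • v n)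
          = ∑ n ∈ Finset.Ico k m, c n • v n :=
        (Finset.sum_Ico_eq_sub _ hkm).symm
      have hBsub : B m - B k = ∑ n ∈ Finset.Ico k m, ‖c n‖ ^ 2 :=
        (Finset.sum_Ico_eq_sub _ hkm).symm
      have hnorm : dist (∑ n ∈ Finset.range m, c n • v n)
          (∑ n ∈ Finset.range k, c n • v n) ^ 2 = B m - B k := by
        rw [dist_eq_norm, hsub, hBsub]
        exact krein_orthonormal_norm_sum horth c _
      have hBlt : B m - B k < ε ^ 2 := by
        have := hN0 m hm k hk
        rw [Real.dist_eq] at this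
        calc B m - B k ≤ |B m - B k| := le_abs_self _
          _ < ε ^ 2 := this
      have hd : dist (∑ n ∈ Finset.range m, c n • v n)
          (∑ n ∈ Finset.range k, c n • v n) ^ 2 < ε ^ 2 := by rw [hnorm]; exact hBlt
      exact lt_of_pow_lt_pow_left₀ 2 (le_of_lt hε) hd
    refine ⟨N0, fun m hm k hk => ?_⟩
    rcases le_total k m with h | h
    · exact key k m h hm hk
    · rw [dist_comm]; exact key m k h hk hm
  -- hence `T (s_ N)` is Cauchy and converges to some `L`
  have hs_cauchy : CauchySeq fun N => T (s_ N) := by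
    apply T_cauchy
    have : (fun N => R (ι (s_ N))) = fun N => ∑ n ∈ Finset.range N, c n • v n := funext hRιs
    rw [this]; exact hq_cauchy
  obtain ⟨L, hL⟩ := cauchySeq_tendsto_of_complete hs_cauchy
  -- the remainder
  set r := T u - L with hr_def
  have hr_tend : Tendsto (fun N => T (u - s_ N)) atTop (𝓝 r) := by
    have : (fun N => T (u - s_ N)) = fun N => T u - T (s_ N) := by
      funext N; rw [map_sub]
    rw [this]
    exact tendsto_const_nhds.sub hL
  have hιr_tend : Tendsto (fun N => ι (T (u - s_ N))) atTop (𝓝 (ι r)) :=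
    (ι.continuous.tendsto _).comp hr_tend
  -- `R ι r` lies in the closure of the span
  have hRr_mem : R (ι r) ∈ (Submodule.span ℂ (Set.range v)).topologicalClosure := by
    have hclosed : IsClosed ((Submodule.span ℂ (Set.range v)).topologicalClosure : Set H) :=
      Submodule.isClosed_topologicalClosure _
    refine hclosed.mem_of_tendsto ((R.continuous.tendsto _).comp hιr_tend)
      (Filter.Eventually.of_forall fun N => ?_)
    show R (ι (T (u - s_ N))) ∈ _
    rw [hT]
    exact hcomplete _
  -- `R ι r` is orthogonal to every `v m`
  have hrperp : ∀ m, ⟪v m, R (ι r)⟫ = 0 := by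
    intro m
    have h1 : Tendsto (fun N => (⟪g m, ι (T (u - s_ N))⟫ : ℂ)) atTop (𝓝 ⟪g m, ι r⟫) :=
      Filter.Tendsto.inner tendsto_const_nhds hιr_tend
    have h2 : ∀ N, N > m → (⟪g m, ι (T (u - s_ N))⟫ : ℂ) = 0 := by
      intro N hN
      rw [hT, adjoint_inner_right, hKg, inner_smul_left]
      have h3 : (⟪g m, ι (u - s_ N)⟫ : ℂ) = 0 := by
        rw [map_sub, inner_sub_right, hιs, inner_sum]
        have h4 : ∀ n ∈ Finset.range N, (⟪g m, c n • f n⟫ : ℂ)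
            = if m = n then c m else 0 := by
          intro n _
          rw [inner_smul_right, hgf]
          by_cases h : m = n
          · simp [h]
          · simp [h]
        rw [Finset.sum_congr rfl h4, Finset.sum_ite_eq (Finset.range N) m (fun _ => c m)]
        simp [Finset.mem_range.mpr hN, hc_def]
      rw [h3, mul_zero]
    have h0 : Tendsto (fun N => (⟪g m, ι (T (u - s_ N))⟫ : ℂ)) atTop (𝓝 0) := by
      refine tendsto_const_nhds.congr' ?_
      filter_upwards [eventually_gt_atTop m] with N hN
      exact (h2 N hN).symm
    have : (⟪g m, ι r⟫ : ℂ) = 0 := tendsto_nhds_unique h1 h0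
    rw [← hcg]; exact this
  -- conclude `R ι r = 0`
  have hperp_span : ∀ z ∈ Submodule.span ℂ (Set.range v), (⟪z, R (ι r)⟫ : ℂ) = 0 := by
    intro z hz
    refine Submodule.span_induction ?_ ?_ ?_ ?_ hz
    · rintro _ ⟨m, rfl⟩; exact hrperp m
    · exact inner_zero_left _
    · intro a b _ _ ha hb
      rw [inner_add_left, ha, hb, add_zero]
    · intro t a _ ha
      rw [inner_smul_left, ha, mul_zero]
  have hperp_closure : ∀ z ∈ (Submodule.span ℂ (Set.range v)).topologicalClosure,
      (⟪z, R (ι r)⟫ : ℂ) = 0 := by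
    intro z hz
    have hclosed : IsClosed {z : H | (⟪z, R (ι r)⟫ : ℂ) = 0} :=
      isClosed_eq (Continuous.inner continuous_id continuous_const) continuous_const
    have hsubset : (Submodule.span ℂ (Set.range v) : Set H) ⊆
        {z : H | (⟪z, R (ι r)⟫ : ℂ) = 0} := hperp_span
    have : z ∈ closure (Submodule.span ℂ (Set.range v) : Set H) := hz
    exact hclosed.closure_subset_iff.mpr hsubset this
  have hRr0 : R (ι r) = 0 := inner_self_eq_zero.mp (hperp_closure _ hRr_mem)
  have hr0 : r = 0 := hι_inj (by rw [hR_inj _ hRr0, map_zero])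
  have hTuL : T u = L := by rwa [hr_def, sub_eq_zero] at hr0
  -- finish
  have hgoal : (fun N => ∑ n ∈ Finset.range N, ((lam n : ℂ) * inner ℂ (g n) (ι u)) • φ n)
      = fun N => T (s_ N) := by
    funext N
    exact hPs N
  rw [hgoal, hTuL]
  exact hL
end

section
/- Let S be a compact positive operator and A a bounded self-adjoint operator on a complex Hilbert space H, set K := S ∘ A (so K* = A ∘ S), and assume K is injective. Let (λ_j, f_j, g_j) be eigen-data satisfying the completeness hypothesis, with the map j ↦ λ_j injective and each eigenspace ker(K* − λ_j·I) one-dimensional (spanned by f_j). Then a vector ξ ∈ H is cyclic for K* — that is, the closed linear span of {(K*)^n ξ : n ∈ ℕ} equals H — if and only if ⟨ξ, g_j⟩ ≠ 0 for every j. Similarly, a vector η ∈ H is cyclic for K if and only if ⟨η, f_j⟩ ≠ 0 for every j. -/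
/-!
Put `K = S ∘ A`, `e_j = R f_j` (with `R = √S`) and `T = R A R`, so that `T e_j = λ_j e_j`;
since `|λ_j| ≤ ‖A‖ ‖S e_j‖` and `S` is compact, `λ_j → 0`.

Necessity is the easy half: `S f_j` is an eigenvector of `K` and `f_j` one of `K*`, so a
vanishing coefficient makes that eigenvector orthogonal to the whole orbit.

For sufficiency, let `y` be orthogonal to the orbit of `ξ` under `K*`. The vectors
`z_n = R K*ⁿ⁺¹ ξ` lie in the closed span of the `e_j` (completeness) and have coefficients
`λ_jⁿ⁺¹ c_j` with `c_j = ⟨g_j, ξ⟩ ≠ 0`, while `R A y ⊥ z_n`. Parseval turns this into the moment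
conditions `∑_j λ_jⁿ⁺¹ c̄_j d_j = 0` with `d_j = ⟨e_j, R A y⟩`. As the `λ_j` are distinct,
nonzero and tend to `0`, some `|λ_p|` is largest among the indices with `d_j ≠ 0`; dividing by
`λ_pⁿ⁺¹` and letting `n → ∞` isolates `c̄_p d_p = 0`, so every `d_j = 0`. So `R A y` is orthogonal to the closed span `U`; as `T² H ⊆ U`, this gives
`T (R A y) = R K* A y = 0`, and positivity of `S` and injectivity of `K` yield `y = 0`.
For `K` the same argument runs with `A η` in place of `ξ` and `R y` in place of `R A y`.
-/

open ContinuousLinearMap Filter Set Submodule Topology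
open scoped InnerProductSpace

section Moments

variable {𝕜 ι : Type*} [RCLike 𝕜]

theorem tendsto_pow_mul_one_add_of_abs_le_one {r : ℝ} (hr : |r| ≤ 1) :
    Tendsto (fun n : ℕ => r ^ n * (1 + r)) atTop (𝓝 (if r = 1 then 2 else 0)) := by
  rcases eq_or_ne r 1 with rfl | h1
  · norm_num
  rcases eq_or_ne r (-1) with rfl | h2
  · norm_num
  have hr' : |r| < 1 := hr.lt_of_ne fun h => by
    rcases (abs_eq zero_le_one).mp h with h | h <;> contradiction
  simpa [h1] using (tendsto_pow_atTop_nhds_zero_of_abs_lt_one hr').mul_const (1 + r)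

theorem abs_pow_mul_one_add_le_two {r : ℝ} (hr : |r| ≤ 1) (n : ℕ) : |r ^ n * (1 + r)| ≤ 2 := by
  rw [abs_mul, abs_pow, ← one_mul 2, one_add_one_eq_two.symm]
  gcongr
  · exact pow_le_one₀ (abs_nonneg _) hr
  · exact (abs_add_le _ _).trans (by rw [abs_one]; gcongr)

theorem Filter.Tendsto.exists_within_forall_abs_le {l : ι → ℝ} (hl : Tendsto l cofinite (𝓝 0))
    (hl0 : ∀ i, l i ≠ 0) {s : Set ι} (hs : s.Nonempty) : ∃ p ∈ s, ∀ i ∈ s, |l i| ≤ |l p| := by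
  have hpos : ∀ i, 0 < |l i| := fun i => abs_pos.mpr (hl0 i)
  have hinv : Tendsto (fun i => |l i|⁻¹) cofinite atTop :=
    tendsto_inv_nhdsGT_zero.comp <| tendsto_nhdsWithin_iff.mpr
      ⟨by simpa using hl.abs, Eventually.of_forall hpos⟩
  obtain ⟨p, hp, hmin⟩ := hinv.exists_within_forall_le hs
  exact ⟨p, hp, fun i hi => (inv_le_inv₀ (hpos p) (hpos i)).mp (hmin i hi)⟩

theorem apply_eq_zero_of_forall_tsum_pow_succ_mul_eq_zero {r : ι → ℝ} {a : ι → 𝕜}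
    (ha : Summable (‖a ·‖)) (hr : ∀ i, a i ≠ 0 → |r i| ≤ 1) {p : ι} (hr1 : ∀ i, r i = 1 ↔ i = p)
    (hmom : ∀ n : ℕ, ∑' i, (r i : 𝕜) ^ (n + 1) * a i = 0) : a p = 0 := by
  classical
  have hsummable : ∀ n, Summable fun i => (r i : 𝕜) ^ n * a i := fun n =>
    ha.of_norm_bounded fun i => by
      rcases eq_or_ne (a i) 0 with hi | hi
      · simp [hi]
      · rw [norm_mul, norm_pow, RCLike.norm_ofReal]
        exact mul_le_of_le_one_left (norm_nonneg _) (pow_le_one₀ (abs_nonneg _) (hr i hi))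
  -- the factor `1 + r i` kills the index with `r i = -1`, if there is one
  have hcomb : ∀ n, ∑' i, ((r i ^ (n + 1) * (1 + r i) : ℝ) : 𝕜) * a i = 0 := fun n => by
    push_cast
    simp_rw [mul_one_add, add_mul, ← pow_succ]
    rw [(hsummable _).tsum_add (hsummable _), hmom, hmom, add_zero]
  have hlim : Tendsto (fun n => ∑' i, ((r i ^ (n + 1) * (1 + r i) : ℝ) : 𝕜) * a i) atTop
      (𝓝 (∑' i, if i = p then 2 * a p else 0)) := by
    refine tendsto_tsum_of_dominated_convergence (bound := fun i => 2 * ‖a i‖) (ha.mul_left 2)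
      (fun i => ?_) (Eventually.of_forall fun n i => ?_)
    · rcases eq_or_ne (a i) 0 with hi | hi
      · obtain rfl | h := eq_or_ne i p <;> simp [*]
      have := ((RCLike.continuous_ofReal.tendsto _).comp
        ((tendsto_pow_mul_one_add_of_abs_le_one (hr i hi)).comp
          (tendsto_add_atTop_nat 1))).mul_const (a i)
      convert this using 2
      · rfl
      by_cases h : i = p
      · simp [h, (hr1 p).mpr rfl, RCLike.ofReal_ofNat]
      · simp [h, mt (hr1 i).mp h]
    · rcases eq_or_ne (a i) 0 with hi | hi
      · simp [hi]
      rw [norm_mul, RCLike.norm_ofReal]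
      gcongr
      exact abs_pow_mul_one_add_le_two (hr i hi) _
  rw [funext hcomb, tsum_ite_eq] at hlim
  simpa using tendsto_nhds_unique tendsto_const_nhds hlim

theorem eq_zero_of_forall_tsum_pow_succ_mul_eq_zero {l : ι → ℝ} (hl0 : ∀ i, l i ≠ 0)
    (hl : Function.Injective l) (hl_lim : Tendsto l cofinite (𝓝 0)) {a : ι → 𝕜}
    (ha : Summable (‖a ·‖)) (hmom : ∀ n : ℕ, ∑' i, (l i : 𝕜) ^ (n + 1) * a i = 0) : a = 0 := by
  by_contra hne
  obtain ⟨p, hp, hmax⟩ :=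
    hl_lim.exists_within_forall_abs_le hl0 (s := {i | a i ≠ 0}) (Function.ne_iff.mp hne)
  refine hp (apply_eq_zero_of_forall_tsum_pow_succ_mul_eq_zero (r := fun i => l i / l p) ha
    (fun i hi => ?_) (fun i => ?_) (fun n => ?_))
  · simpa [abs_div, div_le_one (abs_pos.mpr (hl0 p))] using hmax i hi
  · simp [div_eq_one_iff_eq (hl0 p), hl.eq_iff]
  · simp_rw [RCLike.ofReal_div, div_pow, div_mul_eq_mul_div, tsum_div_const, hmom, zero_div]

end Moments

section Hilbert

variable {𝕜 E F ι : Type*} [RCLike 𝕜] [NormedAddCommGroup E] [InnerProductSpace 𝕜 E]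
  [NormedAddCommGroup F] [InnerProductSpace 𝕜 F]

theorem Submodule.mem_orthogonal_span_range_iff {v : ι → E} {x : E} :
    x ∈ (span 𝕜 (range v))ᗮ ↔ ∀ i, ⟪v i, x⟫_𝕜 = 0 := by
  rw [← span_singleton_le_iff_mem, ← isOrtho_iff_le, isOrtho_comm, isOrtho_span]
  simp

def IsCyclicVector (T : E →L[𝕜] E) (x : E) : Prop :=
  (span 𝕜 (range fun n : ℕ => (T ^ n) x)).topologicalClosure = ⊤

theorem isCyclicVector_iff [CompleteSpace E] {T : E →L[𝕜] E} {x : E} :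
    IsCyclicVector T x ↔ ∀ y, (∀ n : ℕ, ⟪(T ^ n) x, y⟫_𝕜 = 0) → y = 0 := by
  simp only [IsCyclicVector, topologicalClosure_eq_top_iff, eq_bot_iff, SetLike.le_def,
    Submodule.mem_bot, mem_orthogonal_span_range_iff]

theorem ContinuousLinearMap.inner_adjoint_pow_apply [CompleteSpace E] {T : E →L[𝕜] E} {v : E}
    {μ : 𝕜} (hv : T v = μ • v) (x : E) (n : ℕ) :
    ⟪v, (adjoint T ^ n) x⟫_𝕜 = (starRingEnd 𝕜 μ) ^ n * ⟪v, x⟫_𝕜 := by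
  induction n with
  | zero => simp
  | succ n ih =>
    rw [pow_succ', mul_apply_eq_comp, adjoint_inner_right, hv, inner_smul_left, ih, pow_succ',
      mul_assoc]

theorem IsCyclicVector.inner_ne_zero [CompleteSpace E] {T : E →L[𝕜] E} {x v : E} {μ : 𝕜}
    (hx : IsCyclicVector (adjoint T) x) (hv : T v = μ • v) (hv0 : v ≠ 0) : ⟪v, x⟫_𝕜 ≠ 0 := by
  refine fun h => hv0 (isCyclicVector_iff.mp hx v fun n => ?_)
  rw [inner_eq_zero_symm, inner_adjoint_pow_apply hv, h, mul_zero]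

theorem IsSelfAdjoint.inner_apply_left [CompleteSpace E] {T : E →L[𝕜] E} (hT : IsSelfAdjoint T)
    (x y : E) : ⟪T x, y⟫_𝕜 = ⟪x, T y⟫_𝕜 :=
  hT.isSymmetric x y

theorem IsSelfAdjoint.norm_apply_sq_le [CompleteSpace E] {T : E →L[𝕜] E} (hT : IsSelfAdjoint T)
    (x : E) : ‖T x‖ ^ 2 ≤ ‖x‖ * ‖T (T x)‖ := by
  rw [← inner_self_eq_norm_sq (𝕜 := 𝕜), hT.inner_apply_left]
  exact (RCLike.re_le_norm _).trans (norm_inner_le_norm _ _)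

theorem IsSelfAdjoint.abs_le_of_apply_apply_eq_smul [CompleteSpace E] {R : E →L[𝕜] E}
    (hR : IsSelfAdjoint R) (A : E →L[𝕜] E) {v : E} (hv : ‖v‖ = 1) {l : ℝ}
    (hl : R (A (R v)) = (l : 𝕜) • v) : |l| ≤ ‖A‖ * ‖R (R v)‖ := calc
  |l| = ‖⟪v, R (A (R v))⟫_𝕜‖ := by
    rw [hl, inner_smul_right, inner_self_eq_norm_sq_to_K, hv]
    simp
  _ = ‖⟪R v, A (R v)⟫_𝕜‖ := by rw [hR.inner_apply_left]
  _ ≤ ‖R v‖ * (‖A‖ * ‖R v‖) := (norm_inner_le_norm _ _).trans (by gcongr; exact A.le_opNorm _)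
  _ = ‖A‖ * ‖R v‖ ^ 2 := by ring
  _ ≤ ‖A‖ * ‖R (R v)‖ := by
    gcongr
    simpa [hv] using hR.norm_apply_sq_le v

theorem IsSelfAdjoint.apply_eq_zero_of_mem_orthogonal [CompleteSpace E] {T : E →L[𝕜] E}
    (hT : IsSelfAdjoint T) {U : Submodule 𝕜 E} (hU : ∀ x, T (T x) ∈ U) {w : E} (hw : w ∈ Uᗮ) :
    T w = 0 := by
  rw [← inner_self_eq_zero (𝕜 := 𝕜), hT.inner_apply_left]
  exact inner_left_of_mem_orthogonal (hU w) hw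

theorem Orthonormal.tendsto_inner_cofinite_zero {e : ι → E} (he : Orthonormal 𝕜 e) (x : E) :
    Tendsto (fun i => ⟪x, e i⟫_𝕜) cofinite (𝓝 0) := by
  have := (he.inner_products_summable x).tendsto_cofinite_zero.sqrt
  simp only [Real.sqrt_zero, Real.sqrt_sq (norm_nonneg _), ← norm_inner_symm x] at this
  exact tendsto_zero_iff_norm_tendsto_zero.mpr this

theorem IsCompactOperator.tendsto_apply_orthonormal [CompleteSpace E] [CompleteSpace F]
    {T : E →L[𝕜] F} (hT : IsCompactOperator T) {e : ℕ → E} (he : Orthonormal 𝕜 e) :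
    Tendsto (fun n => T (e n)) atTop (𝓝 0) := by
  obtain ⟨C, hC, hTC⟩ := hT.image_closedBall_subset_compact (f := (T : E →ₗ[𝕜] F)) 1
  refine tendsto_of_subseq_tendsto fun ns hns => ?_
  obtain ⟨p, -, φ, hφ, hp⟩ := hC.tendsto_subseq fun n =>
    hTC ⟨e (ns n), by simp [he.norm_eq_one], rfl⟩
  suffices p = 0 from ⟨φ, this ▸ hp⟩
  have hweak : Tendsto (fun n => ⟪p, T (e (ns (φ n)))⟫_𝕜) atTop (𝓝 0) := by
    simp_rw [← adjoint_inner_left]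
    have := he.tendsto_inner_cofinite_zero (adjoint T p)
    rw [Nat.cofinite_eq_atTop] at this
    exact this.comp (hns.comp hφ.tendsto_atTop)
  exact inner_self_eq_zero.mp (tendsto_nhds_unique (tendsto_const_nhds.inner hp) hweak)

theorem Orthonormal.hasSum_inner_mul_inner_of_mem_closure [CompleteSpace E] {e : ι → E}
    (he : Orthonormal 𝕜 e) {z : E} (hz : z ∈ (span 𝕜 (range e)).topologicalClosure) (w : E) :
    HasSum (fun i => ⟪z, e i⟫_𝕜 * ⟪e i, w⟫_𝕜) ⟪z, w⟫_𝕜 := by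
  set U := (span 𝕜 (range e)).topologicalClosure
  have : CompleteSpace U := (isClosed_topologicalClosure _).completeSpace_coe
  have heU : ∀ i, e i ∈ U := fun i => le_topologicalClosure _ (subset_span ⟨i, rfl⟩)
  have hdense : (span 𝕜 (range fun i => (⟨e i, heU i⟩ : U)))ᗮ = ⊥ := by
    refine eq_bot_iff.mpr fun y hy => (mem_bot 𝕜).mpr (Subtype.ext ?_)
    rw [mem_orthogonal_span_range_iff] at hy
    have hyU : (y : E) ∈ Uᗮ := by rwa [orthogonal_closure, mem_orthogonal_span_range_iff]
    exact inner_self_eq_zero.mp (inner_right_of_mem_orthogonal y.2 hyU)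
  set b := HilbertBasis.mkOfOrthogonalEqBot (he.codRestrict U heU) hdense
  have hb : ∀ i, (b i : E) = e i := fun i => by
    rw [show ⇑b = _ from HilbertBasis.coe_mkOfOrthogonalEqBot _ hdense]
  have := b.hasSum_inner_mul_inner ⟨z, hz⟩ (U.orthogonalProjectionOnto w)
  simp only [inner_orthogonalProjectionOnto_eq_of_mem_left] at this
  simpa only [coe_inner, hb] using this

/-- Here `z n` plays the role of `Dⁿ⁺¹ x` for the diagonal operator `D (e i) = l i • e i`. -/
theorem Orthonormal.inner_eq_zero_of_orthogonal_to_diagonal_powers [CompleteSpace E]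
    {e : ι → E} (he : Orthonormal 𝕜 e) {l : ι → ℝ} (hl0 : ∀ i, l i ≠ 0)
    (hl : Function.Injective l) (hl_lim : Tendsto l cofinite (𝓝 0)) {x w : E}
    (hx : ∀ i, ⟪e i, x⟫_𝕜 ≠ 0) {z : ℕ → E}
    (hz_mem : ∀ n, z n ∈ (span 𝕜 (range e)).topologicalClosure)
    (hz_coeff : ∀ n i, ⟪e i, z n⟫_𝕜 = (l i : 𝕜) ^ (n + 1) * ⟪e i, x⟫_𝕜)
    (hzw : ∀ n, ⟪z n, w⟫_𝕜 = 0) (i : ι) : ⟪e i, w⟫_𝕜 = 0 := by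
  set a : ι → 𝕜 := fun i => star ⟪e i, x⟫_𝕜 * ⟪e i, w⟫_𝕜
  have ha : Summable (‖a ·‖) := by
    refine Summable.of_nonneg_of_le (fun i => norm_nonneg (a i)) (fun i => ?_)
      (((he.inner_products_summable x).add (he.inner_products_summable w)).div_const 2)
    rw [norm_mul, norm_star, le_div_iff₀ two_pos, mul_comm, ← mul_assoc]
    exact two_mul_le_add_sq _ _
  have hmom : ∀ n : ℕ, ∑' i, (l i : 𝕜) ^ (n + 1) * a i = 0 := fun n => by
    rw [← hzw n, ← (he.hasSum_inner_mul_inner_of_mem_closure (hz_mem n) w).tsum_eq]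
    congr 1 with i
    rw [← inner_conj_symm, hz_coeff]
    simp [a, mul_assoc]
  have := congrFun (eq_zero_of_forall_tsum_pow_succ_mul_eq_zero hl0 hl hl_lim ha hmom) i
  exact (mul_eq_zero.mp this).resolve_left (star_ne_zero.mpr (hx i))

end Hilbert
section Symmetrizable

variable {H : Type*} [NormedAddCommGroup H] [InnerProductSpace ℂ H] [CompleteSpace H]

structure CompleteEigenData (S A R : H →L[ℂ] H) (lam : ℕ → ℝ) (f : ℕ → H) : Prop where
  isSelfAdjoint_S : IsSelfAdjoint S
  re_inner_S_pos : ∀ x : H, x ≠ 0 → 0 < (⟪S x, x⟫_ℂ).re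
  isCompactOperator_S : IsCompactOperator S
  isSelfAdjoint_A : IsSelfAdjoint A
  isSelfAdjoint_R : IsSelfAdjoint R
  R_comp_R : R ∘L R = S
  eigenvalue_ne_zero : ∀ n, lam n ≠ 0
  eigenvalue_injective : Function.Injective lam
  adjoint_apply_eigenvector : ∀ n, adjoint (S ∘L A) (f n) = (lam n : ℂ) • f n
  orthonormal : Orthonormal ℂ fun n => R (f n)
  complete : ∀ x, R (adjoint (S ∘L A) x) ∈ (span ℂ (range fun n => R (f n))).topologicalClosure

namespace CompleteEigenData

variable {S A R : H →L[ℂ] H} {lam : ℕ → ℝ} {f : ℕ → H} (hE : CompleteEigenData S A R lam f)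
include hE

theorem adjoint_eq : adjoint (S ∘L A) = A ∘L S := by
  rw [adjoint_comp, hE.isSelfAdjoint_A.adjoint_eq, hE.isSelfAdjoint_S.adjoint_eq]

theorem R_apply_R (x : H) : R (R x) = S x := by
  rw [← hE.R_comp_R]
  rfl

theorem inner_R_R (x y : H) : ⟪R x, R y⟫_ℂ = ⟪S x, y⟫_ℂ := by
  rw [← hE.R_apply_R, hE.isSelfAdjoint_R.inner_apply_left (R x)]

theorem eq_zero_of_inner_S_self_eq_zero {x : H} (hx : ⟪S x, x⟫_ℂ = 0) : x = 0 := by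
  by_contra h
  simpa [hx] using hE.re_inner_S_pos x h

theorem S_apply_ne_zero {x : H} (hx : x ≠ 0) : S x ≠ 0 := fun h =>
  hx (hE.eq_zero_of_inner_S_self_eq_zero (by rw [h, inner_zero_left]))

theorem R_injective : Function.Injective R :=
  (injective_iff_map_eq_zero R).mpr fun x hx => hE.eq_zero_of_inner_S_self_eq_zero <| by
    rw [← hE.R_apply_R, hx, map_zero, inner_zero_left]

theorem apply_S_eigenvector (j : ℕ) : (S ∘L A) (S (f j)) = (lam j : ℂ) • S (f j) := by
  have := congrArg S (hE.adjoint_apply_eigenvector j)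
  rwa [hE.adjoint_eq, map_smul] at this

theorem tendsto_eigenvalue : Tendsto lam atTop (𝓝 0) := by
  have hbound : ∀ n, |lam n| ≤ ‖A‖ * ‖S (R (f n))‖ := fun n => by
    refine hE.R_apply_R (R (f n)) ▸ hE.isSelfAdjoint_R.abs_le_of_apply_apply_eq_smul A
      (hE.orthonormal.norm_eq_one n) ?_
    rw [hE.R_apply_R, ← comp_apply A S, ← hE.adjoint_eq, hE.adjoint_apply_eigenvector, map_smul]
    rfl
  refine squeeze_zero_norm hbound ?_
  simpa using ((hE.isCompactOperator_S.tendsto_apply_orthonormal hE.orthonormal).norm).const_mul ‖A‖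

theorem inner_S_adjoint_pow_apply (j n : ℕ) (x : H) :
    ⟪S (f j), (adjoint (S ∘L A) ^ n) x⟫_ℂ = (lam j : ℂ) ^ n * ⟪S (f j), x⟫_ℂ := by
  rw [inner_adjoint_pow_apply (hE.apply_S_eigenvector j), Complex.conj_ofReal]

theorem adjoint_apply_eq_zero_of_forall_inner_eq_zero {x u : H}
    (hx : ∀ j, ⟪S (f j), x⟫_ℂ ≠ 0)
    (hu : ∀ m : ℕ, ⟪S ((adjoint (S ∘L A) ^ (m + 1)) x), u⟫_ℂ = 0) :
    adjoint (S ∘L A) u = 0 := by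
  set U := (span ℂ (range fun n => R (f n))).topologicalClosure
  have hRu : R u ∈ Uᗮ := by
    rw [orthogonal_closure, mem_orthogonal_span_range_iff]
    refine hE.orthonormal.inner_eq_zero_of_orthogonal_to_diagonal_powers hE.eigenvalue_ne_zero
      hE.eigenvalue_injective (Nat.cofinite_eq_atTop ▸ hE.tendsto_eigenvalue) (x := R x)
      (z := fun m => R ((adjoint (S ∘L A) ^ (m + 1)) x)) (fun j => ?_) (fun m => ?_)
      (fun m j => ?_) (fun m => ?_)
    · rw [hE.inner_R_R]
      exact hx j
    · rw [pow_succ', mul_apply_eq_comp]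
      exact hE.complete _
    · simp only [hE.inner_R_R, hE.inner_S_adjoint_pow_apply]
      rfl
    · rw [hE.inner_R_R]
      exact hu m
  -- `T = R A R` maps `T y` to `R K* (A R y) ∈ U`, and is self-adjoint, so it kills `Uᗮ`.
  have hT : IsSelfAdjoint (R ∘L A ∘L R) := by
    simpa [hE.isSelfAdjoint_R.adjoint_eq] using hE.isSelfAdjoint_A.conj_adjoint R
  have hTT : ∀ y, (R ∘L A ∘L R) ((R ∘L A ∘L R) y) ∈ U := fun y => by
    simpa [hE.R_apply_R, hE.adjoint_eq] using hE.complete (A (R y))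
  apply hE.R_injective
  simpa [hE.R_apply_R, hE.adjoint_eq] using hT.apply_eq_zero_of_mem_orthogonal hTT hRu

theorem S_mul_adjoint_pow (n : ℕ) : S * adjoint (S ∘L A) ^ n = (S ∘L A) ^ n * S := by
  rw [hE.adjoint_eq]
  exact (SemiconjBy.pow_right (mul_assoc S A S).symm n)

theorem isCyclicVector_adjoint (hK : Function.Injective (S ∘L A)) {ξ : H}
    (hξ : ∀ j, ⟪S (f j), ξ⟫_ℂ ≠ 0) : IsCyclicVector (adjoint (S ∘L A)) ξ := by
  refine isCyclicVector_iff.mpr fun y hy => hK ?_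
  have hASAy : A (S (A y)) = 0 := by
    rw [← comp_apply A S, ← hE.adjoint_eq]
    refine hE.adjoint_apply_eq_zero_of_forall_inner_eq_zero hξ fun m => ?_
    have := hy (m + 2)
    rwa [pow_succ', mul_apply_eq_comp, hE.adjoint_eq, comp_apply,
      hE.isSelfAdjoint_A.inner_apply_left, ← hE.adjoint_eq] at this
  have hAy : A y = 0 := hE.eq_zero_of_inner_S_self_eq_zero <| by
    rw [← hE.isSelfAdjoint_A.inner_apply_left, hASAy, inner_zero_left]
  simp [hAy]

theorem isCyclicVector (hK : Function.Injective (S ∘L A)) {η : H} (hη : ∀ j, ⟪f j, η⟫_ℂ ≠ 0) :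
    IsCyclicVector (S ∘L A) η := by
  refine isCyclicVector_iff.mpr fun y hy => by_contra fun hy0 => hE.S_apply_ne_zero hy0 (hK ?_)
  have hx : ∀ j, ⟪S (f j), A η⟫_ℂ ≠ 0 := fun j => by
    rw [← hE.isSelfAdjoint_A.inner_apply_left, ← comp_apply A S, ← hE.adjoint_eq,
      hE.adjoint_apply_eigenvector, inner_smul_left, Complex.conj_ofReal]
    exact mul_ne_zero (Complex.ofReal_ne_zero.mpr (hE.eigenvalue_ne_zero j)) (hη j)
  have hASy : A (S y) = 0 := by
    rw [← comp_apply A S, ← hE.adjoint_eq]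
    refine hE.adjoint_apply_eq_zero_of_forall_inner_eq_zero hx fun m => ?_
    rw [← mul_apply_eq_comp S, hE.S_mul_adjoint_pow, mul_apply_eq_comp, ← comp_apply S A,
      ← mul_apply_eq_comp _ (S ∘L A), ← pow_succ]
    exact hy (m + 2)
  simp [hASy]

end CompleteEigenData

end Symmetrizable

theorem stmt12_general
    {H : Type*} [NormedAddCommGroup H] [InnerProductSpace ℂ H] [CompleteSpace H]
    (S A : H →L[ℂ] H)
    (hS_sa : IsSelfAdjoint S)
    (hS_pos : ∀ x : H, x ≠ 0 → 0 < (inner ℂ (S x) x : ℂ).re)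
    (hS_compact : IsCompactOperator (⇑S))
    (hA_sa : IsSelfAdjoint A)
    (hK_inj : Function.Injective (⇑(S ∘L A)))
    -- `R` is the positive square root of `S`
    (R : H →L[ℂ] H)
    (hR_sa : IsSelfAdjoint R)
    (hR_sq : R ∘L R = S)
    -- eigen-data
    (lam : ℕ → ℝ) (hlam : ∀ n, lam n ≠ 0)
    (f : ℕ → H) (hf : ∀ n, adjoint (S ∘L A) (f n) = (lam n : ℂ) • f n)
    (g : ℕ → H) (hg : ∀ n, g n = S (f n))
    (horth : Orthonormal ℂ (fun n => R (f n)))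
    (hcomplete : ∀ x : H, R (adjoint (S ∘L A) x) ∈
      (Submodule.span ℂ (Set.range fun n => R (f n))).topologicalClosure)
    -- the eigenvalues are simple
    (hlam_inj : Function.Injective lam) :
    (∀ ξ : H,
      (Submodule.span ℂ
        (Set.range fun n : ℕ => ((adjoint (S ∘L A)) ^ n) ξ)).topologicalClosure = ⊤ ↔
      ∀ j, (inner ℂ (g j) ξ : ℂ) ≠ 0) ∧
    (∀ η : H,
      (Submodule.span ℂ
        (Set.range fun n : ℕ => ((S ∘L A) ^ n) η)).topologicalClosure = ⊤ ↔
      ∀ j, (inner ℂ (f j) η : ℂ) ≠ 0) := by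
  obtain rfl : g = fun n => S (f n) := funext hg
  have hE : CompleteEigenData S A R lam f :=
    ⟨hS_sa, hS_pos, hS_compact, hA_sa, hR_sa, hR_sq, hlam, hlam_inj, hf, horth, hcomplete⟩
  have hf0 : ∀ j, f j ≠ 0 := fun j h => horth.ne_zero j (by simp [h])
  refine ⟨fun ξ => ⟨fun hξ j => ?_, hE.isCyclicVector_adjoint hK_inj⟩,
    fun η => ⟨fun hη j => ?_, hE.isCyclicVector hK_inj⟩⟩
  · exact IsCyclicVector.inner_ne_zero hξ (hE.apply_S_eigenvector j) (hE.S_apply_ne_zero (hf0 j))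
  · rw [← adjoint_adjoint (S ∘L A)] at hη
    exact IsCyclicVector.inner_ne_zero hη (hf j) (hf0 j)

/-- **Cyclic vectors.** Let `K = S ∘ A` (S compact positive, A bounded self-adjoint) be
injective, with simple nonzero eigenvalues `λ_j` and eigen-data `(λ_j, f_j, g_j)`
satisfying the completeness hypothesis. Then `ξ` is cyclic for `K*` iff `⟨ξ, g_j⟩ ≠ 0`
for all `j`, and `η` is cyclic for `K` iff `⟨η, f_j⟩ ≠ 0` for all `j`. -/
theorem stmt12
    {H : Type*} [NormedAddCommGroup H] [InnerProductSpace ℂ H] [CompleteSpace H]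
    (S A : H →L[ℂ] H)
    (hS_sa : IsSelfAdjoint S)
    (hS_pos : ∀ x : H, x ≠ 0 → 0 < (inner ℂ (S x) x : ℂ).re)
    (hS_compact : IsCompactOperator (⇑S))
    (hA_sa : IsSelfAdjoint A)
    (hK_inj : Function.Injective (⇑(S ∘L A)))
    -- `R` is the positive square root of `S`
    (R : H →L[ℂ] H)
    (hR_sa : IsSelfAdjoint R)
    (hR_pos : ∀ x : H, 0 ≤ (inner ℂ (R x) x : ℂ).re)
    (hR_sq : R ∘L R = S)
    -- eigen-data
    (lam : ℕ → ℝ) (hlam : ∀ n, lam n ≠ 0)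
    (f : ℕ → H) (hf : ∀ n, adjoint (S ∘L A) (f n) = (lam n : ℂ) • f n)
    (g : ℕ → H) (hg : ∀ n, g n = S (f n))
    (horth : Orthonormal ℂ (fun n => R (f n)))
    (hcomplete : ∀ x : H, R (adjoint (S ∘L A) x) ∈
      (Submodule.span ℂ (Set.range fun n => R (f n))).topologicalClosure)
    -- the eigenvalues are simple
    (hlam_inj : Function.Injective lam)
    (hsimple : ∀ j, LinearMap.ker ((adjoint (S ∘L A) - (lam j : ℂ) • (1 : H →L[ℂ] H) : H →L[ℂ] H) : H →ₗ[ℂ] H)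
      = Submodule.span ℂ {f j}) :
    (∀ ξ : H,
      (Submodule.span ℂ
        (Set.range fun n : ℕ => ((adjoint (S ∘L A)) ^ n) ξ)).topologicalClosure = ⊤ ↔
      ∀ j, (inner ℂ (g j) ξ : ℂ) ≠ 0) ∧
    (∀ η : H,
      (Submodule.span ℂ
        (Set.range fun n : ℕ => ((S ∘L A) ^ n) η)).topologicalClosure = ⊤ ↔
      ∀ j, (inner ℂ (f j) η : ℂ) ≠ 0) :=
  stmt12_general S A hS_sa hS_pos hS_compact hA_sa hK_inj R hR_sa hR_sq lam hlam f hf g hg horth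
    hcomplete hlam_inj
end

section
/- Let S be a compact positive operator and A a bounded self-adjoint operator on a complex Hilbert space H, set K := S ∘ A (so K* = A ∘ S), and let (λ_n, f_n, g_n) be eigen-data satisfying the completeness hypothesis. Let μ be a nonzero complex number with inf_n |μ − λ_n| > 0. Then for every f ∈ H the series u := f/μ + Σ_n (λ_n / (μ (μ − λ_n))) ⟨f, g_n⟩ f_n converges in H, and u satisfies μ·u − K* u = f. -/
open ContinuousLinearMap Filter Topology Finset

/-- **Resolvent series.** Let `K = S ∘ A` (`S` compact positive, `A` bounded self-adjoint)
with eigen-data `(λ_n, f_n, g_n)` satisfying the completeness hypothesis, and let `μ ≠ 0`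
satisfy `inf_n |μ − λ_n| > 0`. Then for every `f` the series
`u = f/μ + Σ_n (λ_n/(μ(μ−λ_n))) ⟨f, g_n⟩ f_n` converges and solves `μ u − K* u = f`. -/
theorem stmt14
    {H : Type*} [NormedAddCommGroup H] [InnerProductSpace ℂ H] [CompleteSpace H]
    (S A : H →L[ℂ] H)
    (hS_sa : IsSelfAdjoint S)
    (hS_pos : ∀ x : H, x ≠ 0 → 0 < (inner ℂ (S x) x : ℂ).re)
    (hS_compact : IsCompactOperator (⇑S))
    (hA_sa : IsSelfAdjoint A)
    -- `R` is the positive square root of `S`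
    (R : H →L[ℂ] H)
    (hR_sa : IsSelfAdjoint R)
    (hR_pos : ∀ x : H, 0 ≤ (inner ℂ (R x) x : ℂ).re)
    (hR_sq : R ∘L R = S)
    -- eigen-data
    (lam : ℕ → ℝ) (hlam : ∀ n, lam n ≠ 0)
    (f : ℕ → H) (hf : ∀ n, adjoint (S ∘L A) (f n) = (lam n : ℂ) • f n)
    (g : ℕ → H) (hg : ∀ n, g n = S (f n))
    (horth : Orthonormal ℂ (fun n => R (f n)))
    (hcomplete : ∀ x : H, R (adjoint (S ∘L A) x) ∈
      (Submodule.span ℂ (Set.range fun n => R (f n))).topologicalClosure)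
    (μ : ℂ) (hμ : μ ≠ 0)
    (hsep : ∃ ε : ℝ, 0 < ε ∧ ∀ n, ε ≤ ‖μ - (lam n : ℂ)‖) :
    ∀ x : H, ∃ u : H,
      Tendsto (fun N => μ⁻¹ • x + ∑ n ∈ Finset.range N,
          (((lam n : ℂ) / (μ * (μ - (lam n : ℂ)))) * inner ℂ (g n) x) • f n)
        atTop (𝓝 u) ∧
      μ • u - adjoint (S ∘L A) u = x := by
  obtain ⟨ε, hε, hεle⟩ := hsep
  intro x
  have hadj : adjoint (S ∘L A) = A ∘L S := by
    rw [adjoint_comp, hA_sa.adjoint_eq, hS_sa.adjoint_eq]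
  set e : ℕ → H := fun n => R (f n) with he
  set b : ℕ → ℂ := fun n => inner ℂ (e n) (R x) with hb
  set a : ℕ → ℂ := fun n => (μ - (lam n : ℂ))⁻¹ * b n with ha
  set B : H →L[ℂ] H := R ∘L (A ∘L R) with hB
  have hml : ∀ n, μ - (lam n : ℂ) ≠ 0 := by
    intro n h
    have := hεle n
    rw [h] at this
    simp at this
    linarith
  have hRR : ∀ y, R (R y) = S y := by intro y; rw [← hR_sq]; rfl
  have hRs : ∀ y z : H, (inner ℂ (R y) z : ℂ) = inner ℂ y (R z) := by
    intro y z
    conv_lhs => rw [← hR_sa.adjoint_eq]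
    rw [adjoint_inner_left]
  have hfn : ∀ n, A (S (f n)) = (lam n : ℂ) • f n := by
    intro n
    have := hf n
    rwa [hadj, comp_apply] at this
  have hAR : ∀ n, A (R (e n)) = (lam n : ℂ) • f n := by
    intro n; rw [he]; rw [hRR]; exact hfn n
  have hBe : ∀ n, B (e n) = (lam n : ℂ) • e n := by
    intro n
    simp only [hB, comp_apply]
    rw [hAR, map_smul]
  have hBsym : ∀ y z : H, (inner ℂ (B y) z : ℂ) = inner ℂ y (B z) := by
    intro y z
    simp only [hB, comp_apply]
    rw [hRs, ← hA_sa.adjoint_eq, adjoint_inner_left, hA_sa.adjoint_eq, hRs]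
  -- summability
  have hb2 : Summable fun n => ‖b n‖ ^ 2 := horth.inner_products_summable (R x)
  have ha2 : Summable fun n => ‖a n‖ ^ 2 := by
    apply Summable.of_nonneg_of_le (fun n => by positivity)
      (fun n => ?_) (hb2.mul_left (ε⁻¹ ^ 2))
    have h1 : ‖a n‖ = ‖(μ - (lam n : ℂ))⁻¹‖ * ‖b n‖ := norm_mul _ _
    have h2 : ‖(μ - (lam n : ℂ))⁻¹‖ ≤ ε⁻¹ := by
      rw [norm_inv]
      exact inv_anti₀ hε (hεle n)
    have h3 : ‖a n‖ ≤ ε⁻¹ * ‖b n‖ := by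
      rw [h1]; exact mul_le_mul_of_nonneg_right h2 (norm_nonneg _)
    calc ‖a n‖ ^ 2 ≤ (ε⁻¹ * ‖b n‖) ^ 2 := by
          apply pow_le_pow_left₀ (norm_nonneg _) h3
      _ = ε⁻¹ ^ 2 * ‖b n‖ ^ 2 := by ring
  have hsum : Summable fun n => a n • e n := by
    have := (horth.orthogonalFamily.summable_iff_norm_sq_summable a).2 (by
      simpa using ha2)
    simpa [LinearIsometry.toSpanSingleton_apply] using this
  obtain ⟨v, hv⟩ := hsum
  -- B v as a sum
  have hvB : HasSum (fun n => (a n * (lam n : ℂ)) • e n) (B v) := by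
    have := hv.mapL B
    convert this using 2 with n
    rw [map_smul, hBe, smul_smul, mul_comm]
  have hv' : HasSum (fun n => b n • e n) (μ • v - B v) := by
    have h1 := (hv.const_smul μ).sub hvB
    convert h1 using 2 with n
    rw [smul_smul, ← sub_smul]
    congr 1
    rw [ha]
    field_simp [hml n]
  set w : H := R x - (μ • v - B v) with hw
  -- w is orthogonal to each e n
  have hworth : ∀ n, (inner ℂ (e n) w : ℂ) = 0 := by
    intro n
    have h1 : HasSum (fun k => (inner ℂ (e n) (b k • e k) : ℂ))
        (inner ℂ (e n) (μ • v - B v)) := hv'.mapL (innerSL ℂ (e n))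
    have h2 : (fun k => (inner ℂ (e n) (b k • e k) : ℂ)) =
        fun k => if k = n then b n else 0 := by
      funext k
      rw [inner_smul_right]
      rcases eq_or_ne k n with rfl | hkn
      · rw [orthonormal_iff_ite.mp horth k k, if_pos rfl, if_pos rfl, mul_one]
      · rw [orthonormal_iff_ite.mp horth n k, if_neg (Ne.symm hkn), if_neg hkn, mul_zero]
    rw [h2] at h1
    have h3 : (inner ℂ (e n) (μ • v - B v) : ℂ) = b n :=
      h1.unique (hasSum_ite_eq n (b n))
    rw [hw, inner_sub_right, h3, hb]
    ring
  set M := (Submodule.span ℂ (Set.range e)).topologicalClosure with hM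
  have hMclosed : IsClosed (M : Set H) := Submodule.isClosed_topologicalClosure _
  have heM : ∀ n, e n ∈ M :=
    fun n => Submodule.le_topologicalClosure _ (Submodule.subset_span ⟨n, rfl⟩)
  -- w ⊥ M
  have hwperp : ∀ m ∈ M, (inner ℂ w m : ℂ) = 0 := by
    intro m hm
    have hle : M ≤ (innerSL ℂ w).ker := by
      apply Submodule.topologicalClosure_minimal
      · rw [Submodule.span_le]
        rintro _ ⟨n, rfl⟩
        simp only [SetLike.mem_coe, LinearMap.mem_ker]
        have := hworth n
        rw [← inner_conj_symm] at this
        have h0 : (inner ℂ w (e n) : ℂ) = 0 := by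
          have := congrArg (starRingEnd ℂ) this
          simpa using this
        simpa using h0
      · exact ContinuousLinearMap.isClosed_ker _
    exact hle hm
  -- B maps M into M
  have hBM : ∀ m ∈ M, B m ∈ M := by
    intro m hm
    have hle : M ≤ Submodule.comap (B : H →ₗ[ℂ] H) M := by
      apply Submodule.topologicalClosure_minimal
      · rw [Submodule.span_le]
        rintro _ ⟨n, rfl⟩
        simp only [SetLike.mem_coe, Submodule.mem_comap]
        show B (e n) ∈ M
        rw [hBe]
        exact M.smul_mem _ (heM n)
      · exact hMclosed.preimage B.continuous
    exact hle hm
  have hBRxM : B (R x) ∈ M := by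
    have hc := hcomplete x
    have heq : B (R x) = R (adjoint (S ∘L A) x) := by
      simp only [hB, comp_apply, hadj]
      rw [hRR]
    rw [heq]
    exact hc
  have hsM : μ • v - B v ∈ M := by
    refine hMclosed.mem_of_tendsto hv' (Filter.Eventually.of_forall fun s => ?_)
    exact Submodule.sum_mem _ fun n _ => M.smul_mem _ (heM n)
  have hBwM : B w ∈ M := by
    rw [hw, map_sub]
    exact M.sub_mem hBRxM (hBM _ hsM)
  have hBw0 : B w = 0 := by
    have h1 : (inner ℂ (B w) (B w) : ℂ) = 0 := by
      rw [hBsym]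
      exact hwperp _ (hBM _ hBwM)
    exact inner_self_eq_zero.mp h1
  have hRinj : ∀ y : H, R y = 0 → y = 0 := by
    intro y hy
    by_contra hne
    have h1 := hS_pos y hne
    have h2 : S y = 0 := by rw [← hRR, hy, map_zero]
    rw [h2] at h1
    simp at h1
  have hARw : A (R w) = 0 := by
    apply hRinj
    have : B w = R (A (R w)) := by simp [hB, comp_apply]
    rw [← this, hBw0]
  -- T x identity
  have hRx : R x = (μ • v - B v) + w := by rw [hw]; abel
  have hTARv : adjoint (S ∘L A) (A (R v)) = A (R (B v)) := by
    rw [hadj, comp_apply, ← hRR (A (R v))]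
    congr 2
  have hTx : adjoint (S ∘L A) x = μ • A (R v) - A (R (B v)) := by
    rw [hadj, comp_apply, ← hRR x, hRx, map_add, map_add, hARw, add_zero,
      map_sub, map_smul, map_sub, map_smul]
  refine ⟨μ⁻¹ • x + μ⁻¹ • A (R v), ?_, ?_⟩
  · -- convergence
    have hterm : ∀ n, (((lam n : ℂ) / (μ * (μ - (lam n : ℂ)))) * inner ℂ (g n) x) • f n
        = μ⁻¹ • ((A ∘L R) (a n • e n)) := by
      intro n
      have hgb : (inner ℂ (g n) x : ℂ) = b n := by
        rw [hg n, ← hRR (f n), hRs, hb]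
      rw [hgb, comp_apply, map_smul, map_smul, hAR n, smul_smul, smul_smul]
      congr 1
      rw [ha]
      field_simp [hml n]
    have hfun : ∀ N, (μ⁻¹ • x + ∑ n ∈ Finset.range N,
          (((lam n : ℂ) / (μ * (μ - (lam n : ℂ)))) * inner ℂ (g n) x) • f n)
        = μ⁻¹ • x + μ⁻¹ • (A ∘L R) (∑ n ∈ Finset.range N, a n • e n) := by
      intro N
      rw [map_sum, Finset.smul_sum]
      congr 1
      exact Finset.sum_congr rfl fun n _ => hterm n
    have htend := Tendsto.const_add (μ⁻¹ • x)
      ((((A ∘L R).continuous.tendsto v).comp hv.tendsto_sum_nat).const_smul μ⁻¹)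
    simp only [Function.comp] at htend
    have : (A ∘L R) v = A (R v) := rfl
    rw [this] at htend
    convert htend using 2 with N
    exact hfun N
  · -- the resolvent equation
    rw [map_add, map_smul, map_smul, hTx, hTARv]
    rw [smul_add, smul_smul, smul_smul, mul_inv_cancel₀ hμ, one_smul, one_smul]
    rw [smul_sub, smul_smul, inv_mul_cancel₀ hμ, one_smul]
    abel
end

section
/- Let S be a compact positive operator and A a bounded self-adjoint operator on a complex Hilbert space H, set K := S ∘ A (so K* = A ∘ S), and let (λ_n, f_n, g_n) be eigen-data satisfying the completeness hypothesis. Then for every f ∈ H, one has K* f = 0 if and only if ⟨f, g_n⟩ = 0 for all n ∈ ℕ. (Equivalently, the function z ↦ (I − z K*)^{-1} f extends to an entire function of z if and only if f ∈ ker K*, in which case (I − z K*)^{-1} f = f.) -/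
/-!
Write `K* = A S`. Since `S K* = S A S` is self-adjoint, pairing an eigenvector `f_n` of `K*`
with `x ∈ ker K*` gives `λ_n ⟨g_n, x⟩ = ⟨S K* f_n, x⟩ = ⟨f_n, S K* x⟩ = 0`.
Conversely, `⟨g_n, x⟩ = ⟨√S f_n, √S x⟩`, so if all of these vanish then `√S x` is orthogonal to
the closed span of the `√S f_n`, which by completeness contains `√S K* (K* x)`. Hence
`0 = ⟨√S x, √S K* (K* x)⟩ = ⟨K* x, S K* x⟩`, and positivity of `S` forces `K* x = 0`.
-/

open ContinuousLinearMap

open scoped InnerProductSpace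

section

variable {𝕜 E : Type*} [RCLike 𝕜] [NormedAddCommGroup E] [InnerProductSpace 𝕜 E]
  [CompleteSpace E]

lemma isSelfAdjoint_comp_adjoint_comp {S A : E →L[𝕜] E} (hS : IsSelfAdjoint S)
    (hA : IsSelfAdjoint A) : IsSelfAdjoint (S ∘L adjoint (S ∘L A)) := by
  rw [adjoint_comp, hA.adjoint_eq]
  simpa only [hS.adjoint_eq] using hA.conj_adjoint S

lemma inner_apply_eq_zero_of_apply_eq_smul_of_apply_eq_zero {S T : E →L[𝕜] E}
    (hST : IsSelfAdjoint (S ∘L T)) {v x : E} {μ : 𝕜} (hμ : μ ≠ 0) (hv : T v = μ • v)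
    (hx : T x = 0) : ⟪S v, x⟫_𝕜 = 0 := by
  have h : starRingEnd 𝕜 μ * ⟪S v, x⟫_𝕜 = 0 :=
    calc starRingEnd 𝕜 μ * ⟪S v, x⟫_𝕜 = ⟪(S ∘L T) v, x⟫_𝕜 := by
          rw [comp_apply, hv, map_smul, inner_smul_left]
      _ = ⟪v, (S ∘L T) x⟫_𝕜 := hST.isSymmetric v x
      _ = 0 := by rw [comp_apply, hx, map_zero, inner_zero_right]
  exact (mul_eq_zero.mp h).resolve_left (map_ne_zero _ |>.mpr hμ)

lemma inner_apply_apply_eq_of_comp_self_eq {R S : E →L[𝕜] E} (hR : IsSelfAdjoint R)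
    (hRS : R ∘L R = S) (u x : E) :
    ⟪R u, R x⟫_𝕜 = ⟪S u, x⟫_𝕜 := by
  rw [← hRS, comp_apply]
  exact (hR.isSymmetric (R u) x).symm

lemma apply_mem_orthogonal_span_of_comp_self_eq {R S : E →L[𝕜] E} (hR : IsSelfAdjoint R)
    (hRS : R ∘L R = S) {ι : Type*} {v : ι → E} {x : E}
    (hx : ∀ i, ⟪S (v i), x⟫_𝕜 = 0) :
    R x ∈ (Submodule.span 𝕜 (Set.range fun i => R (v i)))ᗮ := by
  have hortho : Submodule.span 𝕜 (Set.range fun i => R (v i)) ⟂ 𝕜 ∙ R x := by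
    refine Submodule.isOrtho_span.mpr ?_
    rintro _ ⟨i, rfl⟩ _ rfl
    rw [inner_apply_apply_eq_of_comp_self_eq hR hRS, hx i]
  exact hortho.ge (Submodule.mem_span_singleton_self _)

lemma eq_zero_of_apply_mem_orthogonal {R S T : E →L[𝕜] E} (hR : IsSelfAdjoint R)
    (hRS : R ∘L R = S) (hS : IsSelfAdjoint S) (hST : IsSelfAdjoint (S ∘L T))
    (hpos : ∀ y, y ≠ 0 → 0 < RCLike.re ⟪S y, y⟫_𝕜)
    {V : Submodule 𝕜 E} {x : E} (hx : R x ∈ Vᗮ) (hTTx : R (T (T x)) ∈ V.topologicalClosure) :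
    T x = 0 := by
  have h : ⟪S (T x), T x⟫_𝕜 = 0 :=
    calc ⟪S (T x), T x⟫_𝕜 = ⟪x, S (T (T x))⟫_𝕜 := hST.isSymmetric x (T x)
      _ = ⟪S x, T (T x)⟫_𝕜 := (hS.isSymmetric x _).symm
      _ = ⟪R x, R (T (T x))⟫_𝕜 := (inner_apply_apply_eq_of_comp_self_eq hR hRS x _).symm
      _ = 0 := Submodule.inner_left_of_mem_orthogonal hTTx (by rwa [Submodule.orthogonal_closure])
  by_contra hTx
  simpa [h] using hpos (T x) hTx

end

theorem stmt15_general
    {H : Type*} [NormedAddCommGroup H] [InnerProductSpace ℂ H] [CompleteSpace H]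
    (S A : H →L[ℂ] H)
    (hS_sa : IsSelfAdjoint S)
    (hS_pos : ∀ x : H, x ≠ 0 → 0 < (inner ℂ (S x) x : ℂ).re)
    (hA_sa : IsSelfAdjoint A)
    -- `R` is the positive square root of `S`
    (R : H →L[ℂ] H)
    (hR_sa : IsSelfAdjoint R)
    (hR_sq : R ∘L R = S)
    -- eigen-data
    (lam : ℕ → ℝ) (hlam : ∀ n, lam n ≠ 0)
    (f : ℕ → H) (hf : ∀ n, adjoint (S ∘L A) (f n) = (lam n : ℂ) • f n)
    (g : ℕ → H) (hg : ∀ n, g n = S (f n))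
    (hcomplete : ∀ x : H, R (adjoint (S ∘L A) x) ∈
      (Submodule.span ℂ (Set.range fun n => R (f n))).topologicalClosure) :
    ∀ x : H, adjoint (S ∘L A) x = 0 ↔ ∀ n, (inner ℂ (g n) x : ℂ) = 0 := by
  have hSK := isSelfAdjoint_comp_adjoint_comp hS_sa hA_sa
  intro x
  constructor
  · intro hx n
    rw [hg]
    exact inner_apply_eq_zero_of_apply_eq_smul_of_apply_eq_zero hSK
      (Complex.ofReal_ne_zero.mpr (hlam n)) (hf n) hx
  · intro hgx
    refine eq_zero_of_apply_mem_orthogonal hR_sa hR_sq hS_sa hSK hS_pos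
      (apply_mem_orthogonal_span_of_comp_self_eq hR_sa hR_sq fun n => ?_)
      (hcomplete _)
    rw [← hg]
    exact hgx n

/-- For `K = S ∘ A` (`S` compact positive, `A` bounded self-adjoint) with eigen-data
`(λ_n, f_n, g_n)` satisfying the completeness hypothesis: `K* f = 0` if and only if
`⟨f, g_n⟩ = 0` for all `n`. -/
theorem stmt15
    {H : Type*} [NormedAddCommGroup H] [InnerProductSpace ℂ H] [CompleteSpace H]
    (S A : H →L[ℂ] H)
    (hS_sa : IsSelfAdjoint S)
    (hS_pos : ∀ x : H, x ≠ 0 → 0 < (inner ℂ (S x) x : ℂ).re)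
    (hS_compact : IsCompactOperator (⇑S))
    (hA_sa : IsSelfAdjoint A)
    -- `R` is the positive square root of `S`
    (R : H →L[ℂ] H)
    (hR_sa : IsSelfAdjoint R)
    (hR_pos : ∀ x : H, 0 ≤ (inner ℂ (R x) x : ℂ).re)
    (hR_sq : R ∘L R = S)
    -- eigen-data
    (lam : ℕ → ℝ) (hlam : ∀ n, lam n ≠ 0)
    (f : ℕ → H) (hf : ∀ n, adjoint (S ∘L A) (f n) = (lam n : ℂ) • f n)
    (g : ℕ → H) (hg : ∀ n, g n = S (f n))
    (horth : Orthonormal ℂ (fun n => R (f n)))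
    (hcomplete : ∀ x : H, R (adjoint (S ∘L A) x) ∈
      (Submodule.span ℂ (Set.range fun n => R (f n))).topologicalClosure) :
    ∀ x : H, adjoint (S ∘L A) x = 0 ↔ ∀ n, (inner ℂ (g n) x : ℂ) = 0 :=
  stmt15_general S A hS_sa hS_pos hA_sa R hR_sa hR_sq lam hlam f hf g hg hcomplete
end

section
/- Let S be a compact positive operator and A a bounded self-adjoint operator on a complex Hilbert space H, set K := S ∘ A (so K* = A ∘ S), and let (λ_n, f_n, g_n) be eigen-data (the completeness hypothesis is not needed). Then for all f, g ∈ H the series Σ_n |λ_n ⟨f, g_n⟩ ⟨f_n, g⟩| converges and satisfies Σ_n |λ_n ⟨f, g_n⟩ ⟨f_n, g⟩| ≤ ‖√S f‖ · ‖√S (A g)‖. -/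
open ContinuousLinearMap

/-!
Write `R = √S`. Since `R` is self-adjoint with `R ∘ R = S`, and `A (S f_n) = λ_n f_n` because
`K* = A ∘ S`, each term of the series factors as
`λ_n ⟨g_n, x⟩ ⟨y, f_n⟩ = ⟨R f_n, R x⟩ ⟨R (A y), R f_n⟩`.
The family `(R f_n)` is orthonormal, so Cauchy–Schwarz followed by Bessel's inequality bounds
the series by `‖R x‖ ‖R (A y)‖`.
-/

section Bessel

variable {𝕜 E ι : Type*} [RCLike 𝕜] [NormedAddCommGroup E] [InnerProductSpace 𝕜 E]
  {v : ι → E}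

theorem Orthonormal.sum_norm_inner_mul_norm_inner_le (hv : Orthonormal 𝕜 v) (x y : E)
    (s : Finset ι) : ∑ i ∈ s, ‖inner 𝕜 (v i) x‖ * ‖inner 𝕜 (v i) y‖ ≤ ‖x‖ * ‖y‖ :=
  calc ∑ i ∈ s, ‖inner 𝕜 (v i) x‖ * ‖inner 𝕜 (v i) y‖
      ≤ √(∑ i ∈ s, ‖inner 𝕜 (v i) x‖ ^ 2) * √(∑ i ∈ s, ‖inner 𝕜 (v i) y‖ ^ 2) :=
        Real.sum_mul_le_sqrt_mul_sqrt s _ _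
    _ ≤ √(‖x‖ ^ 2) * √(‖y‖ ^ 2) := by
        gcongr
        exacts [hv.sum_inner_products_le x, hv.sum_inner_products_le y]
    _ = ‖x‖ * ‖y‖ := by rw [Real.sqrt_sq (norm_nonneg x), Real.sqrt_sq (norm_nonneg y)]

theorem Orthonormal.summable_norm_inner_mul_norm_inner (hv : Orthonormal 𝕜 v) (x y : E) :
    Summable fun i => ‖inner 𝕜 (v i) x‖ * ‖inner 𝕜 (v i) y‖ :=
  summable_of_sum_le (fun _ => by positivity) (hv.sum_norm_inner_mul_norm_inner_le x y)

theorem Orthonormal.tsum_norm_inner_mul_norm_inner_le (hv : Orthonormal 𝕜 v) (x y : E) :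
    ∑' i, ‖inner 𝕜 (v i) x‖ * ‖inner 𝕜 (v i) y‖ ≤ ‖x‖ * ‖y‖ :=
  Real.tsum_le_of_sum_le (fun _ => by positivity) (hv.sum_norm_inner_mul_norm_inner_le x y)

end Bessel

section SquareRoot

variable {𝕜 E : Type*} [RCLike 𝕜] [NormedAddCommGroup E] [InnerProductSpace 𝕜 E]
  [CompleteSpace E] {S R : E →L[𝕜] E}

theorem inner_apply_eq_inner_sqrt (hR : IsSelfAdjoint R) (hRS : R ∘L R = S) (u v : E) :
    inner 𝕜 (S u) v = inner 𝕜 (R u) (R v) := by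
  rw [← hRS]
  exact hR.isSymmetric (R u) v

theorem eigenvalue_mul_inner_eq_inner_sqrt {A : E →L[𝕜] E} (hR : IsSelfAdjoint R)
    (hRS : R ∘L R = S) (hS : IsSelfAdjoint S) (hA : IsSelfAdjoint A) {μ : 𝕜} {w : E}
    (hw : adjoint (S ∘L A) w = μ • w) (y : E) :
    μ * inner 𝕜 y w = inner 𝕜 (R (A y)) (R w) := by
  have hASw : A (S w) = μ • w := by
    rwa [adjoint_comp, hS.adjoint_eq, hA.adjoint_eq] at hw
  calc μ * inner 𝕜 y w = inner 𝕜 y (A (S w)) := by rw [hASw, inner_smul_right]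
    _ = inner 𝕜 (S (A y)) w := (hA.isSymmetric y (S w)).symm.trans (hS.isSymmetric (A y) w).symm
    _ = inner 𝕜 (R (A y)) (R w) := inner_apply_eq_inner_sqrt hR hRS (A y) w

end SquareRoot

theorem stmt16_general
    {H : Type*} [NormedAddCommGroup H] [InnerProductSpace ℂ H] [CompleteSpace H]
    (S A : H →L[ℂ] H)
    (hS_sa : IsSelfAdjoint S)
    (hA_sa : IsSelfAdjoint A)
    -- `R` is the positive square root of `S`
    (R : H →L[ℂ] H)
    (hR_sa : IsSelfAdjoint R)
    (hR_sq : R ∘L R = S)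
    -- eigen-data
    (lam : ℕ → ℝ)
    (f : ℕ → H) (hf : ∀ n, adjoint (S ∘L A) (f n) = (lam n : ℂ) • f n)
    (g : ℕ → H) (hg : ∀ n, g n = S (f n))
    (horth : Orthonormal ℂ (fun n => R (f n))) :
    ∀ x y : H,
      Summable (fun n => ‖(lam n : ℂ) * inner ℂ (g n) x * inner ℂ y (f n)‖) ∧
      ∑' n, ‖(lam n : ℂ) * inner ℂ (g n) x * inner ℂ y (f n)‖ ≤
        ‖R x‖ * ‖R (A y)‖ := by
  intro x y
  have hterm : ∀ n, ‖(lam n : ℂ) * inner ℂ (g n) x * inner ℂ y (f n)‖ =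
      ‖inner ℂ (R (f n)) (R x)‖ * ‖inner ℂ (R (f n)) (R (A y))‖ := fun n => by
    rw [mul_comm _ (inner ℂ (g n) x), mul_assoc, hg n, inner_apply_eq_inner_sqrt hR_sa hR_sq,
      eigenvalue_mul_inner_eq_inner_sqrt hR_sa hR_sq hS_sa hA_sa (hf n), norm_mul,
      norm_inner_symm (R (A y))]
  simp only [hterm]
  exact ⟨horth.summable_norm_inner_mul_norm_inner _ _,
    horth.tsum_norm_inner_mul_norm_inner_le _ _⟩

/-- Absolute convergence bound: for `K = S ∘ A` (`S` compact positive, `A` bounded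
self-adjoint) with eigen-data `(λ_n, f_n, g_n)`, for all `f, g ∈ H` the series
`Σ_n |λ_n ⟨f, g_n⟩ ⟨f_n, g⟩|` converges and is bounded by `‖√S f‖ ‖√S (A g)‖`. -/
theorem stmt16
    {H : Type*} [NormedAddCommGroup H] [InnerProductSpace ℂ H] [CompleteSpace H]
    (S A : H →L[ℂ] H)
    (hS_sa : IsSelfAdjoint S)
    (hS_pos : ∀ x : H, x ≠ 0 → 0 < (inner ℂ (S x) x : ℂ).re)
    (hS_compact : IsCompactOperator (⇑S))
    (hA_sa : IsSelfAdjoint A)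
    -- `R` is the positive square root of `S`
    (R : H →L[ℂ] H)
    (hR_sa : IsSelfAdjoint R)
    (hR_pos : ∀ x : H, 0 ≤ (inner ℂ (R x) x : ℂ).re)
    (hR_sq : R ∘L R = S)
    -- eigen-data
    (lam : ℕ → ℝ) (hlam : ∀ n, lam n ≠ 0)
    (f : ℕ → H) (hf : ∀ n, adjoint (S ∘L A) (f n) = (lam n : ℂ) • f n)
    (g : ℕ → H) (hg : ∀ n, g n = S (f n))
    (horth : Orthonormal ℂ (fun n => R (f n))) :
    ∀ x y : H,
      Summable (fun n => ‖(lam n : ℂ) * inner ℂ (g n) x * inner ℂ y (f n)‖) ∧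
      ∑' n, ‖(lam n : ℂ) * inner ℂ (g n) x * inner ℂ y (f n)‖ ≤
        ‖R x‖ * ‖R (A y)‖ :=
  stmt16_general S A hS_sa hA_sa R hR_sa hR_sq lam f hf g hg horth
end
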